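/- arXiv:math/0203011 — 5 statements merged into one kernel-verified Lean document; each statement's English description precedes it below -/
import Mathlib

section
/- Let f, g ∈ ℤ^{m|n}. Define a relation ↓ on ℤ^{m|n} by: h ↓ h' iff one of the following holds: (1) h' = h − d_i + d_j for some −m ≤ i ≤ −1 and 1 ≤ j ≤ n with h(i) = h(j); (2) h' = h·(i j) for some 1 ≤ i < j ≤ n with h(i) > h(j); (3) h' = h·(i j) for some −m ≤ i < j ≤ −1 with h(i) < h(j). Then f ⪰ g if and only if there exists a finite sequence h_1, ..., h_r ∈ ℤ^{m|n} with f = h_1 ↓ h_2 ↓ ... ↓ h_r = g. -/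
open Finset

noncomputable def IdxSet (m n : ℕ) : Finset ℤ := Finset.Icc (-(m:ℤ)) (-1) ∪ Finset.Icc 1 (n:ℤ)

abbrev Idx (m n : ℕ) := {i : ℤ // i ∈ IdxSet m n}

abbrev Zmn (m n : ℕ) := Idx m n → ℤ

def isgn {m n : ℕ} (i : Idx m n) : ℤ := if 0 < (i:ℤ) then 1 else -1

noncomputable def wtF {m n : ℕ} (f : Zmn m n) : ℤ →₀ ℤ :=
  ∑ i : Idx m n, isgn i • Finsupp.single (f i) (1:ℤ)

noncomputable def wtFrom {m n : ℕ} (f : Zmn m n) (j : Idx m n) : ℤ →₀ ℤ :=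
  ∑ i : Idx m n, if (j:ℤ) ≤ (i:ℤ) then isgn i • Finsupp.single (f i) (1:ℤ) else 0

def domLE (μ ν : ℤ →₀ ℤ) : Prop :=
  ∃ c : ℤ →₀ ℕ,
    ν - μ = c.sum fun a k => (k:ℤ) • (Finsupp.single a (1:ℤ) - Finsupp.single (a+1) (1:ℤ))

def bruhatLE {m n : ℕ} (g f : Zmn m n) : Prop :=
  wtF g = wtF f ∧ ∀ j : Idx m n, domLE (wtFrom g j) (wtFrom f j)

noncomputable def atyp {m n : ℕ} (f : Zmn m n) : ℕ :=
  (m + n - ∑ a ∈ (wtF f).support, (wtF f a).natAbs) / 2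

def typicalZ {m n : ℕ} (f : Zmn m n) : Prop := atyp f = 0

def antidominantZ {m n : ℕ} (f : Zmn m n) : Prop :=
  ∀ i j : Idx m n, (i:ℤ) ≤ (j:ℤ) →
    ((j:ℤ) < 0 → f j ≤ f i) ∧ (0 < (i:ℤ) → f i ≤ f j)

def dominantZ {m n : ℕ} (f : Zmn m n) : Prop :=
  ∀ i j : Idx m n, (i:ℤ) < (j:ℤ) →
    ((j:ℤ) < 0 → f i < f j) ∧ (0 < (i:ℤ) → f j < f i)

def dvec {m n : ℕ} (i : Idx m n) : Zmn m n := fun j => if j = i then isgn i else 0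

def pairFamily {m n : ℕ} (f : Zmn m n) (r : ℕ) (I J : Fin r → Idx m n) : Prop :=
  StrictMono (fun s => ((I s : ℤ))) ∧ StrictAnti (fun s => ((J s : ℤ))) ∧
  (∀ s, (I s : ℤ) < 0) ∧ (∀ s, 0 < (J s : ℤ)) ∧ ∀ s, f (I s) = f (J s)

def blockPerm {m n : ℕ} (e : Equiv.Perm (Idx m n)) : Prop :=
  ∀ i : Idx m n, 0 < (i:ℤ) ↔ 0 < ((e i : ℤ))

def conjDom {m n : ℕ} (f : Zmn m n) : Prop :=
  ∃ e : Equiv.Perm (Idx m n), blockPerm e ∧ dominantZ fun i => f (e i)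

open Classical in
noncomputable def domConj {m n : ℕ} (f : Zmn m n) : Zmn m n :=
  if h : conjDom f then fun i => f (h.choose i) else f

open Classical in
noncomputable def Lop (m n : ℕ) (i j : Idx m n) (f : Zmn m n) : Zmn m n :=
  f - (sInf {a : ℕ | 0 < a ∧ conjDom (f - a • (dvec i - dvec j)) ∧
      ∀ k l : Idx m n, (i:ℤ) < (k:ℤ) → (k:ℤ) < 0 → 0 < (l:ℤ) → (l:ℤ) < (j:ℤ) →
        f k = f l → conjDom (Lop m n k l f - a • (dvec i - dvec j))}) •
    (dvec i - dvec j)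
termination_by ((j:ℤ) - (i:ℤ)).toNat
decreasing_by
  simp_wf
  refine ⟨by omega, ?_⟩
  exact Subtype.coe_lt_coe.mp (by omega)

open Classical in
noncomputable def Rop (m n : ℕ) (i j : Idx m n) (f : Zmn m n) : Zmn m n :=
  f + (sInf {b : ℕ | 0 < b ∧ conjDom (f + b • (dvec i - dvec j)) ∧
      ∀ k l : Idx m n, (k:ℤ) < (i:ℤ) → (j:ℤ) < (l:ℤ) →
        f k = f l → conjDom (Rop m n k l f + b • (dvec i - dvec j))}) •
    (dvec i - dvec j)
termination_by (((i:ℤ) + (m:ℤ)).toNat + ((n:ℤ) - (j:ℤ)).toNat)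
decreasing_by
  simp_wf
  have hk := k.2
  have hl := l.2
  simp only [IdxSet, Finset.mem_union, Finset.mem_Icc] at hk hl
  omega

def applyFwd {m n r : ℕ} (ops : Fin r → Zmn m n → Zmn m n) (f : Zmn m n) : Zmn m n :=
  (List.finRange r).foldl (fun g s => ops s g) f

def applyBwd {m n r : ℕ} (ops : Fin r → Zmn m n → Zmn m n) (f : Zmn m n) : Zmn m n :=
  (List.finRange r).reverse.foldl (fun g s => ops s g) f

noncomputable def Ltheta {m n r : ℕ} (I J : Fin r → Idx m n) (θ : Fin r → ℕ) (f : Zmn m n) : Zmn m n :=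
  domConj (applyFwd (fun s => (Lop m n (I s) (J s))^[θ s]) f)

noncomputable def Ltheta' {m n r : ℕ} (I J : Fin r → Idx m n) (θ : Fin r → ℕ) (f : Zmn m n) : Zmn m n :=
  domConj (applyBwd (fun s => (Lop m n (I s) (J s))^[θ s]) f)

noncomputable def Rtheta {m n r : ℕ} (I J : Fin r → Idx m n) (θ : Fin r → ℕ) (f : Zmn m n) : Zmn m n :=
  domConj (applyBwd (fun s => (Rop m n (I s) (J s))^[θ s]) f)

noncomputable def Rtheta' {m n r : ℕ} (I J : Fin r → Idx m n) (θ : Fin r → ℕ) (f : Zmn m n) : Zmn m n :=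
  domConj (applyFwd (fun s => (Rop m n (I s) (J s))^[θ s]) f)

def w0idx {m n : ℕ} (i : Idx m n) : Idx m n :=
  if _h : (i:ℤ) < 0 then
    ⟨-(m:ℤ) - 1 - (i:ℤ), by
      have h2 := i.2
      simp only [IdxSet, Finset.mem_union, Finset.mem_Icc] at h2 ⊢
      omega⟩
  else
    ⟨(n:ℤ) + 1 - (i:ℤ), by
      have h2 := i.2
      simp only [IdxSet, Finset.mem_union, Finset.mem_Icc] at h2 ⊢
      omega⟩

def wconj {m n : ℕ} (f : Zmn m n) : Zmn m n := fun i => f (w0idx i)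

def sigval {m n : ℕ} (f : Zmn m n) (a : ℤ) (i : Idx m n) : ℤ :=
  if (0 < (i:ℤ) ∧ f i = a) ∨ ((i:ℤ) < 0 ∧ f i = a + 1) then 1
  else if (0 < (i:ℤ) ∧ f i = a + 1) ∨ ((i:ℤ) < 0 ∧ f i = a) then -1
  else 0

noncomputable def idxList (m n : ℕ) : List (Idx m n) :=
  ((IdxSet m n).sort (· ≤ ·)).attach.map fun x =>
    ⟨x.1, by have := x.2; rwa [Finset.mem_sort] at this⟩

def redStep {m n : ℕ} (f : Zmn m n) (a : ℤ)
    (st : List (Idx m n) × List (Idx m n)) (p : Idx m n) :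
    List (Idx m n) × List (Idx m n) :=
  if sigval f a p = 1 then (st.1, p :: st.2)
  else if sigval f a p = -1 then
    match st.2 with
    | [] => (st.1 ++ [p], [])
    | _ :: t => (st.1, t)
  else st

noncomputable def redState {m n : ℕ} (f : Zmn m n) (a : ℤ) : List (Idx m n) × List (Idx m n) :=
  (idxList m n).foldl (redStep f a) ([], [])

noncomputable def dualRedState {m n : ℕ} (f : Zmn m n) (a : ℤ) : List (Idx m n) × List (Idx m n) :=
  (idxList m n).reverse.foldl (redStep f a) ([], [])

noncomputable def epsN {m n : ℕ} (f : Zmn m n) (a : ℤ) : ℕ := (redState f a).1.length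
noncomputable def phiN {m n : ℕ} (f : Zmn m n) (a : ℤ) : ℕ := (redState f a).2.length
noncomputable def epsStarN {m n : ℕ} (f : Zmn m n) (a : ℤ) : ℕ := (dualRedState f a).1.length
noncomputable def phiStarN {m n : ℕ} (f : Zmn m n) (a : ℤ) : ℕ := (dualRedState f a).2.length

noncomputable def EtilP {m n : ℕ} (f : Zmn m n) (a : ℤ) : Option (Zmn m n) :=
  ((redState f a).1.getLast?).map fun p => f - dvec p
noncomputable def FtilP {m n : ℕ} (f : Zmn m n) (a : ℤ) : Option (Zmn m n) :=
  ((redState f a).2.getLast?).map fun p => f + dvec p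
noncomputable def EtilStar {m n : ℕ} (f : Zmn m n) (a : ℤ) : Option (Zmn m n) :=
  ((dualRedState f a).1.getLast?).map fun p => f - dvec p
noncomputable def FtilStar {m n : ℕ} (f : Zmn m n) (a : ℤ) : Option (Zmn m n) :=
  ((dualRedState f a).2.getLast?).map fun p => f + dvec p

noncomputable def Etil {m n : ℕ} (f : Zmn m n) (a : ℤ) : Option (Zmn m n) :=
  (EtilP (wconj f) a).map wconj
noncomputable def Ftil {m n : ℕ} (f : Zmn m n) (a : ℤ) : Option (Zmn m n) :=
  (FtilP (wconj f) a).map wconj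
noncomputable def epsC {m n : ℕ} (f : Zmn m n) (a : ℤ) : ℕ := epsN (wconj f) a
noncomputable def phiC {m n : ℕ} (f : Zmn m n) (a : ℤ) : ℕ := phiN (wconj f) a


def downStep {m n : ℕ} (h h' : Zmn m n) : Prop :=
  (∃ i j : Idx m n, (i:ℤ) < 0 ∧ 0 < (j:ℤ) ∧ h i = h j ∧ h' = h - dvec i + dvec j) ∨
  (∃ i j : Idx m n, 0 < (i:ℤ) ∧ (i:ℤ) < (j:ℤ) ∧ h j < h i ∧ h' = fun k => h (Equiv.swap i j k)) ∨
  (∃ i j : Idx m n, (j:ℤ) < 0 ∧ (i:ℤ) < (j:ℤ) ∧ h i < h j ∧ h' = fun k => h (Equiv.swap i j k))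

namespace BIC
variable {m n : ℕ}

lemma mem_idx {x : ℤ} : x ∈ IdxSet m n ↔ ((-(m:ℤ) ≤ x ∧ x ≤ -1) ∨ (1 ≤ x ∧ x ≤ (n:ℤ))) := by
  simp [IdxSet, Finset.mem_union, Finset.mem_Icc]

lemma idx_ne_zero (i : Idx m n) : (i:ℤ) ≠ 0 := by
  have := i.2; rw [mem_idx] at this; omega

lemma idx_lb (i : Idx m n) : -(m:ℤ) ≤ (i:ℤ) := by
  have := i.2; rw [mem_idx] at this; omega

lemma idx_ub (i : Idx m n) : (i:ℤ) ≤ (n:ℤ) := by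
  have := i.2; rw [mem_idx] at this; omega

lemma isgn_pos {i : Idx m n} (h : 0 < (i:ℤ)) : isgn i = 1 := if_pos h
lemma isgn_neg {i : Idx m n} (h : (i:ℤ) < 0) : isgn i = -1 := if_neg (by omega)

/-- the basic term: sgn i * ([f i ≤ t] - [g i ≤ t]) -/
def termD (f g : Zmn m n) (t : ℤ) (i : Idx m n) : ℤ :=
  isgn i * ((if f i ≤ t then (1:ℤ) else 0) - (if g i ≤ t then (1:ℤ) else 0))

/-- partial column sums of the weight difference: D x t = Σ_{i ≥ x} termD -/
noncomputable def Dd (f g : Zmn m n) (x t : ℤ) : ℤ :=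
  ∑ i : Idx m n, if x ≤ (i:ℤ) then termD f g t i else 0

lemma Dd_rec (f g : Zmn m n) (x t : ℤ) :
    Dd f g x t = Dd f g (x+1) t +
      (if hx : x ∈ IdxSet m n then termD f g t ⟨x, hx⟩ else 0) := by
  classical
  unfold Dd
  by_cases hx : x ∈ IdxSet m n
  · rw [dif_pos hx]
    have hsplit : ∀ i : Idx m n, (if x ≤ (i:ℤ) then termD f g t i else 0) =
        (if x + 1 ≤ (i:ℤ) then termD f g t i else 0) +
        (if i = ⟨x, hx⟩ then termD f g t i else 0) := ?_
    · rw [Finset.sum_congr rfl (fun i _ => hsplit i), Finset.sum_add_distrib,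
        Finset.sum_ite_eq' Finset.univ (⟨x,hx⟩ : Idx m n), if_pos (Finset.mem_univ _)]
    · intro i
      by_cases hix : i = ⟨x, hx⟩
      · subst hix; simp
      · have : (i:ℤ) ≠ x := fun hc => hix (Subtype.ext hc)
        rw [if_neg hix]
        by_cases h1 : x ≤ (i:ℤ)
        · rw [if_pos h1, if_pos (by omega)]; ring
        · rw [if_neg h1, if_neg (by omega)]; ring
  · rw [dif_neg hx, add_zero]
    apply Finset.sum_congr rfl
    intro i _
    have : (i:ℤ) ≠ x := fun hc => hx (hc ▸ i.2)
    by_cases h1 : x ≤ (i:ℤ)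
    · rw [if_pos h1, if_pos (by omega)]
    · rw [if_neg h1, if_neg (by omega)]

lemma Dd_anchor (f g : Zmn m n) {x y : ℤ} (hxy : x ≤ y) (t : ℤ) :
    Dd f g x t = Dd f g y t +
      ∑ i : Idx m n, if x ≤ (i:ℤ) ∧ (i:ℤ) < y then termD f g t i else 0 := by
  unfold Dd
  rw [← Finset.sum_add_distrib]
  apply Finset.sum_congr rfl
  intro i _
  by_cases h1 : x ≤ (i:ℤ)
  · by_cases h2 : y ≤ (i:ℤ)
    · rw [if_pos h1, if_pos h2, if_neg (by omega), add_zero]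
    · rw [if_pos h1, if_neg h2, if_pos (by constructor <;> omega), zero_add]
  · rw [if_neg h1, if_neg (by omega), if_neg (by omega), add_zero]

lemma Dd_low (f g : Zmn m n) {x : ℤ} (hx : x ≤ -(m:ℤ)) (t : ℤ) :
    Dd f g x t = Dd f g (-(m:ℤ)) t := by
  unfold Dd
  apply Finset.sum_congr rfl
  intro i _
  have := idx_lb i
  rw [if_pos (by omega), if_pos (by omega)]

lemma Dd_high (f g : Zmn m n) {x : ℤ} (hx : (n:ℤ) < x) (t : ℤ) :
    Dd f g x t = 0 := by
  unfold Dd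
  apply Finset.sum_eq_zero
  intro i _
  have := idx_ub i
  rw [if_neg (by omega)]

end BIC

namespace BIC
variable {m n : ℕ}

/-- value bound -/
noncomputable def Mb (f g : Zmn m n) : ℤ := ∑ i : Idx m n, (|f i| + |g i|)

lemma Mb_nonneg (f g : Zmn m n) : 0 ≤ Mb f g :=
  Finset.sum_nonneg fun i _ => by positivity

lemma Mb_bound_f (f g : Zmn m n) (i : Idx m n) : -(Mb f g) ≤ f i ∧ f i ≤ Mb f g := by
  have h : |f i| ≤ Mb f g := by
    calc |f i| ≤ |f i| + |g i| := le_add_of_nonneg_right (abs_nonneg _)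
    _ ≤ Mb f g := Finset.single_le_sum (f := fun i => |f i| + |g i|)
        (fun j _ => by positivity) (Finset.mem_univ i)
  have := abs_le.mp h; omega

lemma Mb_bound_g (f g : Zmn m n) (i : Idx m n) : -(Mb f g) ≤ g i ∧ g i ≤ Mb f g := by
  have h : |g i| ≤ Mb f g := by
    calc |g i| ≤ |f i| + |g i| := le_add_of_nonneg_left (abs_nonneg _)
    _ ≤ Mb f g := Finset.single_le_sum (f := fun i => |f i| + |g i|)
        (fun j _ => by positivity) (Finset.mem_univ i)
  have := abs_le.mp h; omega

lemma termD_vanish (f g : Zmn m n) {t : ℤ} (i : Idx m n)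
    (h : t < -(Mb f g) ∨ Mb f g ≤ t) : termD f g t i = 0 := by
  have h1 := Mb_bound_f f g i
  have h2 := Mb_bound_g f g i
  unfold termD
  rcases h with h | h
  · rw [if_neg (by omega), if_neg (by omega)]; ring
  · rw [if_pos (by omega), if_pos (by omega)]; ring

lemma Dd_vanish (f g : Zmn m n) (x : ℤ) {t : ℤ}
    (h : t < -(Mb f g) ∨ Mb f g ≤ t) : Dd f g x t = 0 := by
  unfold Dd
  apply Finset.sum_eq_zero
  intro i _
  rw [termD_vanish f g i h]
  simp

/-- extension of nonnegativity from Idx rows to all integer rows -/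
lemma Dd_nonneg_ext (f g : Zmn m n)
    (hj : ∀ j : Idx m n, ∀ t : ℤ, 0 ≤ Dd f g (j:ℤ) t)
    (h0 : ∀ t : ℤ, Dd f g (-(m:ℤ)) t = 0) :
    ∀ x t : ℤ, 0 ≤ Dd f g x t := by
  intro x t
  by_cases hx1 : x ≤ -(m:ℤ)
  · rw [Dd_low f g hx1, h0]
  by_cases hx2 : (n:ℤ) < x
  · rw [Dd_high f g hx2]
  by_cases hx : x ∈ IdxSet m n
  · exact hj ⟨x, hx⟩ t
  -- x = 0 (or impossible)
  have hx0 : x = 0 := by rw [mem_idx] at hx; omega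
  subst hx0
  have h01 : Dd f g 0 t = Dd f g 1 t := by
    unfold Dd
    apply Finset.sum_congr rfl
    intro i _
    have := idx_ne_zero i
    by_cases h1 : (1:ℤ) ≤ (i:ℤ)
    · rw [if_pos (by omega), if_pos h1]
    · rw [if_neg (by omega), if_neg h1]
  rw [h01]
  by_cases hn : (1:ℤ) ≤ (n:ℤ)
  · exact hj ⟨1, by rw [mem_idx]; omega⟩ t
  · rw [Dd_high f g (by omega)]

/-- the N-functional as an AddMonoidHom -/
noncomputable def NfH (t : ℤ) : (ℤ →₀ ℤ) →+ ℤ :=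
  AddMonoidHom.mk' (fun μ => μ.sum fun a v => if a ≤ t then v else 0)
    (fun μ ν => Finsupp.sum_add_index' (fun a => by simp)
      (fun a b₁ b₂ => by split <;> simp))

lemma NfH_apply (t : ℤ) (μ : ℤ →₀ ℤ) :
    NfH t μ = μ.sum fun a v => if a ≤ t then v else 0 := rfl

lemma NfH_single (t a : ℤ) (v : ℤ) :
    NfH t (Finsupp.single a v) = if a ≤ t then v else 0 := by
  rw [NfH_apply, Finsupp.sum_single_index]; simp

lemma coord_eq (μ : ℤ →₀ ℤ) (a : ℤ) : μ a = NfH a μ - NfH (a-1) μ := by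
  rw [NfH_apply, NfH_apply, Finsupp.sum, Finsupp.sum, ← Finset.sum_sub_distrib]
  have : ∀ b ∈ μ.support, ((if b ≤ a then μ b else 0) - (if b ≤ a-1 then μ b else 0)) =
      (if b = a then μ b else 0) := by
    intro b _
    by_cases hb : b = a
    · subst hb; rw [if_pos le_rfl, if_neg (by omega), if_pos rfl]; ring
    · by_cases h1 : b ≤ a
      · rw [if_pos h1, if_pos (by omega), if_neg hb]; ring
      · rw [if_neg h1, if_neg (by omega), if_neg hb]; ring
  rw [Finset.sum_congr rfl this, Finset.sum_ite_eq' μ.support a (fun b => μ b)]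
  by_cases ha : a ∈ μ.support
  · rw [if_pos ha]
  · rw [if_neg ha, Finsupp.notMem_support_iff.mp ha]

lemma ext_of_NfH {μ ν : ℤ →₀ ℤ} (h : ∀ t, NfH t μ = NfH t ν) : μ = ν := by
  ext a
  rw [coord_eq μ a, coord_eq ν a, h a, h (a-1)]

end BIC

namespace BIC
variable {m n : ℕ}

lemma NfH_wtF (f : Zmn m n) (t : ℤ) :
    NfH t (wtF f) = ∑ i : Idx m n, isgn i * (if f i ≤ t then (1:ℤ) else 0) := by
  unfold wtF
  rw [map_sum]
  apply Finset.sum_congr rfl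
  intro i _
  rw [AddMonoidHom.map_zsmul, NfH_single, smul_eq_mul]

lemma NfH_wtFrom (f : Zmn m n) (j : Idx m n) (t : ℤ) :
    NfH t (wtFrom f j) =
      ∑ i : Idx m n, if (j:ℤ) ≤ (i:ℤ) then isgn i * (if f i ≤ t then (1:ℤ) else 0) else 0 := by
  unfold wtFrom
  rw [map_sum]
  apply Finset.sum_congr rfl
  intro i _
  rw [apply_ite (NfH t), AddMonoidHom.map_zsmul, NfH_single, smul_eq_mul, map_zero]

lemma Dd_eq_NfH (f g : Zmn m n) (j : Idx m n) (t : ℤ) :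
    Dd f g (j:ℤ) t = NfH t (wtFrom f j) - NfH t (wtFrom g j) := by
  rw [NfH_wtFrom, NfH_wtFrom]
  unfold Dd
  rw [← Finset.sum_sub_distrib]
  apply Finset.sum_congr rfl
  intro i _
  by_cases h : (j:ℤ) ≤ (i:ℤ)
  · rw [if_pos h, if_pos h, if_pos h]; unfold termD; ring
  · rw [if_neg h, if_neg h, if_neg h]; ring

lemma Dd_bot_eq_NfH (f g : Zmn m n) (t : ℤ) :
    Dd f g (-(m:ℤ)) t = NfH t (wtF f) - NfH t (wtF g) := by
  rw [NfH_wtF, NfH_wtF]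
  unfold Dd
  rw [← Finset.sum_sub_distrib]
  apply Finset.sum_congr rfl
  intro i _
  rw [if_pos (idx_lb i)]
  unfold termD; ring

lemma csum_coord (c : ℤ →₀ ℕ) (a : ℤ) :
    (c.sum fun b k => (k:ℤ) • (Finsupp.single b (1:ℤ) - Finsupp.single (b+1) (1:ℤ))) a
      = (c a : ℤ) - (c (a-1) : ℤ) := by
  classical
  rw [Finsupp.sum_apply]
  have h1 : ∀ b ∈ c.support, ((c b : ℤ) • (Finsupp.single b (1:ℤ) - Finsupp.single (b+1) (1:ℤ))) a
      = (if b = a then (c b : ℤ) else 0) - (if b = a - 1 then (c b : ℤ) else 0) := by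
    intro b _
    rw [Finsupp.smul_apply, Finsupp.sub_apply, Finsupp.single_apply, Finsupp.single_apply]
    by_cases hb : b = a
    · rw [if_pos hb, if_pos hb, if_neg (by omega), if_neg (by omega)]
      simp
    · rw [if_neg hb, if_neg hb]
      by_cases hb1 : b = a - 1
      · rw [if_pos (by omega), if_pos hb1]
        simp
      · rw [if_neg (by omega), if_neg hb1]
        simp
  rw [Finsupp.sum, Finset.sum_congr rfl h1, Finset.sum_sub_distrib,
    Finset.sum_ite_eq' c.support a (fun b => (c b : ℤ)),
    Finset.sum_ite_eq' c.support (a-1) (fun b => (c b : ℤ))]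
  by_cases ha : a ∈ c.support
  · by_cases ha1 : a - 1 ∈ c.support
    · rw [if_pos ha, if_pos ha1]
    · rw [if_pos ha, if_neg ha1, Finsupp.notMem_support_iff.mp ha1]; simp
  · by_cases ha1 : a - 1 ∈ c.support
    · rw [if_neg ha, if_pos ha1, Finsupp.notMem_support_iff.mp ha]; simp
    · rw [if_neg ha, if_neg ha1, Finsupp.notMem_support_iff.mp ha,
        Finsupp.notMem_support_iff.mp ha1]; simp

/-- main characterization -/
lemma bruhat_iff_D (f g : Zmn m n) :
    bruhatLE g f ↔ ((∀ x t : ℤ, 0 ≤ Dd f g x t) ∧ (∀ t : ℤ, Dd f g (-(m:ℤ)) t = 0)) := by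
  classical
  constructor
  · rintro ⟨hwt, hdom⟩
    have h0 : ∀ t : ℤ, Dd f g (-(m:ℤ)) t = 0 := by
      intro t; rw [Dd_bot_eq_NfH, hwt]; ring
    refine ⟨Dd_nonneg_ext f g ?_ h0, h0⟩
    intro j t
    obtain ⟨c, hc⟩ := hdom j
    have : Dd f g (j:ℤ) t = NfH t (wtFrom f j - wtFrom g j) := by
      rw [map_sub, Dd_eq_NfH]
    rw [this, hc]
    rw [Finsupp.sum, map_sum]
    apply Finset.sum_nonneg
    intro b _
    rw [AddMonoidHom.map_zsmul, map_sub, NfH_single, NfH_single, smul_eq_mul]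
    by_cases h1 : b ≤ t
    · by_cases h2 : b + 1 ≤ t
      · rw [if_pos h1, if_pos h2]; simp
      · rw [if_pos h1, if_neg h2]; positivity
    · rw [if_neg h1, if_neg (by omega)]; simp
  · rintro ⟨hpos, h0⟩
    constructor
    · apply ext_of_NfH
      intro t
      have := Dd_bot_eq_NfH f g t
      rw [h0 t] at this
      linarith
    · intro j
      have hsupp : ∀ t : ℤ, (fun t => (Dd f g (j:ℤ) t).toNat) t ≠ 0 →
          t ∈ Finset.Icc (-(Mb f g)) (Mb f g) := by
        intro t ht
        rw [Finset.mem_Icc]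
        by_contra hc
        rw [not_and_or, not_le, not_le] at hc
        have hz : Dd f g (j:ℤ) t = 0 := by
          apply Dd_vanish
          rcases hc with h | h
          · left; exact h
          · right; omega
        exact ht (by show (Dd f g (j:ℤ) t).toNat = 0; rw [hz]; rfl)
      refine ⟨Finsupp.onFinset _ _ hsupp, ?_⟩
      ext a
      rw [Finsupp.sub_apply, csum_coord]
      simp only [Finsupp.onFinset_apply]
      rw [Int.toNat_of_nonneg (hpos _ _), Int.toNat_of_nonneg (hpos _ _)]
      have ha := coord_eq (wtFrom f j) a
      have hb := coord_eq (wtFrom g j) a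
      have h1 := Dd_eq_NfH f g j a
      have h2 := Dd_eq_NfH f g j (a-1)
      linarith

end BIC

namespace BIC
variable {m n : ℕ}

noncomputable def Adf (f : Zmn m n) (x s : ℤ) : ℤ :=
  ∑ i : Idx m n, if x ≤ (i:ℤ) ∧ f i ≤ s then isgn i else 0

lemma Dd_eq_Adf (f g : Zmn m n) (x s : ℤ) :
    Dd f g x s = Adf f x s - Adf g x s := by
  unfold Dd Adf
  rw [← Finset.sum_sub_distrib]
  apply Finset.sum_congr rfl
  intro i _
  unfold termD
  by_cases h1 : x ≤ (i:ℤ)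
  · by_cases h2 : f i ≤ s <;> by_cases h3 : g i ≤ s <;>
      simp [h1, h2, h3] <;> ring
  · simp [h1]

lemma Adf_diff (f h : Zmn m n) (p q : Idx m n) (hpq : p ≠ q)
    (hsame : ∀ k, k ≠ p → k ≠ q → h k = f k) (x s : ℤ) :
    Adf f x s - Adf h x s =
      ((if x ≤ (p:ℤ) ∧ f p ≤ s then isgn p else 0) - (if x ≤ (p:ℤ) ∧ h p ≤ s then isgn p else 0))
      + ((if x ≤ (q:ℤ) ∧ f q ≤ s then isgn q else 0) - (if x ≤ (q:ℤ) ∧ h q ≤ s then isgn q else 0)) := by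
  classical
  unfold Adf
  rw [← Finset.sum_sub_distrib]
  rw [← Finset.sum_subset (Finset.subset_univ ({p, q} : Finset (Idx m n)))
    (fun k _ hk => ?_)]
  · rw [Finset.sum_pair hpq]
  · have h1 : k ≠ p := fun hc => hk (by simp [hc])
    have h2 : k ≠ q := fun hc => hk (by simp [hc])
    rw [hsame k h1 h2]; ring

lemma effect_move1 (f : Zmn m n) (p q : Idx m n) (hp : (p:ℤ) < 0) (hq : 0 < (q:ℤ))
    (heq : f p = f q) (x s : ℤ) :
    Adf f x s - Adf (f - dvec p + dvec q) x s =
      if (p:ℤ) < x ∧ x ≤ (q:ℤ) ∧ f p ≤ s ∧ s < f p + 1 then 1 else 0 := by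
  have hpq : p ≠ q := fun hc => by rw [hc] at hp; omega
  have hp' : (f - dvec p + dvec q) p = f p + 1 := by
    show f p - dvec p p + dvec q p = f p + 1
    unfold dvec
    rw [if_pos rfl, if_neg hpq, isgn_neg hp]; ring
  have hq' : (f - dvec p + dvec q) q = f q + 1 := by
    show f q - dvec p q + dvec q q = f q + 1
    unfold dvec
    rw [if_pos rfl, if_neg (Ne.symm hpq), isgn_pos hq]; ring
  rw [Adf_diff f _ p q hpq (fun k hk1 hk2 => by
    show f k - dvec p k + dvec q k = f k
    unfold dvec
    rw [if_neg hk1, if_neg hk2]; ring)]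
  rw [hp', hq', heq, isgn_neg hp, isgn_pos hq]
  have hplt : (p:ℤ) < (q:ℤ) := by omega
  split_ifs <;> omega

lemma effect_swapP (f : Zmn m n) (p q : Idx m n) (hp : 0 < (p:ℤ)) (hpq : (p:ℤ) < (q:ℤ))
    (hv : f q < f p) (x s : ℤ) :
    Adf f x s - Adf (fun k => f (Equiv.swap p q k)) x s =
      if (p:ℤ) < x ∧ x ≤ (q:ℤ) ∧ f q ≤ s ∧ s < f p then 1 else 0 := by
  have hpq' : p ≠ q := fun hc => by rw [hc] at hpq; omega
  have hp' : f (Equiv.swap p q p) = f q := by rw [Equiv.swap_apply_left]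
  have hq' : f (Equiv.swap p q q) = f p := by rw [Equiv.swap_apply_right]
  rw [Adf_diff f _ p q hpq' (fun k hk1 hk2 => by
    show f (Equiv.swap p q k) = f k
    rw [Equiv.swap_apply_of_ne_of_ne hk1 hk2])]
  rw [hp', hq', isgn_pos hp, isgn_pos (by omega : 0 < (q:ℤ))]
  split_ifs <;> omega

lemma effect_swapN (f : Zmn m n) (p q : Idx m n) (hq : (q:ℤ) < 0) (hpq : (p:ℤ) < (q:ℤ))
    (hv : f p < f q) (x s : ℤ) :
    Adf f x s - Adf (fun k => f (Equiv.swap p q k)) x s =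
      if (p:ℤ) < x ∧ x ≤ (q:ℤ) ∧ f p ≤ s ∧ s < f q then 1 else 0 := by
  have hpq' : p ≠ q := fun hc => by rw [hc] at hpq; omega
  have hp' : f (Equiv.swap p q p) = f q := by rw [Equiv.swap_apply_left]
  have hq' : f (Equiv.swap p q q) = f p := by rw [Equiv.swap_apply_right]
  rw [Adf_diff f _ p q hpq' (fun k hk1 hk2 => by
    show f (Equiv.swap p q k) = f k
    rw [Equiv.swap_apply_of_ne_of_ne hk1 hk2])]
  rw [hp', hq', isgn_neg hq, isgn_neg (by omega : (p:ℤ) < 0)]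
  split_ifs <;> omega

lemma step_box (f g h : Zmn m n) (i0 j0 lo hi : ℤ)
    (hbox : ∀ x s : ℤ, Adf f x s - Adf h x s =
      if i0 < x ∧ x ≤ j0 ∧ lo ≤ s ∧ s < hi then 1 else 0)
    (hin : ∀ x s : ℤ, i0 < x → x ≤ j0 → lo ≤ s → s < hi → 1 ≤ Dd f g x s)
    (hi0 : -(m:ℤ) ≤ i0)
    (hD : ∀ x t : ℤ, 0 ≤ Dd f g x t) (h0 : ∀ t : ℤ, Dd f g (-(m:ℤ)) t = 0) :
    (∀ x t : ℤ, 0 ≤ Dd h g x t) ∧ (∀ t : ℤ, Dd h g (-(m:ℤ)) t = 0) := by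
  have key : ∀ x t : ℤ, Dd h g x t = Dd f g x t -
      (if i0 < x ∧ x ≤ j0 ∧ lo ≤ t ∧ t < hi then 1 else 0) := by
    intro x t
    rw [Dd_eq_Adf, Dd_eq_Adf, ← hbox x t]; ring
  constructor
  · intro x t
    rw [key]
    by_cases hb : i0 < x ∧ x ≤ j0 ∧ lo ≤ t ∧ t < hi
    · rw [if_pos hb]
      have := hin x t hb.1 hb.2.1 hb.2.2.1 hb.2.2.2
      omega
    · rw [if_neg hb]
      have := hD x t
      omega
  · intro t
    rw [key, h0, if_neg (by omega)]; ring

end BIC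

namespace BIC
variable {m n : ℕ}

lemma downStep_box (f h : Zmn m n) (hd : downStep f h) :
    ∃ i0 j0 lo hi : ℤ, -(m:ℤ) ≤ i0 ∧ lo < hi ∧ i0 < j0 ∧ j0 ∈ IdxSet m n ∧
      (∀ x s : ℤ, Adf f x s - Adf h x s =
        if i0 < x ∧ x ≤ j0 ∧ lo ≤ s ∧ s < hi then 1 else 0) := by
  rcases hd with ⟨p, q, hp, hq, heq, rfl⟩ | ⟨p, q, hp, hpq, hv, rfl⟩ | ⟨p, q, hq, hpq, hv, rfl⟩
  · exact ⟨p, q, f p, f p + 1, idx_lb p, by omega, by omega, q.2,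
      effect_move1 f p q hp hq heq⟩
  · exact ⟨p, q, f q, f p, idx_lb p, hv, hpq, q.2, effect_swapP f p q hp hpq hv⟩
  · exact ⟨p, q, f p, f q, idx_lb p, hv, hpq, q.2, effect_swapN f p q hq hpq hv⟩

lemma downStep_bruhat (f h : Zmn m n) (hd : downStep f h) : bruhatLE h f := by
  rw [bruhat_iff_D]
  obtain ⟨i0, j0, lo, hi, h1, _, _, _, hbox⟩ := downStep_box f h hd
  constructor
  · intro x t
    rw [Dd_eq_Adf, hbox x t]
    split_ifs <;> omega
  · intro t
    rw [Dd_eq_Adf, hbox _ t, if_neg (by omega)]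

lemma bruhat_trans {f g h : Zmn m n} (h1 : bruhatLE g h) (h2 : bruhatLE h f) :
    bruhatLE g f := by
  rw [bruhat_iff_D] at *
  constructor
  · intro x t
    have e : Dd f g x t = Dd f h x t + Dd h g x t := by
      rw [Dd_eq_Adf, Dd_eq_Adf, Dd_eq_Adf]; ring
    have := h1.1 x t; have := h2.1 x t
    omega
  · intro t
    have e : Dd f g (-(m:ℤ)) t = Dd f h (-(m:ℤ)) t + Dd h g (-(m:ℤ)) t := by
      rw [Dd_eq_Adf, Dd_eq_Adf, Dd_eq_Adf]; ring
    have := h1.2 t; have := h2.2 t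
    omega

lemma bruhat_refl (f : Zmn m n) : bruhatLE f f := by
  rw [bruhat_iff_D]
  constructor
  · intro x t; rw [Dd_eq_Adf]; omega
  · intro t; rw [Dd_eq_Adf]; omega

lemma chain_bruhat (f g : Zmn m n) (hc : Relation.ReflTransGen downStep f g) :
    bruhatLE g f := by
  induction hc with
  | refl => exact bruhat_refl f
  | tail _ hstep ih => exact bruhat_trans (downStep_bruhat _ _ hstep) ih

/-! ## measure -/

noncomputable def Wx (f g : Zmn m n) (x : ℤ) : ℤ :=
  ∑ i : Idx m n, if x ≤ (i:ℤ) then isgn i * (g i - f i) else 0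

lemma sum_ite_Icc (L U a : ℤ) (hL : L ≤ a) (hU : a ≤ U + 1) :
    ∑ t ∈ Finset.Icc L U, (if a ≤ t then (1:ℤ) else 0) = U + 1 - a := by
  rw [Finset.sum_boole]
  have hf : (Finset.Icc L U).filter (fun t => a ≤ t) = Finset.Icc a U := by
    ext t
    simp only [Finset.mem_filter, Finset.mem_Icc]
    omega
  rw [hf, Int.card_Icc]
  omega

lemma Wx_eq_sum_Dd (f g : Zmn m n) (x : ℤ) :
    Wx f g x = ∑ t ∈ Finset.Icc (-(Mb f g)) (Mb f g), Dd f g x t := by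
  unfold Dd
  rw [Finset.sum_comm]
  unfold Wx
  apply Finset.sum_congr rfl
  intro i _
  by_cases hx : x ≤ (i:ℤ)
  · rw [if_pos hx]
    have hsum : (∑ t ∈ Finset.Icc (-(Mb f g)) (Mb f g), if x ≤ (i:ℤ) then termD f g t i else 0)
        = ∑ t ∈ Finset.Icc (-(Mb f g)) (Mb f g), termD f g t i :=
      Finset.sum_congr rfl (fun t _ => by rw [if_pos hx])
    rw [hsum]
    have hf := Mb_bound_f f g i
    have hg := Mb_bound_g f g i
    have e : ∑ t ∈ Finset.Icc (-(Mb f g)) (Mb f g), termD f g t i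
        = ∑ t ∈ Finset.Icc (-(Mb f g)) (Mb f g),
          (isgn i * (if f i ≤ t then (1:ℤ) else 0) - isgn i * (if g i ≤ t then (1:ℤ) else 0)) :=
      Finset.sum_congr rfl (fun t _ => by unfold termD; ring)
    rw [e, Finset.sum_sub_distrib, ← Finset.mul_sum, ← Finset.mul_sum,
      sum_ite_Icc _ _ _ (by omega) (by omega), sum_ite_Icc _ _ _ (by omega) (by omega)]
    ring
  · rw [if_neg hx]
    exact (Finset.sum_eq_zero fun t _ => by rw [if_neg hx]).symm

lemma Wx_nonneg (f g : Zmn m n) (x : ℤ) (hD : ∀ t : ℤ, 0 ≤ Dd f g x t) :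
    0 ≤ Wx f g x := by
  rw [Wx_eq_sum_Dd]
  exact Finset.sum_nonneg fun t _ => hD t

noncomputable def Sm (f g : Zmn m n) : ℤ := ∑ x ∈ IdxSet m n, Wx f g x

noncomputable def Phi (f g : Zmn m n) : ℕ := (Sm f g).toNat

lemma Wx_diff (f h g : Zmn m n) (p q : Idx m n) (d : ℤ) (hpq : (p:ℤ) < (q:ℤ))
    (hhp : isgn p * (h p - f p) = -d) (hhq : isgn q * (h q - f q) = d)
    (hsame : ∀ k, k ≠ p → k ≠ q → h k = f k) (x : ℤ) :
    Wx f g x - Wx h g x = if (p:ℤ) < x ∧ x ≤ (q:ℤ) then d else 0 := by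
  have hpq' : p ≠ q := fun hc => by rw [hc] at hpq; omega
  unfold Wx
  rw [← Finset.sum_sub_distrib]
  rw [← Finset.sum_subset (Finset.subset_univ ({p, q} : Finset (Idx m n)))
    (fun k _ hk => ?_)]
  · rw [Finset.sum_pair hpq']
    by_cases h1 : x ≤ (p:ℤ)
    · rw [if_pos h1, if_pos h1, if_pos (by omega), if_pos (by omega), if_neg (by omega)]
      nlinarith [hhp, hhq]
    · by_cases h2 : x ≤ (q:ℤ)
      · rw [if_neg h1, if_neg h1, if_pos h2, if_pos h2, if_pos (by omega)]
        nlinarith [hhq]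
      · rw [if_neg h1, if_neg h1, if_neg h2, if_neg h2, if_neg (by omega)]
        ring
  · have h1 : k ≠ p := fun hc => hk (by simp [hc])
    have h2 : k ≠ q := fun hc => hk (by simp [hc])
    rw [hsame k h1 h2]; ring

lemma Phi_decrease (f h g : Zmn m n) (p q : Idx m n) (d : ℤ) (hd : 0 < d)
    (hpq : (p:ℤ) < (q:ℤ))
    (hhp : isgn p * (h p - f p) = -d) (hhq : isgn q * (h q - f q) = d)
    (hsame : ∀ k, k ≠ p → k ≠ q → h k = f k)
    (hDh : ∀ x t : ℤ, 0 ≤ Dd h g x t) :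
    Phi h g < Phi f g := by
  have hdiff : Sm f g - Sm h g = ∑ x ∈ IdxSet m n,
      (if (p:ℤ) < x ∧ x ≤ (q:ℤ) then d else 0) := by
    unfold Sm
    rw [← Finset.sum_sub_distrib]
    exact Finset.sum_congr rfl fun x _ => Wx_diff f h g p q d hpq hhp hhq hsame x
  have hge : d ≤ ∑ x ∈ IdxSet m n, (if (p:ℤ) < x ∧ x ≤ (q:ℤ) then d else 0) := by
    have h2 := Finset.single_le_sum (f := fun x : ℤ => if (p:ℤ) < x ∧ x ≤ (q:ℤ) then d else 0)
      (fun x _ => by split_ifs <;> omega) q.2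
    rwa [if_pos (show (p:ℤ) < (q:ℤ) ∧ (q:ℤ) ≤ (q:ℤ) from ⟨hpq, le_refl _⟩)] at h2
  have hSh : 0 ≤ Sm h g :=
    Finset.sum_nonneg fun x _ => Wx_nonneg h g x (fun t => hDh x t)
  unfold Phi
  omega

end BIC

namespace BIC
variable {m n : ℕ}

lemma anchor_pos (f g : Zmn m n) {i k t s c : ℤ} (hik : i ≤ k) (hts : t ≤ s) (hsc : s < c)
    (hpos : 0 < i)
    (hgap : ∀ l : Idx m n, i ≤ (l:ℤ) → (l:ℤ) < k → t < f l → c ≤ f l) :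
    Dd f g i s + Dd f g k t - Dd f g i t ≤ Dd f g k s := by
  have e1 := Dd_anchor f g hik s
  have e2 := Dd_anchor f g hik t
  have hC : (∑ l : Idx m n, if i ≤ (l:ℤ) ∧ (l:ℤ) < k then termD f g s l else 0)
      ≤ ∑ l : Idx m n, if i ≤ (l:ℤ) ∧ (l:ℤ) < k then termD f g t l else 0 := by
    apply Finset.sum_le_sum
    intro l _
    by_cases hc : i ≤ (l:ℤ) ∧ (l:ℤ) < k
    · rw [if_pos hc, if_pos hc]
      have hsgn : isgn l = 1 := isgn_pos (by omega)
      unfold termD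
      rw [hsgn]
      by_cases h1 : t < f l
      · have h3 := hgap l hc.1 hc.2 h1
        rw [if_neg (show ¬ f l ≤ s by omega), if_neg (show ¬ f l ≤ t by omega)]
        split_ifs <;> omega
      · rw [if_pos (show f l ≤ s by omega), if_pos (show f l ≤ t by omega)]
        split_ifs <;> omega
    · rw [if_neg hc, if_neg hc]
  omega

lemma anchor_negE (f g : Zmn m n) {i k t s c : ℤ} (hik : i ≤ k) (hst : s ≤ t) (hcs : c ≤ s)
    (hneg : k ≤ 0)
    (hgap : ∀ l : Idx m n, i ≤ (l:ℤ) → (l:ℤ) < k → f l ≤ t → f l ≤ c) :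
    Dd f g i s + Dd f g k t - Dd f g i t ≤ Dd f g k s := by
  have e1 := Dd_anchor f g hik s
  have e2 := Dd_anchor f g hik t
  have hC : (∑ l : Idx m n, if i ≤ (l:ℤ) ∧ (l:ℤ) < k then termD f g s l else 0)
      ≤ ∑ l : Idx m n, if i ≤ (l:ℤ) ∧ (l:ℤ) < k then termD f g t l else 0 := by
    apply Finset.sum_le_sum
    intro l _
    by_cases hc : i ≤ (l:ℤ) ∧ (l:ℤ) < k
    · rw [if_pos hc, if_pos hc]
      have hsgn : isgn l = -1 := isgn_neg (by omega)
      unfold termD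
      rw [hsgn]
      by_cases h1 : f l ≤ t
      · have h3 := hgap l hc.1 hc.2 h1
        rw [if_pos (show f l ≤ s by omega), if_pos (show f l ≤ t by omega)]
        split_ifs <;> omega
      · rw [if_neg (show ¬ f l ≤ s by omega), if_neg (show ¬ f l ≤ t by omega)]
        split_ifs <;> omega
    · rw [if_neg hc, if_neg hc]
  omega

lemma anchor_negD (f g : Zmn m n) {k y t s c : ℤ} (hky : k ≤ y) (hts : t ≤ s) (hsc : s < c)
    (hneg : y ≤ 0)
    (hgap : ∀ l : Idx m n, k ≤ (l:ℤ) → (l:ℤ) < y → t < f l → c ≤ f l) :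
    Dd f g y s + Dd f g k t - Dd f g y t ≤ Dd f g k s := by
  have e1 := Dd_anchor f g hky s
  have e2 := Dd_anchor f g hky t
  have hC : (∑ l : Idx m n, if k ≤ (l:ℤ) ∧ (l:ℤ) < y then termD f g t l else 0)
      ≤ ∑ l : Idx m n, if k ≤ (l:ℤ) ∧ (l:ℤ) < y then termD f g s l else 0 := by
    apply Finset.sum_le_sum
    intro l _
    by_cases hc : k ≤ (l:ℤ) ∧ (l:ℤ) < y
    · rw [if_pos hc, if_pos hc]
      have hsgn : isgn l = -1 := isgn_neg (by omega)
      unfold termD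
      rw [hsgn]
      by_cases h1 : t < f l
      · have h3 := hgap l hc.1 hc.2 h1
        rw [if_neg (show ¬ f l ≤ s by omega), if_neg (show ¬ f l ≤ t by omega)]
        split_ifs <;> omega
      · rw [if_pos (show f l ≤ s by omega), if_pos (show f l ≤ t by omega)]
        split_ifs <;> omega
    · rw [if_neg hc, if_neg hc]
  omega

/-- emit a move of type (1) -/
lemma emit_move1 (f g : Zmn m n) (hD : ∀ x t : ℤ, 0 ≤ Dd f g x t)
    (h0 : ∀ t : ℤ, Dd f g (-(m:ℤ)) t = 0) (p q : Idx m n)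
    (hp : (p:ℤ) < 0) (hq : 0 < (q:ℤ)) (heq : f p = f q)
    (hin : ∀ x : ℤ, (p:ℤ) < x → x ≤ (q:ℤ) → 1 ≤ Dd f g x (f p)) :
    ∃ h : Zmn m n, downStep f h ∧ (∀ x t : ℤ, 0 ≤ Dd h g x t) ∧
      (∀ t : ℤ, Dd h g (-(m:ℤ)) t = 0) ∧ Phi h g < Phi f g := by
  have hpq : p ≠ q := fun hc => by rw [hc] at hp; omega
  refine ⟨f - dvec p + dvec q, Or.inl ⟨p, q, hp, hq, heq, rfl⟩, ?_⟩
  have hstep := step_box f g _ (p:ℤ) (q:ℤ) (f p) (f p + 1)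
    (effect_move1 f p q hp hq heq)
    (fun x s hx1 hx2 hs1 hs2 => by
      have hse : s = f p := by omega
      subst hse; exact hin x hx1 hx2)
    (idx_lb p) hD h0
  refine ⟨hstep.1, hstep.2, ?_⟩
  have hp' : (f - dvec p + dvec q) p = f p + 1 := by
    show f p - dvec p p + dvec q p = f p + 1
    unfold dvec
    rw [if_pos rfl, if_neg hpq, isgn_neg hp]; ring
  have hq' : (f - dvec p + dvec q) q = f q + 1 := by
    show f q - dvec p q + dvec q q = f q + 1
    unfold dvec
    rw [if_pos rfl, if_neg (Ne.symm hpq), isgn_pos hq]; ring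
  apply Phi_decrease f _ g p q 1 one_pos (by omega)
    (by rw [hp', isgn_neg hp]; ring)
    (by rw [hq', isgn_pos hq]; ring)
    (fun k hk1 hk2 => by
      show f k - dvec p k + dvec q k = f k
      unfold dvec
      rw [if_neg hk1, if_neg hk2]; ring)
    hstep.1

/-- emit a move of type (2) -/
lemma emit_swapP (f g : Zmn m n) (hD : ∀ x t : ℤ, 0 ≤ Dd f g x t)
    (h0 : ∀ t : ℤ, Dd f g (-(m:ℤ)) t = 0) (p q : Idx m n)
    (hp : 0 < (p:ℤ)) (hpq : (p:ℤ) < (q:ℤ)) (hv : f q < f p)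
    (hin : ∀ x s : ℤ, (p:ℤ) < x → x ≤ (q:ℤ) → f q ≤ s → s < f p → 1 ≤ Dd f g x s) :
    ∃ h : Zmn m n, downStep f h ∧ (∀ x t : ℤ, 0 ≤ Dd h g x t) ∧
      (∀ t : ℤ, Dd h g (-(m:ℤ)) t = 0) ∧ Phi h g < Phi f g := by
  have hpq' : p ≠ q := fun hc => by rw [hc] at hpq; omega
  refine ⟨fun k => f (Equiv.swap p q k), Or.inr (Or.inl ⟨p, q, hp, hpq, hv, rfl⟩), ?_⟩
  have hstep := step_box f g _ (p:ℤ) (q:ℤ) (f q) (f p)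
    (effect_swapP f p q hp hpq hv) hin (idx_lb p) hD h0
  refine ⟨hstep.1, hstep.2, ?_⟩
  apply Phi_decrease f _ g p q (f p - f q) (by omega) hpq
    (by rw [Equiv.swap_apply_left, isgn_pos hp]; ring)
    (by rw [Equiv.swap_apply_right, isgn_pos (by omega : 0 < (q:ℤ))]; ring)
    (fun k hk1 hk2 => by
      show f (Equiv.swap p q k) = f k
      rw [Equiv.swap_apply_of_ne_of_ne hk1 hk2])
    hstep.1

/-- emit a move of type (3) -/
lemma emit_swapN (f g : Zmn m n) (hD : ∀ x t : ℤ, 0 ≤ Dd f g x t)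
    (h0 : ∀ t : ℤ, Dd f g (-(m:ℤ)) t = 0) (p q : Idx m n)
    (hq : (q:ℤ) < 0) (hpq : (p:ℤ) < (q:ℤ)) (hv : f p < f q)
    (hin : ∀ x s : ℤ, (p:ℤ) < x → x ≤ (q:ℤ) → f p ≤ s → s < f q → 1 ≤ Dd f g x s) :
    ∃ h : Zmn m n, downStep f h ∧ (∀ x t : ℤ, 0 ≤ Dd h g x t) ∧
      (∀ t : ℤ, Dd h g (-(m:ℤ)) t = 0) ∧ Phi h g < Phi f g := by
  have hpq' : p ≠ q := fun hc => by rw [hc] at hpq; omega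
  refine ⟨fun k => f (Equiv.swap p q k), Or.inr (Or.inr ⟨p, q, hq, hpq, hv, rfl⟩), ?_⟩
  have hstep := step_box f g _ (p:ℤ) (q:ℤ) (f p) (f q)
    (effect_swapN f p q hq hpq hv) hin (idx_lb p) hD h0
  refine ⟨hstep.1, hstep.2, ?_⟩
  apply Phi_decrease f _ g p q (f q - f p) (by omega) hpq
    (by rw [Equiv.swap_apply_left, isgn_neg (by omega : (p:ℤ) < 0)]; ring)
    (by rw [Equiv.swap_apply_right, isgn_neg hq]; ring)
    (fun k hk1 hk2 => by
      show f (Equiv.swap p q k) = f k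
      rw [Equiv.swap_apply_of_ne_of_ne hk1 hk2])
    hstep.1

end BIC

namespace BIC
variable {m n : ℕ}

lemma exists_max (K : Finset ℤ) (h : K.Nonempty) : ∃ i, i ∈ K ∧ ∀ x ∈ K, x ≤ i :=
  ⟨K.max' h, K.max'_mem h, fun x hx => Finset.le_max' K x hx⟩

set_option maxHeartbeats 1000000 in
lemma main_step (f g : Zmn m n)
    (hD : ∀ x t : ℤ, 0 ≤ Dd f g x t) (h0 : ∀ t : ℤ, Dd f g (-(m:ℤ)) t = 0)
    (hne : f ≠ g) :
    ∃ h : Zmn m n, downStep f h ∧ (∀ x t : ℤ, 0 ≤ Dd h g x t) ∧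
      (∀ t : ℤ, Dd h g (-(m:ℤ)) t = 0) ∧ Phi h g < Phi f g := by
  set T : Finset ℤ := (Finset.Icc (-(m:ℤ)) (n:ℤ)).filter
    (fun x => ∃ t ∈ Finset.Icc (-(Mb f g)) (Mb f g), Dd f g x t ≠ 0) with hT
  have hTextend : ∀ x t : ℤ, Dd f g x t ≠ 0 → x ∈ T := by
    intro x t hxt
    have htw : t ∈ Finset.Icc (-(Mb f g)) (Mb f g) := by
      rw [Finset.mem_Icc]
      by_contra hc
      rw [not_and_or, not_le, not_le] at hc
      exact hxt (Dd_vanish f g x (by omega))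
    have hxr : -(m:ℤ) ≤ x ∧ x ≤ (n:ℤ) := by
      constructor
      · by_contra hc
        exact hxt (by rw [Dd_low f g (by omega), h0])
      · by_contra hc
        exact hxt (Dd_high f g (by omega) t)
    rw [hT, Finset.mem_filter, Finset.mem_Icc]
    exact ⟨hxr, t, htw, hxt⟩
  have hTne : T.Nonempty := by
    by_contra hc
    rw [Finset.not_nonempty_iff_eq_empty] at hc
    apply hne
    funext i
    have hterm : ∀ t : ℤ, termD f g t i = 0 := by
      intro t
      have hrec := Dd_rec f g (i:ℤ) t
      rw [dif_pos i.2] at hrec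
      have e1 : Dd f g (i:ℤ) t = 0 := by
        by_contra hcc
        have := hTextend _ _ hcc
        rw [hc] at this
        exact absurd this (Finset.notMem_empty _)
      have e2 : Dd f g ((i:ℤ)+1) t = 0 := by
        by_contra hcc
        have := hTextend _ _ hcc
        rw [hc] at this
        exact absurd this (Finset.notMem_empty _)
      have hieq : (⟨(i:ℤ), i.2⟩ : Idx m n) = i := Subtype.ext rfl
      rw [hieq] at hrec
      omega
    have h1 := hterm (f i)
    have h2 := hterm (g i)
    unfold termD at h1 h2
    rcases le_or_gt (isgn i) 0 with hs | hs
    · have : isgn i = -1 := by unfold isgn at *; split_ifs at * <;> omega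
      rw [this] at h1 h2
      split_ifs at h1 h2 <;> omega
    · have : isgn i = 1 := by unfold isgn at *; split_ifs at * <;> omega
      rw [this] at h1 h2
      split_ifs at h1 h2 <;> omega
  obtain ⟨j0, hj0mem, hj0max⟩ := exists_max T hTne
  obtain ⟨hj0Icc, tstar, htstarw, htstar⟩ := Finset.mem_filter.mp hj0mem
  rw [Finset.mem_Icc] at hj0Icc
  have htop : ∀ x t : ℤ, j0 < x → Dd f g x t = 0 := by
    intro x t hx
    by_contra hcc
    have := hj0max x (hTextend x t hcc)
    omega
  have hrecj0 := Dd_rec f g j0 tstar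
  rw [htop (j0+1) tstar (by omega)] at hrecj0
  have hj0idx : j0 ∈ IdxSet m n := by
    by_contra hni
    rw [dif_neg hni] at hrecj0
    omega
  rw [dif_pos hj0idx] at hrecj0
  have hrowj0 : ∀ t : ℤ, Dd f g j0 t = termD f g t (⟨j0, hj0idx⟩ : Idx m n) := by
    intro t
    have hrec := Dd_rec f g j0 t
    rw [htop (j0+1) t (by omega), dif_pos hj0idx] at hrec
    omega
  have hj0co : ((⟨j0, hj0idx⟩ : Idx m n) : ℤ) = j0 := rfl
  have hj0cases : 0 < j0 ∨ j0 < 0 := by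
    rw [mem_idx] at hj0idx; omega
  rcases hj0cases with hj0pos | hj0neg
  · -- top row positive
    have hsgnJ0 : isgn (⟨j0, hj0idx⟩ : Idx m n) = 1 := isgn_pos (by omega)
    have hfg0 : f (⟨j0, hj0idx⟩ : Idx m n) < g (⟨j0, hj0idx⟩ : Idx m n) := by
      by_contra hcc
      apply htstar
      rw [hrowj0]
      have hD0 := hD j0 tstar
      rw [hrowj0] at hD0
      unfold termD at hD0 ⊢
      rw [hsgnJ0] at hD0 ⊢
      split_ifs at hD0 ⊢ <;> omega
    set S : Finset (Idx m n) := Finset.univ.filter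
      (fun j : Idx m n => 0 < (j:ℤ) ∧ f j < g j ∧ 1 ≤ Dd f g (j:ℤ) (f j)) with hS
    have hJ0S : (⟨j0, hj0idx⟩ : Idx m n) ∈ S := by
      rw [hS, Finset.mem_filter]
      refine ⟨Finset.mem_univ _, by omega, hfg0, ?_⟩
      rw [hj0co, hrowj0]
      unfold termD
      rw [hsgnJ0, if_pos (le_refl _), if_neg (by omega)]
      omega
    obtain ⟨j, hjS, hjmin⟩ := Finset.exists_min_image S f ⟨_, hJ0S⟩
    rw [hS, Finset.mem_filter] at hjS
    obtain ⟨-, hjpos, hjfg, hjD⟩ := hjS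
    set K : Finset ℤ := (Finset.Icc (-(m:ℤ)) ((j:ℤ)-1)).filter
      (fun x => Dd f g x (f j) = 0) with hK
    have hKne : K.Nonempty := by
      refine ⟨-(m:ℤ), ?_⟩
      rw [hK, Finset.mem_filter, Finset.mem_Icc]
      exact ⟨⟨le_refl _, by omega⟩, h0 (f j)⟩
    obtain ⟨i, hiK, himax⟩ := exists_max K hKne
    rw [hK, Finset.mem_filter, Finset.mem_Icc] at hiK
    obtain ⟨hiIcc, hDi⟩ := hiK
    have hrun : ∀ x : ℤ, i < x → x ≤ (j:ℤ) → 1 ≤ Dd f g x (f j) := by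
      intro x hx1 hx2
      by_cases hxj : x = (j:ℤ)
      · rw [hxj]; exact hjD
      have hxK : x ∉ K := fun hmem => by have := himax x hmem; omega
      have hne0 : Dd f g x (f j) ≠ 0 := by
        intro hcc
        exact hxK (by rw [hK, Finset.mem_filter, Finset.mem_Icc]; exact ⟨⟨by omega, by omega⟩, hcc⟩)
      have := hD x (f j)
      omega
    have hinext : 1 ≤ Dd f g (i+1) (f j) := hrun (i+1) (by omega) (by omega)
    have hreci := Dd_rec f g i (f j)
    have hiidx : i ∈ IdxSet m n := by
      by_contra hni
      rw [dif_neg hni] at hreci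
      omega
    rw [dif_pos hiidx] at hreci
    have hico : ((⟨i, hiidx⟩ : Idx m n) : ℤ) = i := rfl
    have htermI : termD f g (f j) (⟨i, hiidx⟩ : Idx m n) ≤ -1 := by omega
    by_cases hipos : 0 < i
    · -- EMIT A : swap within positive part
      have hI : g (⟨i, hiidx⟩ : Idx m n) ≤ f j ∧ f j < f (⟨i, hiidx⟩ : Idx m n) := by
        unfold termD at htermI
        rw [isgn_pos (by rw [hico]; omega)] at htermI
        constructor
        · by_contra hcc; split_ifs at htermI <;> omega
        · by_contra hcc; split_ifs at htermI <;> omega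
      set Kf : Finset (Idx m n) := Finset.univ.filter
        (fun k : Idx m n => i ≤ (k:ℤ) ∧ (k:ℤ) < (j:ℤ) ∧ f j < f k) with hKf
      have hKfne : Kf.Nonempty := by
        refine ⟨⟨i, hiidx⟩, ?_⟩
        rw [hKf, Finset.mem_filter]
        exact ⟨Finset.mem_univ _, by rw [hico], by rw [hico]; omega, hI.2⟩
      obtain ⟨p, hpKf, hpmin⟩ := Finset.exists_min_image Kf f hKfne
      rw [hKf, Finset.mem_filter] at hpKf
      obtain ⟨-, hp1, hp2, hp3⟩ := hpKf
      apply emit_swapP f g hD h0 p j (by omega) hp2 (by omega)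
      intro x s hx1 hx2 hs1 hs2
      have hanch := anchor_pos f g (show i ≤ x by omega) (show f j ≤ s from hs1)
        (show s < f p from hs2) hipos
        (fun l hl1 hl2 hl3 => by
          have hlKf : l ∈ Kf := by
            rw [hKf, Finset.mem_filter]
            exact ⟨Finset.mem_univ _, hl1, by omega, hl3⟩
          exact hpmin l hlKf)
      have h1 := hD i s
      have h2 := hrun x (by omega) hx2
      omega
    · -- bottom boundary is negative
      have hineg : i < 0 := by rw [mem_idx] at hiidx; omega
      have hI : f (⟨i, hiidx⟩ : Idx m n) ≤ f j ∧ f j < g (⟨i, hiidx⟩ : Idx m n) := by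
        unfold termD at htermI
        rw [isgn_neg (by rw [hico]; omega)] at htermI
        constructor
        · by_contra hcc; split_ifs at htermI <;> omega
        · by_contra hcc; split_ifs at htermI <;> omega
      by_cases hfI : f (⟨i, hiidx⟩ : Idx m n) = f j
      · -- EMIT B : atypicality move
        apply emit_move1 f g hD h0 ⟨i, hiidx⟩ j (by rw [hico]; omega) (by omega) hfI
        intro x hx1 hx2
        rw [hfI]
        rw [hico] at hx1
        exact hrun x hx1 hx2
      · -- walk up at column t1 = f ⟨i,hiidx⟩
        have hfIlt : f (⟨i, hiidx⟩ : Idx m n) < f j := lt_of_le_of_ne hI.1 hfI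
        have hDi1t1 : 1 ≤ Dd f g (i+1) (f (⟨i, hiidx⟩ : Idx m n)) := by
          have hrec1 := Dd_rec f g i (f (⟨i, hiidx⟩ : Idx m n))
          rw [dif_pos hiidx] at hrec1
          have hterm1 : termD f g (f (⟨i, hiidx⟩ : Idx m n)) (⟨i, hiidx⟩ : Idx m n) = -1 := by
            unfold termD
            rw [isgn_neg (by rw [hico]; omega), if_pos (le_refl _),
              if_neg (show ¬ g (⟨i, hiidx⟩ : Idx m n) ≤ f (⟨i, hiidx⟩ : Idx m n) by
                have := hI.2; omega)]
            ring
          have := hD i (f (⟨i, hiidx⟩ : Idx m n))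
          omega
        classical
        set J2 : Finset ℤ := (Finset.Icc (i+1) (n:ℤ)).filter
          (fun y => ∀ x ∈ Finset.Icc (i+1) y, 1 ≤ Dd f g x (f (⟨i, hiidx⟩ : Idx m n))) with hJ2
        have hJ2mem_iff : ∀ y : ℤ, y ∈ J2 ↔ ((i+1 ≤ y ∧ y ≤ (n:ℤ)) ∧
            ∀ x ∈ Finset.Icc (i+1) y, 1 ≤ Dd f g x (f (⟨i, hiidx⟩ : Idx m n))) := by
          intro y
          rw [hJ2]
          simp only [Finset.mem_filter, Finset.mem_Icc]
        have hJ2ne : J2.Nonempty := by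
          refine ⟨i+1, ?_⟩
          rw [hJ2mem_iff]
          refine ⟨⟨le_refl _, by omega⟩, ?_⟩
          intro x hx
          rw [Finset.mem_Icc] at hx
          have hxe : x = i + 1 := by omega
          rw [hxe]; exact hDi1t1
        obtain ⟨j2, hj2mem, hj2max⟩ := exists_max J2 hJ2ne
        rw [hJ2mem_iff] at hj2mem
        obtain ⟨hj2Icc, hrun2⟩ := hj2mem
        have hrun2' : ∀ x : ℤ, i < x → x ≤ j2 → 1 ≤ Dd f g x (f (⟨i, hiidx⟩ : Idx m n)) := by
          intro x hx1 hx2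
          exact hrun2 x (by rw [Finset.mem_Icc]; omega)
        have hDj2t1 : 1 ≤ Dd f g j2 (f (⟨i, hiidx⟩ : Idx m n)) := hrun2' j2 (by omega) (le_refl _)
        have hDj21 : Dd f g (j2+1) (f (⟨i, hiidx⟩ : Idx m n)) = 0 := by
          rcases lt_or_ge j2 (n:ℤ) with hlt | hge
          · have hnotmem : j2+1 ∉ J2 := fun hmem => by
              have := hj2max _ hmem; omega
            rw [hJ2mem_iff, not_and_or] at hnotmem
            rcases hnotmem with hc1 | hc2
            · omega
            · push_neg at hc2
              obtain ⟨x, hxmem, hxlt⟩ := hc2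
              rw [Finset.mem_Icc] at hxmem
              by_cases hxj2 : x ≤ j2
              · exact absurd (hrun2' x (by omega) hxj2) (by omega)
              · have hxx : x = j2 + 1 := by omega
                rw [hxx] at hxlt
                have := hD (j2+1) (f (⟨i, hiidx⟩ : Idx m n))
                omega
          · exact Dd_high f g (by omega) _
        have hrecj2 := Dd_rec f g j2 (f (⟨i, hiidx⟩ : Idx m n))
        rw [hDj21] at hrecj2
        have hj2idx : j2 ∈ IdxSet m n := by
          by_contra hni
          rw [dif_neg hni] at hrecj2
          omega
        rw [dif_pos hj2idx] at hrecj2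
        have hj2co : ((⟨j2, hj2idx⟩ : Idx m n) : ℤ) = j2 := rfl
        have htermQ : 1 ≤ termD f g (f (⟨i, hiidx⟩ : Idx m n)) (⟨j2, hj2idx⟩ : Idx m n) := by
          omega
        have hj2cases : 0 < j2 ∨ j2 < 0 := by rw [mem_idx] at hj2idx; omega
        rcases hj2cases with hq2pos | hq2neg
        · have hQ : f (⟨j2, hj2idx⟩ : Idx m n) ≤ f (⟨i, hiidx⟩ : Idx m n) ∧
              f (⟨i, hiidx⟩ : Idx m n) < g (⟨j2, hj2idx⟩ : Idx m n) := by
            unfold termD at htermQ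
            rw [isgn_pos (by rw [hj2co]; omega)] at htermQ
            constructor
            · by_contra hcc; split_ifs at htermQ <;> omega
            · by_contra hcc; split_ifs at htermQ <;> omega
          by_cases hfQ : f (⟨i, hiidx⟩ : Idx m n) = f (⟨j2, hj2idx⟩ : Idx m n)
          · -- EMIT C : atypicality move
            apply emit_move1 f g hD h0 ⟨i, hiidx⟩ ⟨j2, hj2idx⟩ (by rw [hico]; omega)
              (by rw [hj2co]; omega) hfQ
            intro x hx1 hx2
            rw [hico] at hx1
            rw [hj2co] at hx2
            exact hrun2' x hx1 hx2
          · -- contradiction with minimality of f j over S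
            exfalso
            have h5 : f (⟨j2, hj2idx⟩ : Idx m n) < f (⟨i, hiidx⟩ : Idx m n) := by
              rcases lt_or_eq_of_le hQ.1 with h | h
              · exact h
              · exact absurd h.symm hfQ
            have hQS : (⟨j2, hj2idx⟩ : Idx m n) ∈ S := by
              rw [hS, Finset.mem_filter]
              refine ⟨Finset.mem_univ _, by rw [hj2co]; omega, by omega, ?_⟩
              rw [hj2co]
              have hrecQ := Dd_rec f g j2 (f (⟨j2, hj2idx⟩ : Idx m n))
              rw [dif_pos hj2idx] at hrecQ
              have htQ : termD f g (f (⟨j2, hj2idx⟩ : Idx m n)) (⟨j2, hj2idx⟩ : Idx m n) = 1 := by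
                unfold termD
                rw [isgn_pos (by rw [hj2co]; omega), if_pos (le_refl _), if_neg (by omega)]
                ring
              have := hD (j2+1) (f (⟨j2, hj2idx⟩ : Idx m n))
              omega
            have := hjmin _ hQS
            omega
        · -- EMIT D : swap within negative part
          have hQ : g (⟨j2, hj2idx⟩ : Idx m n) ≤ f (⟨i, hiidx⟩ : Idx m n) ∧
              f (⟨i, hiidx⟩ : Idx m n) < f (⟨j2, hj2idx⟩ : Idx m n) := by
            unfold termD at htermQ
            rw [isgn_neg (by rw [hj2co]; omega)] at htermQ
            constructor
            · by_contra hcc; split_ifs at htermQ <;> omega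
            · by_contra hcc; split_ifs at htermQ <;> omega
          set Kf2 : Finset (Idx m n) := Finset.univ.filter
            (fun k : Idx m n => i < (k:ℤ) ∧ (k:ℤ) ≤ j2 ∧ f (⟨i, hiidx⟩ : Idx m n) < f k) with hKf2
          have hKf2ne : Kf2.Nonempty := by
            refine ⟨⟨j2, hj2idx⟩, ?_⟩
            rw [hKf2, Finset.mem_filter]
            exact ⟨Finset.mem_univ _, by rw [hj2co]; omega, by rw [hj2co], hQ.2⟩
          obtain ⟨p, hpKf2, hpmin⟩ := Finset.exists_min_image Kf2 f hKf2ne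
          rw [hKf2, Finset.mem_filter] at hpKf2
          obtain ⟨-, hp1, hp2, hp3⟩ := hpKf2
          apply emit_swapN f g hD h0 ⟨i, hiidx⟩ p (by omega) (by rw [hico]; omega) (by omega)
          intro x s hx1 hx2 hs1 hs2
          rw [hico] at hx1
          have hanch := anchor_negD f g (show x ≤ j2+1 by omega)
            (show f (⟨i, hiidx⟩ : Idx m n) ≤ s from hs1)
            (show s < f p from hs2) (by omega)
            (fun l hl1 hl2 hl3 => by
              have hlKf2 : l ∈ Kf2 := by
                rw [hKf2, Finset.mem_filter]
                exact ⟨Finset.mem_univ _, by omega, by omega, hl3⟩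
              exact hpmin l hlKf2)
          have h1 := hD (j2+1) s
          have h2 := hrun2' x hx1 (by omega)
          omega
  · -- top row negative : EMIT E
    have hsgnJ0 : isgn (⟨j0, hj0idx⟩ : Idx m n) = -1 := isgn_neg (by omega)
    have hgf0 : g (⟨j0, hj0idx⟩ : Idx m n) < f (⟨j0, hj0idx⟩ : Idx m n) := by
      by_contra hcc
      apply htstar
      rw [hrowj0]
      have hD0 := hD j0 tstar
      rw [hrowj0] at hD0
      unfold termD at hD0 ⊢
      rw [hsgnJ0] at hD0 ⊢
      split_ifs at hD0 ⊢ <;> omega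
    have hDj0t : Dd f g j0 (f (⟨j0, hj0idx⟩ : Idx m n) - 1) = 1 := by
      rw [hrowj0]
      unfold termD
      rw [hsgnJ0, if_neg (by omega), if_pos (by omega)]
      ring
    set K : Finset ℤ := (Finset.Icc (-(m:ℤ)) (j0-1)).filter
      (fun x => Dd f g x (f (⟨j0, hj0idx⟩ : Idx m n) - 1) = 0) with hK
    have hKne : K.Nonempty := by
      refine ⟨-(m:ℤ), ?_⟩
      rw [hK, Finset.mem_filter, Finset.mem_Icc]
      have hmj0 : -(m:ℤ) < j0 := by
        rcases eq_or_lt_of_le hj0Icc.1 with he | hl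
        · exfalso
          have hz := h0 (f (⟨j0, hj0idx⟩ : Idx m n) - 1)
          rw [he] at hz
          omega
        · exact hl
      exact ⟨⟨le_refl _, by omega⟩, h0 _⟩
    obtain ⟨i, hiK, himax⟩ := exists_max K hKne
    rw [hK, Finset.mem_filter, Finset.mem_Icc] at hiK
    obtain ⟨hiIcc, hDi⟩ := hiK
    have hrun : ∀ x : ℤ, i < x → x ≤ j0 → 1 ≤ Dd f g x (f (⟨j0, hj0idx⟩ : Idx m n) - 1) := by
      intro x hx1 hx2
      by_cases hxj : x = j0
      · rw [hxj, hDj0t]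
      have hxK : x ∉ K := fun hmem => by have := himax x hmem; omega
      have hne0 : Dd f g x (f (⟨j0, hj0idx⟩ : Idx m n) - 1) ≠ 0 := by
        intro hcc
        exact hxK (by rw [hK, Finset.mem_filter, Finset.mem_Icc]; exact ⟨⟨by omega, by omega⟩, hcc⟩)
      have := hD x (f (⟨j0, hj0idx⟩ : Idx m n) - 1)
      omega
    have hinext : 1 ≤ Dd f g (i+1) (f (⟨j0, hj0idx⟩ : Idx m n) - 1) :=
      hrun (i+1) (by omega) (by omega)
    have hreci := Dd_rec f g i (f (⟨j0, hj0idx⟩ : Idx m n) - 1)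
    have hiidx : i ∈ IdxSet m n := by
      by_contra hni
      rw [dif_neg hni] at hreci
      omega
    rw [dif_pos hiidx] at hreci
    have hico : ((⟨i, hiidx⟩ : Idx m n) : ℤ) = i := rfl
    have htermI : termD f g (f (⟨j0, hj0idx⟩ : Idx m n) - 1) (⟨i, hiidx⟩ : Idx m n) ≤ -1 := by
      omega
    have hineg : i < 0 := by omega
    have hI : f (⟨i, hiidx⟩ : Idx m n) ≤ f (⟨j0, hj0idx⟩ : Idx m n) - 1 ∧
        f (⟨j0, hj0idx⟩ : Idx m n) - 1 < g (⟨i, hiidx⟩ : Idx m n) := by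
      unfold termD at htermI
      rw [isgn_neg (by rw [hico]; omega)] at htermI
      constructor
      · by_contra hcc; split_ifs at htermI <;> omega
      · by_contra hcc; split_ifs at htermI <;> omega
    set Kf3 : Finset (Idx m n) := Finset.univ.filter
      (fun k : Idx m n => i ≤ (k:ℤ) ∧ (k:ℤ) < j0 ∧ f k ≤ f (⟨j0, hj0idx⟩ : Idx m n) - 1) with hKf3
    have hKf3ne : Kf3.Nonempty := by
      refine ⟨⟨i, hiidx⟩, ?_⟩
      rw [hKf3, Finset.mem_filter]
      exact ⟨Finset.mem_univ _, by rw [hico], by rw [hico]; omega, hI.1⟩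
    obtain ⟨p, hpKf3, hpmax⟩ := Finset.exists_max_image Kf3 f hKf3ne
    rw [hKf3, Finset.mem_filter] at hpKf3
    obtain ⟨-, hp1, hp2, hp3⟩ := hpKf3
    apply emit_swapN f g hD h0 p ⟨j0, hj0idx⟩ (by rw [hj0co]; omega) (by rw [hj0co]; omega)
      (by omega)
    intro x s hx1 hx2 hs1 hs2
    rw [hj0co] at hx2
    have hanch := anchor_negE f g (show i ≤ x by omega)
      (show s ≤ f (⟨j0, hj0idx⟩ : Idx m n) - 1 by omega)
      (show f p ≤ s from hs1) (show x ≤ 0 by omega)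
      (fun l hl1 hl2 hl3 => by
        have hlKf3 : l ∈ Kf3 := by
          rw [hKf3, Finset.mem_filter]
          exact ⟨Finset.mem_univ _, hl1, by omega, by omega⟩
        exact hpmax l hlKf3)
    have h1 := hD i s
    have h2 := hrun x (by omega) hx2
    omega

end BIC

namespace BIC
variable {m n : ℕ}

lemma D_to_chain (g : Zmn m n) : ∀ N : ℕ, ∀ f : Zmn m n, Phi f g ≤ N →
    (∀ x t : ℤ, 0 ≤ Dd f g x t) → (∀ t : ℤ, Dd f g (-(m:ℤ)) t = 0) →
    Relation.ReflTransGen downStep f g := by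
  intro N
  induction N with
  | zero =>
    intro f hP hD h0
    by_cases hfg : f = g
    · rw [hfg]
    · obtain ⟨h, -, -, -, hlt⟩ := main_step f g hD h0 hfg
      omega
  | succ N ih =>
    intro f hP hD h0
    by_cases hfg : f = g
    · rw [hfg]
    · obtain ⟨h, hstep, hD', h0', hlt⟩ := main_step f g hD h0 hfg
      exact Relation.ReflTransGen.head hstep (ih h (by omega) hD' h0')

end BIC


/-- `f ⪰ g` iff there is a chain `f = h₁ ↓ h₂ ↓ ... ↓ h_r = g`. -/
theorem bruhat_iff_chain {m n : ℕ} (f g : Zmn m n) :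
    bruhatLE g f ↔ Relation.ReflTransGen downStep f g := by
  constructor
  · intro hb
    rw [BIC.bruhat_iff_D] at hb
    exact BIC.D_to_chain g (BIC.Phi f g) f le_rfl hb.1 hb.2
  · exact BIC.chain_bruhat f g
end

section
/- An element f ∈ ℤ^{m|n} is minimal with respect to the Bruhat order ⪯ if and only if f is typical and antidominant. -/
open Finset

section AuxMin

-- basics
lemma idx_cases {m n : ℕ} (i : Idx m n) : (i:ℤ) < 0 ∨ 0 < (i:ℤ) := by
  have h := i.2
  simp only [IdxSet, Finset.mem_union, Finset.mem_Icc] at h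
  omega

def Dpos (δ : ℤ →₀ ℤ) : Prop :=
  ∃ c : ℤ →₀ ℕ,
    δ = c.sum fun a k => (k:ℤ) • (Finsupp.single a (1:ℤ) - Finsupp.single (a+1) (1:ℤ))

lemma Dpos_zero : Dpos 0 := ⟨0, by simp⟩

lemma Dpos_add {δ₁ δ₂ : ℤ →₀ ℤ} (h₁ : Dpos δ₁) (h₂ : Dpos δ₂) : Dpos (δ₁ + δ₂) := by
  obtain ⟨c₁, rfl⟩ := h₁
  obtain ⟨c₂, rfl⟩ := h₂
  refine ⟨c₁ + c₂, ?_⟩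
  rw [Finsupp.sum_add_index' (by intro a; simp) (by intro a b₁ b₂; push_cast; rw [add_smul])]

lemma Dpos_single_sub_aux (N : ℕ) : ∀ a : ℤ, Dpos (Finsupp.single a 1 - Finsupp.single (a + N) 1) := by
  induction N with
  | zero => intro a; simpa using Dpos_zero
  | succ k ih =>
    intro a
    have h1 : Dpos (Finsupp.single a 1 - Finsupp.single (a+1) (1:ℤ)) := by
      refine ⟨Finsupp.single a 1, ?_⟩
      rw [Finsupp.sum_single_index] <;> simp
    have := Dpos_add h1 (ih (a+1))
    have h2 : a + ((k+1:ℕ):ℤ) = (a+1) + k := by push_cast; ring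
    have heq : (Finsupp.single a 1 - Finsupp.single (a+1) (1:ℤ)) + (Finsupp.single (a+1) 1 - Finsupp.single (a+1+k) 1) = Finsupp.single a 1 - Finsupp.single (a + (k+1:ℕ)) 1 := by
      rw [h2]; abel
    rwa [heq] at this

lemma Dpos_single_sub {a b : ℤ} (h : a ≤ b) : Dpos (Finsupp.single a 1 - Finsupp.single b 1) := by
  have := Dpos_single_sub_aux (b - a).toNat a
  rwa [show a + ((b-a).toNat : ℤ) = b by omega] at this

-- T functional
noncomputable def Tf : (ℤ →₀ ℤ) →+ ℤ := Finsupp.liftAddHom fun a => AddMonoidHom.mulLeft a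

@[simp] lemma Tf_single (a v : ℤ) : Tf (Finsupp.single a v) = a * v := by
  rw [Tf, Finsupp.liftAddHom_apply_single]
  rfl

lemma Tf_nonpos_of_Dpos {δ : ℤ →₀ ℤ} (h : Dpos δ) : Tf δ ≤ 0 := by
  obtain ⟨c, rfl⟩ := h
  rw [map_finsuppSum]
  apply Finset.sum_nonpos
  intro a _
  dsimp only
  rw [map_zsmul, map_sub, Tf_single, Tf_single]
  have : a * 1 - (a+1) * 1 = -1 := by ring
  rw [this]
  simp

variable {m n : ℕ}

lemma Tf_wtFrom (f : Zmn m n) (j : Idx m n) :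
    Tf (wtFrom f j) = ∑ i : Idx m n, if (j:ℤ) ≤ (i:ℤ) then isgn i * f i else 0 := by
  rw [wtFrom, map_sum]
  apply Finset.sum_congr rfl
  intro i _
  split
  · rw [map_zsmul, Tf_single, smul_eq_mul]; ring
  · simp

noncomputable def Posn (m n : ℕ) : Finset (Idx m n) := univ.filter (fun i => 0 < (i:ℤ))
noncomputable def Negn (m n : ℕ) : Finset (Idx m n) := univ.filter (fun i => (i:ℤ) < 0)
def cnt {m n : ℕ} (s : Finset (Idx m n)) (h : Zmn m n) (a : ℤ) : ℕ :=
  (s.filter (fun i => h i = a)).card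

lemma wtF_apply (h : Zmn m n) (a : ℤ) :
    wtF h a = (cnt (Posn m n) h a : ℤ) - (cnt (Negn m n) h a : ℤ) := by
  rw [wtF, Finsupp.finset_sum_apply]
  have hterm : ∀ i : Idx m n, (isgn i • Finsupp.single (h i) (1:ℤ)) a
      = isgn i * (if h i = a then 1 else 0) := by
    intro i
    rw [Finsupp.smul_apply, Finsupp.single_apply, smul_eq_mul]
  simp only [hterm]
  rw [← Finset.sum_filter_add_sum_filter_not univ (fun i : Idx m n => 0 < (i:ℤ))
      (fun i => isgn i * if h i = a then 1 else 0)]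
  have h1 : ∀ i ∈ univ.filter (fun i : Idx m n => 0 < (i:ℤ)), isgn i = 1 := by
    intro i hi; rw [Finset.mem_filter] at hi; simp [isgn, hi.2]
  have h2 : univ.filter (fun i : Idx m n => ¬ 0 < (i:ℤ)) = Negn m n := by
    apply Finset.filter_congr; intro i _
    have := idx_cases i; constructor <;> intro <;> first | omega | simp; omega
  rw [h2]
  have h3 : ∀ i ∈ Negn m n, isgn i = -1 := by
    intro i hi; rw [Negn, Finset.mem_filter] at hi; simp [isgn]; omega
  have e1 : (∑ x ∈ filter (fun i : Idx m n => 0 < (i:ℤ)) univ, isgn x * if h x = a then 1 else 0)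
      = ∑ x ∈ filter (fun i : Idx m n => 0 < (i:ℤ)) univ, (if h x = a then (1:ℤ) else 0) :=
    Finset.sum_congr rfl fun i hi => by rw [h1 i hi, one_mul]
  have e2 : (∑ x ∈ Negn m n, isgn x * if h x = a then 1 else 0)
      = ∑ x ∈ Negn m n, -(if h x = a then (1:ℤ) else 0) :=
    Finset.sum_congr rfl fun i hi => by rw [h3 i hi]; ring
  rw [e1, e2]
  rw [Finset.sum_neg_distrib, Finset.sum_boole, Finset.sum_boole]
  rw [cnt, cnt, Posn]
  push_cast
  ring

lemma card_Posn : (Posn m n).card = n := by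
  have hc : (Finset.Icc (1:ℤ) (n:ℤ)).card = n := by rw [Int.card_Icc]; omega
  rw [Posn]
  conv_rhs => rw [← hc]
  refine Finset.card_bij (fun (i : Idx m n) _ => (i:ℤ)) ?_ ?_ ?_
  · intro i hi
    have h2 := i.2
    rw [Finset.mem_filter] at hi
    simp only [IdxSet, Finset.mem_union, Finset.mem_Icc] at h2
    simp only [Finset.mem_Icc]
    omega
  · intro i _ j _ hij; exact Subtype.ext hij
  · intro x hx
    simp only [Finset.mem_Icc] at hx
    have hx2 : x ∈ IdxSet m n := by
      simp only [IdxSet, Finset.mem_union, Finset.mem_Icc]; omega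
    exact ⟨⟨x, hx2⟩, by simp only [Finset.mem_filter, Finset.mem_univ, true_and]; omega, rfl⟩

lemma card_Negn : (Negn m n).card = m := by
  have hc : (Finset.Icc (-(m:ℤ)) (-1:ℤ)).card = m := by rw [Int.card_Icc]; omega
  rw [Negn]
  conv_rhs => rw [← hc]
  refine Finset.card_bij (fun (i : Idx m n) _ => (i:ℤ)) ?_ ?_ ?_
  · intro i hi
    have h2 := i.2
    rw [Finset.mem_filter] at hi
    simp only [IdxSet, Finset.mem_union, Finset.mem_Icc] at h2
    simp only [Finset.mem_Icc]
    omega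
  · intro i _ j _ hij; exact Subtype.ext hij
  · intro x hx
    simp only [Finset.mem_Icc] at hx
    have hx2 : x ∈ IdxSet m n := by
      simp only [IdxSet, Finset.mem_union, Finset.mem_Icc]; omega
    exact ⟨⟨x, hx2⟩, by simp only [Finset.mem_filter, Finset.mem_univ, true_and]; omega, rfl⟩

lemma sum_cnt (s : Finset (Idx m n)) (h : Zmn m n) (A : Finset ℤ)
    (hA : ∀ i ∈ s, h i ∈ A) : ∑ a ∈ A, cnt s h a = s.card := by
  unfold cnt
  simp only [Finset.card_filter]
  rw [Finset.sum_comm]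
  have : ∀ i ∈ s, (∑ a ∈ A, if h i = a then 1 else 0) = 1 := by
    intro i hi
    rw [Finset.sum_ite_eq A (h i) (fun _ => 1)]
    simp [hA i hi]
  rw [Finset.sum_congr rfl this, Finset.sum_const, smul_eq_mul, mul_one]


noncomputable def Aset (f : Zmn m n) : Finset ℤ :=
  Finset.image f univ ∪ (wtF f).support

lemma mem_Aset (f : Zmn m n) (i : Idx m n) : f i ∈ Aset f := by
  simp only [Aset, Finset.mem_union, Finset.mem_image]
  exact Or.inl ⟨i, Finset.mem_univ i, rfl⟩

lemma sum_abs_Aset (f : Zmn m n) :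
    ∑ a ∈ Aset f, (wtF f a).natAbs = ∑ a ∈ (wtF f).support, (wtF f a).natAbs := by
  refine (Finset.sum_subset ?_ ?_).symm
  · exact Finset.subset_union_right
  · intro a _ ha
    rw [Finsupp.notMem_support_iff] at ha
    rw [ha]; rfl

lemma sum_PN (f : Zmn m n) :
    ∑ a ∈ Aset f, (cnt (Posn m n) f a + cnt (Negn m n) f a) = n + m := by
  rw [Finset.sum_add_distrib,
    sum_cnt _ _ _ (fun i _ => mem_Aset f i),
    sum_cnt _ _ _ (fun i _ => mem_Aset f i), card_Posn, card_Negn]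

lemma abs_le_PN (f : Zmn m n) (a : ℤ) :
    (wtF f a).natAbs ≤ cnt (Posn m n) f a + cnt (Negn m n) f a ∧
    2 ∣ (cnt (Posn m n) f a + cnt (Negn m n) f a - (wtF f a).natAbs) := by
  have h := wtF_apply f a
  omega

lemma atyp_eq_zero_iff (f : Zmn m n) :
    atyp f = 0 ↔ ∀ a, cnt (Posn m n) f a = 0 ∨ cnt (Negn m n) f a = 0 := by
  have hsplit : ∑ a ∈ Aset f, (cnt (Posn m n) f a + cnt (Negn m n) f a)
      = (∑ a ∈ Aset f, (wtF f a).natAbs)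
        + ∑ a ∈ Aset f, (cnt (Posn m n) f a + cnt (Negn m n) f a - (wtF f a).natAbs) := by
    rw [← Finset.sum_add_distrib]
    refine Finset.sum_congr rfl fun a _ => ?_
    have := abs_le_PN f a
    omega
  have hdvd : 2 ∣ ∑ a ∈ Aset f, (cnt (Posn m n) f a + cnt (Negn m n) f a - (wtF f a).natAbs) :=
    Finset.dvd_sum fun a _ => (abs_le_PN f a).2
  rw [sum_PN, sum_abs_Aset] at hsplit
  constructor
  · intro h0 a
    have h2 : m + n - (∑ a ∈ (wtF f).support, (wtF f a).natAbs) < 2 := by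
      by_contra hc
      push_neg at hc
      rw [atyp, Nat.div_eq_zero_iff] at h0
      omega
    have hzero : ∑ a ∈ Aset f, (cnt (Posn m n) f a + cnt (Negn m n) f a - (wtF f a).natAbs) = 0 := by
      omega
    by_cases ha : a ∈ Aset f
    · have := Finset.sum_eq_zero_iff.mp hzero a ha
      have h3 := wtF_apply f a
      omega
    · left
      rw [cnt, Finset.card_eq_zero, Finset.filter_eq_empty_iff]
      intro i _
      intro hfi
      exact ha (hfi ▸ mem_Aset f i)
  · intro hmin
    have heq : ∀ a ∈ Aset f, (wtF f a).natAbs = cnt (Posn m n) f a + cnt (Negn m n) f a := by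
      intro a _
      have h3 := wtF_apply f a
      have := hmin a
      omega
    have : ∑ a ∈ (wtF f).support, (wtF f a).natAbs = n + m := by
      rw [← sum_abs_Aset, Finset.sum_congr rfl heq, sum_PN]
    rw [atyp, this]
    omega

lemma cnt_congr (s : Finset (Idx m n)) {h₁ h₂ : Zmn m n}
    (hh : ∀ i ∈ s, h₁ i = h₂ i) (a : ℤ) : cnt s h₁ a = cnt s h₂ a := by
  unfold cnt
  congr 1
  apply Finset.filter_congr
  intro i hi
  simp [hh i hi]

lemma cnt_split (s : Finset (Idx m n)) (p : Idx m n → Prop) [DecidablePred p]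
    (h : Zmn m n) (a : ℤ) :
    cnt s h a = cnt (s.filter p) h a + cnt (s.filter (fun i => ¬ p i)) h a := by
  unfold cnt
  rw [Finset.filter_comm, Finset.filter_comm (fun i => ¬ p i)]
  exact (Finset.card_filter_add_card_filter_not (s := s.filter (fun i => h i = a)) p).symm

lemma counts_eq_of_wtF_eq {f g : Zmn m n} (hw : wtF g = wtF f)
    (hmin : ∀ a, cnt (Posn m n) f a = 0 ∨ cnt (Negn m n) f a = 0) :
    (∀ a, cnt (Posn m n) g a = cnt (Posn m n) f a)
      ∧ (∀ a, cnt (Negn m n) g a = cnt (Negn m n) f a) := by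
  set A : Finset ℤ := Finset.image f univ ∪ Finset.image g univ with hA
  have hfA : ∀ i : Idx m n, f i ∈ A := fun i => by
    simp only [hA, Finset.mem_union, Finset.mem_image]
    exact Or.inl ⟨i, Finset.mem_univ i, rfl⟩
  have hgA : ∀ i : Idx m n, g i ∈ A := fun i => by
    simp only [hA, Finset.mem_union, Finset.mem_image]
    exact Or.inr ⟨i, Finset.mem_univ i, rfl⟩
  have hpoint : ∀ a, (cnt (Posn m n) g a : ℤ) - cnt (Negn m n) g a
      = (cnt (Posn m n) f a : ℤ) - cnt (Negn m n) f a := by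
    intro a
    rw [← wtF_apply, ← wtF_apply, hw]
  have hPle : ∀ a, cnt (Posn m n) f a ≤ cnt (Posn m n) g a := by
    intro a
    have h1 := hpoint a
    have h2 := hmin a
    omega
  have hNle : ∀ a, cnt (Negn m n) f a ≤ cnt (Negn m n) g a := by
    intro a
    have h1 := hpoint a
    have h2 := hmin a
    omega
  have hPsum : ∑ a ∈ A, cnt (Posn m n) g a = ∑ a ∈ A, cnt (Posn m n) f a := by
    rw [sum_cnt _ _ _ (fun i _ => hgA i), sum_cnt _ _ _ (fun i _ => hfA i)]
  have hNsum : ∑ a ∈ A, cnt (Negn m n) g a = ∑ a ∈ A, cnt (Negn m n) f a := by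
    rw [sum_cnt _ _ _ (fun i _ => hgA i), sum_cnt _ _ _ (fun i _ => hfA i)]
  have hPeq := (Finset.sum_eq_sum_iff_of_le (fun a _ => hPle a)).mp hPsum.symm
  have hNeq := (Finset.sum_eq_sum_iff_of_le (fun a _ => hNle a)).mp hNsum.symm
  constructor
  · intro a
    by_cases ha : a ∈ A
    · exact (hPeq a ha).symm
    · have h1 : cnt (Posn m n) g a = 0 := by
        rw [cnt, Finset.card_eq_zero, Finset.filter_eq_empty_iff]
        exact fun i _ hfi => ha (hfi ▸ hgA i)
      have h2 : cnt (Posn m n) f a = 0 := by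
        rw [cnt, Finset.card_eq_zero, Finset.filter_eq_empty_iff]
        exact fun i _ hfi => ha (hfi ▸ hfA i)
      omega
  · intro a
    by_cases ha : a ∈ A
    · exact (hNeq a ha).symm
    · have h1 : cnt (Negn m n) g a = 0 := by
        rw [cnt, Finset.card_eq_zero, Finset.filter_eq_empty_iff]
        exact fun i _ hfi => ha (hfi ▸ hgA i)
      have h2 : cnt (Negn m n) f a = 0 := by
        rw [cnt, Finset.card_eq_zero, Finset.filter_eq_empty_iff]
        exact fun i _ hfi => ha (hfi ▸ hfA i)
      omega

lemma tail_sum_le {f g : Zmn m n} {j : Idx m n}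
    (h : domLE (wtFrom g j) (wtFrom f j)) :
    (∑ i : Idx m n, if (j:ℤ) ≤ (i:ℤ) then isgn i * f i else 0)
      ≤ ∑ i : Idx m n, if (j:ℤ) ≤ (i:ℤ) then isgn i * g i else 0 := by
  obtain ⟨c, hc⟩ := h
  have hD : Dpos (wtFrom f j - wtFrom g j) := ⟨c, hc⟩
  have := Tf_nonpos_of_Dpos hD
  rw [map_sub, Tf_wtFrom, Tf_wtFrom] at this
  omega

lemma tail_diff (f g : Zmn m n) (j : Idx m n)
    (hIH : ∀ i : Idx m n, (j:ℤ) < (i:ℤ) → g i = f i) :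
    (∑ i : Idx m n, if (j:ℤ) ≤ (i:ℤ) then isgn i * g i else 0)
      - (∑ i : Idx m n, if (j:ℤ) ≤ (i:ℤ) then isgn i * f i else 0)
      = isgn j * (g j - f j) := by
  rw [← Finset.sum_sub_distrib]
  rw [Finset.sum_eq_single j]
  · simp [mul_sub]
  · intro i _ hne
    by_cases hji : (j:ℤ) ≤ (i:ℤ)
    · have hlt : (j:ℤ) < (i:ℤ) := by
        rcases lt_or_eq_of_le hji with h | h
        · exact h
        · exact absurd (Subtype.ext h.symm) hne
      rw [hIH i hlt]
      simp [hji]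
    · simp [hji]
  · intro hj
    exact absurd (Finset.mem_univ j) hj



def Mj {m n : ℕ} (j : Idx m n) : ℕ :=
  if 0 < (j:ℤ) then ((n:ℤ) - j).toNat else ((n:ℤ) - j - 1).toNat

lemma idx_bounds {m n : ℕ} (i : Idx m n) :
    (-(m:ℤ) ≤ i ∧ (i:ℤ) ≤ -1) ∨ (1 ≤ (i:ℤ) ∧ (i:ℤ) ≤ n) := by
  have h := i.2
  simp only [IdxSet, Finset.mem_union, Finset.mem_Icc] at h
  omega

lemma Mj_lt {i j : Idx m n} (h : (j:ℤ) < (i:ℤ)) : Mj i < Mj j := by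
  have hi := idx_bounds i
  have hj := idx_bounds j
  unfold Mj
  split_ifs <;> omega

lemma eq_of_bruhat {f g : Zmn m n} (ht : atyp f = 0) (ha : antidominantZ f)
    (hb : bruhatLE g f) : g = f := by
  obtain ⟨hw, hdom⟩ := hb
  obtain ⟨hP, hN⟩ := counts_eq_of_wtF_eq hw ((atyp_eq_zero_iff f).mp ht)
  have key : ∀ t : ℕ, ∀ j : Idx m n, Mj j = t → g j = f j := by
    intro t
    induction t using Nat.strong_induction_on with
    | _ t IH =>
    intro j hjt
    have IH' : ∀ i : Idx m n, (j:ℤ) < (i:ℤ) → g i = f i := by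
      intro i hij
      exact IH (Mj i) (hjt ▸ Mj_lt hij) i rfl
    have hts := tail_sum_le (hdom j)
    have htd := tail_diff f g j IH'
    have hge : 0 ≤ isgn j * (g j - f j) := by omega
    rcases idx_cases j with hneg | hpos
    · -- j negative
      have hsgn : isgn j = -1 := by unfold isgn; split_ifs <;> omega
      rw [hsgn] at hge
      have hle : g j ≤ f j := by omega
      have hcnt_gt : cnt ((Negn m n).filter (fun i => (j:ℤ) < (i:ℤ))) g (g j)
          = cnt ((Negn m n).filter (fun i => (j:ℤ) < (i:ℤ))) f (g j) := by
        apply cnt_congr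
        intro i hi
        rw [Finset.mem_filter] at hi
        exact IH' i hi.2
      have hsplitg := cnt_split (Negn m n) (fun i => (j:ℤ) < (i:ℤ)) g (g j)
      have hsplitf := cnt_split (Negn m n) (fun i => (j:ℤ) < (i:ℤ)) f (g j)
      have hle_cnt : 0 < cnt ((Negn m n).filter (fun i => ¬ (j:ℤ) < (i:ℤ))) g (g j) := by
        rw [cnt, Finset.card_pos]
        refine ⟨j, ?_⟩
        simp [Negn, hneg]
      have hNj := hN (g j)
      have hpos_f : 0 < cnt ((Negn m n).filter (fun i => ¬ (j:ℤ) < (i:ℤ))) f (g j) := by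
        omega
      rw [cnt, Finset.card_pos] at hpos_f
      obtain ⟨i, hi⟩ := hpos_f
      simp only [Finset.mem_filter, Negn, Finset.mem_univ, true_and, not_lt] at hi
      have hij : (i:ℤ) ≤ (j:ℤ) := hi.1.2
      have hji := (ha i j hij).1 hneg
      omega
    · -- j positive
      have hsgn : isgn j = 1 := by unfold isgn; split_ifs <;> omega
      rw [hsgn] at hge
      have hle : f j ≤ g j := by omega
      have hcnt_gt : cnt ((Posn m n).filter (fun i => (j:ℤ) < (i:ℤ))) g (g j)
          = cnt ((Posn m n).filter (fun i => (j:ℤ) < (i:ℤ))) f (g j) := by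
        apply cnt_congr
        intro i hi
        rw [Finset.mem_filter] at hi
        exact IH' i hi.2
      have hsplitg := cnt_split (Posn m n) (fun i => (j:ℤ) < (i:ℤ)) g (g j)
      have hsplitf := cnt_split (Posn m n) (fun i => (j:ℤ) < (i:ℤ)) f (g j)
      have hle_cnt : 0 < cnt ((Posn m n).filter (fun i => ¬ (j:ℤ) < (i:ℤ))) g (g j) := by
        rw [cnt, Finset.card_pos]
        refine ⟨j, ?_⟩
        simp [Posn, hpos]
      have hPj := hP (g j)
      have hpos_f : 0 < cnt ((Posn m n).filter (fun i => ¬ (j:ℤ) < (i:ℤ))) f (g j) := by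
        omega
      rw [cnt, Finset.card_pos] at hpos_f
      obtain ⟨i, hi⟩ := hpos_f
      simp only [Finset.mem_filter, Posn, Finset.mem_univ, true_and, not_lt] at hi
      have hij : (i:ℤ) ≤ (j:ℤ) := hi.1.2
      have hji := (ha i j hij).2 hi.1.1
      omega
  funext j
  exact key (Mj j) j rfl


lemma wtF_sub' (f g : Zmn m n) :
    wtF g - wtF f
      = ∑ i : Idx m n, isgn i • (Finsupp.single (g i) 1 - Finsupp.single (f i) (1:ℤ)) := by
  rw [wtF, wtF, ← Finset.sum_sub_distrib]
  exact Finset.sum_congr rfl fun i _ => (smul_sub _ _ _).symm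

lemma wtFrom_sub' (f g : Zmn m n) (j : Idx m n) :
    wtFrom g j - wtFrom f j
      = ∑ i : Idx m n, if (j:ℤ) ≤ (i:ℤ) then
          isgn i • (Finsupp.single (g i) 1 - Finsupp.single (f i) (1:ℤ)) else 0 := by
  rw [wtFrom, wtFrom, ← Finset.sum_sub_distrib]
  refine Finset.sum_congr rfl fun i _ => ?_
  split_ifs
  · exact (smul_sub _ _ _).symm
  · simp

lemma sum_pair_support {β : Type*} [AddCommGroup β] (h : Idx m n → β) (p q : Idx m n)
    (hpq : p ≠ q) (h0 : ∀ i, i ≠ p → i ≠ q → h i = 0) :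
    ∑ i : Idx m n, h i = h p + h q := by
  rw [← Finset.sum_pair hpq]
  refine (Finset.sum_subset (Finset.subset_univ _) ?_).symm
  intro i _ hi
  simp only [Finset.mem_insert, Finset.mem_singleton, not_or] at hi
  exact h0 i hi.1 hi.2

lemma swap_sgn (i₀ j₀ : Idx m n) (hsg : isgn i₀ = isgn j₀) (k : Idx m n) :
    isgn (Equiv.swap i₀ j₀ k) = isgn k := by
  rcases eq_or_ne k i₀ with rfl | h1
  · rw [Equiv.swap_apply_left]; exact hsg.symm
  rcases eq_or_ne k j₀ with rfl | h2
  · rw [Equiv.swap_apply_right]; exact hsg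
  · rw [Equiv.swap_apply_of_ne_of_ne h1 h2]

lemma bruhat_swap (f : Zmn m n) (i₀ j₀ : Idx m n) (hlt : (i₀:ℤ) < (j₀:ℤ))
    (hsg : isgn i₀ = isgn j₀)
    (hD : Dpos (isgn j₀ • (Finsupp.single (f j₀) 1 - Finsupp.single (f i₀) (1:ℤ)))) :
    bruhatLE (fun k => f (Equiv.swap i₀ j₀ k)) f := by
  have hne : i₀ ≠ j₀ := fun h => by rw [h] at hlt; omega
  set g : Zmn m n := fun k => f (Equiv.swap i₀ j₀ k) with hg
  constructor
  · rw [wtF, wtF]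
    refine Fintype.sum_equiv (Equiv.swap i₀ j₀) _ _ fun k => ?_
    rw [swap_sgn i₀ j₀ hsg k]
  · intro k
    show Dpos (wtFrom f k - wtFrom g k)
    rw [wtFrom_sub' g f k]
    rw [sum_pair_support _ i₀ j₀ hne ?_]
    · have hgi : g i₀ = f j₀ := by rw [hg]; simp [Equiv.swap_apply_left]
      have hgj : g j₀ = f i₀ := by rw [hg]; simp [Equiv.swap_apply_right]
      rw [hgi, hgj]
      by_cases h1 : (k:ℤ) ≤ (i₀:ℤ)
      · have h2 : (k:ℤ) ≤ (j₀:ℤ) := by omega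
        rw [if_pos h1, if_pos h2, hsg]
        have : isgn j₀ • (Finsupp.single (f i₀) 1 - Finsupp.single (f j₀) (1:ℤ))
            + isgn j₀ • (Finsupp.single (f j₀) 1 - Finsupp.single (f i₀) (1:ℤ)) = 0 := by
          rw [smul_sub, smul_sub]; abel
        rw [this]
        exact Dpos_zero
      · rw [if_neg h1]
        by_cases h2 : (k:ℤ) ≤ (j₀:ℤ)
        · rw [if_pos h2, zero_add]
          exact hD
        · rw [if_neg h2, zero_add]
          exact Dpos_zero
    · intro i hi1 hi2
      have : g i = f i := by rw [hg]; simp [Equiv.swap_apply_of_ne_of_ne hi1 hi2]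
      rw [this]
      split_ifs <;> simp

lemma bruhat_atyp (f : Zmn m n) (p q : Idx m n) (hp : 0 < (p:ℤ)) (hq : (q:ℤ) < 0)
    (hfa : f p = f q) :
    bruhatLE (fun k => if k = p then f p + 1 else if k = q then f q + 1 else f k) f := by
  have hpq : p ≠ q := fun h => by rw [h] at hp; omega
  set g : Zmn m n := fun k => if k = p then f p + 1 else if k = q then f q + 1 else f k with hg
  have hgp : g p = f p + 1 := by rw [hg]; simp
  have hgq : g q = f q + 1 := by rw [hg]; simp [hpq.symm]
  have hgo : ∀ i, i ≠ p → i ≠ q → g i = f i := by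
    intro i h1 h2; rw [hg]; simp [h1, h2]
  have hsp : isgn p = 1 := by unfold isgn; split_ifs <;> omega
  have hsq : isgn q = -1 := by unfold isgn; split_ifs <;> omega
  constructor
  · rw [← sub_eq_zero, wtF_sub' f g]
    rw [sum_pair_support _ p q hpq ?_]
    · rw [hgp, hgq, hfa, hsp, hsq]
      rw [one_smul, neg_one_smul]
      abel
    · intro i h1 h2
      rw [hgo i h1 h2]
      simp
  · intro k
    show Dpos (wtFrom f k - wtFrom g k)
    rw [wtFrom_sub' g f k]
    rw [sum_pair_support _ p q hpq ?_]
    · rw [hgp, hgq, hfa, hsp, hsq]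
      by_cases h2 : (k:ℤ) ≤ (q:ℤ)
      · have h1 : (k:ℤ) ≤ (p:ℤ) := by omega
        rw [if_pos h1, if_pos h2]
        rw [one_smul, neg_one_smul]
        have : (Finsupp.single (f q) 1 - Finsupp.single (f q + 1) (1:ℤ))
            + -(Finsupp.single (f q) 1 - Finsupp.single (f q + 1) (1:ℤ)) = 0 := by abel
        rw [this]
        exact Dpos_zero
      · rw [if_neg h2]
        by_cases h1 : (k:ℤ) ≤ (p:ℤ)
        · rw [if_pos h1, add_zero, one_smul]
          exact Dpos_single_sub (by omega)
        · rw [if_neg h1, add_zero]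
          exact Dpos_zero
    · intro i h1 h2
      rw [hgo i h1 h2]
      split_ifs <;> simp

lemma exists_pair_of_not_typical (f : Zmn m n) (h : ¬ typicalZ f) :
    ∃ p q : Idx m n, 0 < (p:ℤ) ∧ (q:ℤ) < 0 ∧ f p = f q := by
  rw [typicalZ, atyp_eq_zero_iff] at h
  push_neg at h
  obtain ⟨a, h1, h2⟩ := h
  have hp : 0 < cnt (Posn m n) f a := Nat.pos_of_ne_zero h1
  have hq : 0 < cnt (Negn m n) f a := Nat.pos_of_ne_zero h2
  rw [cnt, Finset.card_pos] at hp hq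
  obtain ⟨p, hpm⟩ := hp
  obtain ⟨q, hqm⟩ := hq
  simp only [Finset.mem_filter, Posn, Negn, Finset.mem_univ, true_and] at hpm hqm
  exact ⟨p, q, hpm.1, hqm.1, hpm.2.trans hqm.2.symm⟩


end AuxMin

/-- `f` is minimal for the Bruhat order iff `f` is typical and antidominant. -/
theorem minimal_iff_typical_antidominant {m n : ℕ} (f : Zmn m n) :
    (∀ g : Zmn m n, bruhatLE g f → g = f) ↔ (typicalZ f ∧ antidominantZ f) := by
  constructor
  · intro hmin
    have hty : typicalZ f := by
      by_contra hty
      obtain ⟨p, q, hp, hq, hfa⟩ := exists_pair_of_not_typical f hty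
      have heq := hmin _ (bruhat_atyp f p q hp hq hfa)
      have h2 := congrFun heq p
      simp at h2
    refine ⟨hty, ?_⟩
    intro i j hij
    constructor
    · intro hj
      by_contra hlt
      push_neg at hlt
      have hltc : (i:ℤ) < (j:ℤ) := by
        rcases lt_or_eq_of_le hij with h | h
        · exact h
        · exact absurd (congrArg f (Subtype.ext h)) (by omega)
      have hsg : isgn i = isgn j := by unfold isgn; split_ifs <;> omega
      have hsj : isgn j = -1 := by unfold isgn; split_ifs <;> omega
      have hD : Dpos (isgn j • (Finsupp.single (f j) 1 - Finsupp.single (f i) (1:ℤ))) := by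
        rw [hsj, neg_one_smul]
        have hrw : -(Finsupp.single (f j) 1 - Finsupp.single (f i) (1:ℤ))
            = Finsupp.single (f i) 1 - Finsupp.single (f j) 1 := by abel
        rw [hrw]
        exact Dpos_single_sub (le_of_lt hlt)
      have heq := hmin _ (bruhat_swap f i j hltc hsg hD)
      have h2 := congrFun heq j
      simp only [Equiv.swap_apply_right] at h2
      omega
    · intro hi
      by_contra hlt
      push_neg at hlt
      have hltc : (i:ℤ) < (j:ℤ) := by
        rcases lt_or_eq_of_le hij with h | h
        · exact h
        · exact absurd (congrArg f (Subtype.ext h)) (by omega)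
      have hj : 0 < (j:ℤ) := by omega
      have hsg : isgn i = isgn j := by unfold isgn; split_ifs <;> omega
      have hsj : isgn j = 1 := by unfold isgn; split_ifs <;> omega
      have hD : Dpos (isgn j • (Finsupp.single (f j) 1 - Finsupp.single (f i) (1:ℤ))) := by
        rw [hsj, one_smul]
        exact Dpos_single_sub (le_of_lt hlt)
      have heq := hmin _ (bruhat_swap f i j hltc hsg hD)
      have h2 := congrFun heq j
      simp only [Equiv.swap_apply_right] at h2
      omega
  · rintro ⟨hty, had⟩ g hb
    exact eq_of_bruhat hty had hb
end

section
/- Let (I, ⪯) be a partially ordered set such that {j ∈ I : j ⪯ i} is finite for every i ∈ I. Let M be a ℚ(q)-vector space with basis {u_i}_{i∈I}, and let bar : M → M be an antilinear involution such that for each i ∈ I, bar(u_i) − u_i is a ℤ[q,q⁻¹]-linear combination of the elements u_j with j ≺ i. Then there exist unique families {x_i}_{i∈I} and {y_i}_{i∈I} in M such that for every i: bar(x_i) = x_i, bar(y_i) = y_i, x_i − u_i lies in the ℤ-span of {q^k u_j : j ∈ I, k ≥ 1}, and y_i − u_i lies in the ℤ-span of {q^{−k} u_j : j ∈ I, k ≥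 1}. Moreover {x_i}_{i∈I} and {y_i}_{i∈I} are bases of M, and the coefficient of u_j in x_i (respectively in y_i) is zero unless j ⪯ i. -/
noncomputable section

/-- The field `ℚ(q)` of rational functions. -/
abbrev Fq := RatFunc ℚ

/-- The subset `ℤ[q,q⁻¹] ⊆ ℚ(q)` of Laurent polynomials with integer coefficients. -/
def LaurentZ : Set Fq :=
  {c | ∃ p : ℤ →₀ ℤ, c = p.sum fun k a => (a : Fq) * (RatFunc.X : Fq) ^ k}

/-- The subset `qℤ[q] ⊆ ℚ(q)`: integer polynomials with zero constant term. -/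
def qPosZ : Set Fq :=
  {c | ∃ p : ℕ →₀ ℤ, c = p.sum fun k a => (a : Fq) * (RatFunc.X : Fq) ^ (k + 1)}

/-- The subset `q⁻¹ℤ[q⁻¹] ⊆ ℚ(q)`. -/
def qNegZ : Set Fq :=
  {c | ∃ p : ℕ →₀ ℤ, c = p.sum fun k a => (a : Fq) * (RatFunc.X : Fq) ^ (-(k : ℤ) - 1)}

namespace Lus

def L (a : ℤ →₀ ℤ) : Fq := a.sum fun k c => (c : Fq) * (RatFunc.X : Fq) ^ k

lemma X_ne_zero : (RatFunc.X : Fq) ≠ 0 := RatFunc.X_ne_zero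

lemma L_add (a b : ℤ →₀ ℤ) : L (a + b) = L a + L b := by
  classical
  refine Finsupp.sum_add_index ?_ ?_ <;> intros <;> push_cast <;> ring

lemma L_zero : L 0 = 0 := Finsupp.sum_zero_index

lemma L_neg (a : ℤ →₀ ℤ) : L (-a) = - L a := by
  have := L_add (-a) a
  simp only [neg_add_cancel, L_zero] at this
  exact eq_neg_of_add_eq_zero_left this.symm

lemma L_eq_zero {a : ℤ →₀ ℤ} (h : L a = 0) : a = 0 := by
  classical
  set N : ℕ := a.support.sup (fun k => (-k).toNat) with hN
  have hge : ∀ k ∈ a.support, (0:ℤ) ≤ k + N := by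
    intro k hk
    have : (-k).toNat ≤ N := Finset.le_sup (f := fun k => (-k).toNat) hk
    omega
  set P : Polynomial ℚ :=
    a.sum (fun k c => Polynomial.C (c:ℚ) * Polynomial.X ^ (k + (N:ℤ)).toNat) with hP
  have hmap : algebraMap (Polynomial ℚ) Fq P = L a * (RatFunc.X : Fq) ^ (N:ℕ) := by
    rw [hP, Finsupp.sum, map_sum, L, Finsupp.sum, Finset.sum_mul]
    refine Finset.sum_congr rfl fun k hk => ?_
    rw [map_mul, map_pow, RatFunc.algebraMap_X]
    have h1 : algebraMap (Polynomial ℚ) Fq (Polynomial.C ((a k : ℚ))) = ((a k : ℤ) : Fq) := by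
      rw [RatFunc.algebraMap_C]
      exact_mod_cast (map_intCast (RatFunc.C (K := ℚ)) (a k))
    rw [h1]
    have h2 : (RatFunc.X : Fq) ^ ((k + (N:ℤ)).toNat) = (RatFunc.X : Fq) ^ (k + (N:ℤ)) := by
      rw [← zpow_natCast, Int.toNat_of_nonneg (hge k hk)]
    rw [h2, zpow_add₀ X_ne_zero, zpow_natCast, mul_assoc]
  have hP0 : P = 0 := by
    apply RatFunc.algebraMap_injective ℚ
    rw [hmap, h, zero_mul, map_zero]
  ext k₀
  simp only [Finsupp.coe_zero, Pi.zero_apply]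
  by_contra hk₀
  have hk₀s : k₀ ∈ a.support := Finsupp.mem_support_iff.2 hk₀
  have hc := congrArg (fun p => Polynomial.coeff p ((k₀ + (N:ℤ)).toNat)) hP0
  simp only [Polynomial.coeff_zero] at hc
  rw [hP, Finsupp.sum, Polynomial.finset_sum_coeff] at hc
  rw [Finset.sum_eq_single k₀] at hc
  · rw [Polynomial.coeff_C_mul, Polynomial.coeff_X_pow, if_pos rfl, mul_one] at hc
    exact hk₀ (by exact_mod_cast hc)
  · intro k hk hne
    rw [Polynomial.coeff_C_mul, Polynomial.coeff_X_pow, if_neg, mul_zero]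
    intro heq
    have h1 := hge k hk
    have h2 := hge k₀ hk₀s
    omega
  · intro h; exact absurd hk₀s h
  
lemma L_injective : Function.Injective L := by
  intro x y h
  have : L (x + -y) = 0 := by rw [L_add, L_neg, h]; ring
  have := L_eq_zero this
  have : x = y := by
    have h2 : x + -y + y = 0 + y := by rw [this]
    simpa using h2
  exact this

def negEmb : ℤ ↪ ℤ := ⟨Neg.neg, neg_injective⟩

def posEmb : ℕ ↪ ℤ := ⟨fun k => (k : ℤ) + 1, fun a b h => by dsimp only at h; omega⟩

def nnegEmb : ℕ ↪ ℤ := ⟨fun k => -(k : ℤ) - 1, fun a b h => by dsimp only at h; omega⟩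

lemma bar_zpow (bar : Fq →+* Fq) (hX : bar RatFunc.X = (RatFunc.X : Fq)⁻¹) (k : ℤ) :
    bar ((RatFunc.X : Fq) ^ k) = (RatFunc.X : Fq) ^ (-k) := by
  rw [map_zpow₀, hX, inv_zpow, ← zpow_neg]

lemma bar_L (bar : Fq →+* Fq) (hX : bar RatFunc.X = (RatFunc.X : Fq)⁻¹) (a : ℤ →₀ ℤ) :
    bar (L a) = L (a.embDomain negEmb) := by
  rw [L, map_finsuppSum, L, Finsupp.sum_embDomain]
  refine Finsupp.sum_congr fun k hk => ?_
  rw [map_mul, map_intCast, bar_zpow bar hX]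
  rfl

def ZL : Submodule ℤ Fq := Submodule.span ℤ (Set.range fun k : ℤ => (RatFunc.X : Fq) ^ k)

def Pos : Submodule ℤ Fq :=
  Submodule.span ℤ (Set.range fun n : ℕ => (RatFunc.X : Fq) ^ (n + 1))

def Neg : Submodule ℤ Fq :=
  Submodule.span ℤ (Set.range fun n : ℕ => (RatFunc.X : Fq) ^ (-(n : ℤ) - 1))

lemma LaurentZ_eq : LaurentZ = ↑ZL := by
  ext c
  rw [SetLike.mem_coe, ZL, Finsupp.mem_span_range_iff_exists_finsupp]
  simp only [LaurentZ, Set.mem_setOf_eq, zsmul_eq_mul, eq_comm]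

lemma qPosZ_eq : qPosZ = ↑Pos := by
  ext c
  rw [SetLike.mem_coe, Pos, Finsupp.mem_span_range_iff_exists_finsupp]
  simp only [qPosZ, Set.mem_setOf_eq, zsmul_eq_mul, eq_comm]

lemma qNegZ_eq : qNegZ = ↑Neg := by
  ext c
  rw [SetLike.mem_coe, Neg, Finsupp.mem_span_range_iff_exists_finsupp]
  simp only [qNegZ, Set.mem_setOf_eq, zsmul_eq_mul, eq_comm]

lemma zpow_mem_ZL (k : ℤ) : (RatFunc.X : Fq) ^ k ∈ ZL :=
  Submodule.subset_span ⟨k, rfl⟩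

lemma zpow_mem_Pos {k : ℤ} (hk : 0 < k) : (RatFunc.X : Fq) ^ k ∈ Pos := by
  have : (RatFunc.X : Fq) ^ k = (RatFunc.X : Fq) ^ ((k.toNat - 1) + 1) := by
    rw [← zpow_natCast]
    congr 1
    omega
  rw [this]
  exact Submodule.subset_span ⟨k.toNat - 1, rfl⟩

lemma zpow_mem_Neg {k : ℤ} (hk : k < 0) : (RatFunc.X : Fq) ^ k ∈ Neg := by
  have : (RatFunc.X : Fq) ^ k = (RatFunc.X : Fq) ^ (-((-k-1).toNat : ℤ) - 1) := by
    congr 1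
    omega
  rw [this]
  exact Submodule.subset_span ⟨(-k-1).toNat, rfl⟩

lemma L_mem_ZL (a : ℤ →₀ ℤ) : L a ∈ ZL := by
  refine Submodule.sum_mem _ fun k _ => ?_
  dsimp only
  rw [show ((a k : Fq) * (RatFunc.X : Fq) ^ k) = (a k) • (RatFunc.X : Fq) ^ k from
    (zsmul_eq_mul _ _).symm]
  exact Submodule.smul_mem _ _ (zpow_mem_ZL k)

lemma L_mem_Pos {a : ℤ →₀ ℤ} (h : ∀ k ∈ a.support, 0 < k) : L a ∈ Pos := by
  refine Submodule.sum_mem _ fun k hk => ?_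
  dsimp only
  rw [show ((a k : Fq) * (RatFunc.X : Fq) ^ k) = (a k) • (RatFunc.X : Fq) ^ k from
    (zsmul_eq_mul _ _).symm]
  exact Submodule.smul_mem _ _ (zpow_mem_Pos (h k hk))

lemma L_mem_Neg {a : ℤ →₀ ℤ} (h : ∀ k ∈ a.support, k < 0) : L a ∈ Neg := by
  refine Submodule.sum_mem _ fun k hk => ?_
  dsimp only
  rw [show ((a k : Fq) * (RatFunc.X : Fq) ^ k) = (a k) • (RatFunc.X : Fq) ^ k from
    (zsmul_eq_mul _ _).symm]
  exact Submodule.smul_mem _ _ (zpow_mem_Neg (h k hk))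

lemma mem_ZL_iff {c : Fq} : c ∈ ZL ↔ ∃ a : ℤ →₀ ℤ, c = L a := by
  constructor
  · intro h
    have : c ∈ LaurentZ := by rw [LaurentZ_eq]; exact h
    exact this
  · rintro ⟨a, rfl⟩; exact L_mem_ZL a

lemma mem_Pos_iff {c : Fq} : c ∈ Pos ↔ ∃ a : ℤ →₀ ℤ, (∀ k ∈ a.support, 0 < k) ∧ c = L a := by
  constructor
  · intro h
    have : c ∈ qPosZ := by rw [qPosZ_eq]; exact h
    obtain ⟨p, rfl⟩ := this
    refine ⟨p.embDomain posEmb, ?_, ?_⟩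
    · intro k hk
      rw [Finsupp.support_embDomain, Finset.mem_map] at hk
      obtain ⟨n, _, rfl⟩ := hk
      show (0:ℤ) < (n:ℤ) + 1
      omega
    · rw [L, Finsupp.sum_embDomain]
      refine Finsupp.sum_congr fun n _ => ?_
      have : (RatFunc.X : Fq) ^ (posEmb n) = (RatFunc.X : Fq) ^ (n + 1) := by
        rw [show posEmb n = (((n + 1 : ℕ)) : ℤ) by exact (Nat.cast_succ n).symm, zpow_natCast]
      rw [this]
  · rintro ⟨a, ha, rfl⟩; exact L_mem_Pos ha

lemma mem_Neg_iff {c : Fq} : c ∈ Neg ↔ ∃ a : ℤ →₀ ℤ, (∀ k ∈ a.support, k < 0) ∧ c = L a := by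
  constructor
  · intro h
    have : c ∈ qNegZ := by rw [qNegZ_eq]; exact h
    obtain ⟨p, rfl⟩ := this
    refine ⟨p.embDomain nnegEmb, ?_, ?_⟩
    · intro k hk
      rw [Finsupp.support_embDomain, Finset.mem_map] at hk
      obtain ⟨n, _, rfl⟩ := hk
      show -(n:ℤ) - 1 < 0
      omega
    · rw [L, Finsupp.sum_embDomain]
      rfl
  · rintro ⟨a, ha, rfl⟩; exact L_mem_Neg ha

lemma Pos_le_ZL : Pos ≤ ZL := by
  rw [Pos, Submodule.span_le]
  rintro _ ⟨n, rfl⟩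
  dsimp only
  simp only [SetLike.mem_coe]
  rw [show (RatFunc.X : Fq) ^ (n + 1) = (RatFunc.X : Fq) ^ ((n + 1 : ℕ) : ℤ) from
    (zpow_natCast _ _).symm]
  exact zpow_mem_ZL _

lemma Neg_le_ZL : Neg ≤ ZL := by
  rw [Neg, Submodule.span_le]
  rintro _ ⟨n, rfl⟩
  dsimp only
  simp only [SetLike.mem_coe]
  exact zpow_mem_ZL _

lemma mul_zpow_mem_ZL (k : ℤ) {x : Fq} (hx : x ∈ ZL) : x * (RatFunc.X : Fq) ^ k ∈ ZL := by
  induction hx using Submodule.span_induction with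
  | mem z hz =>
    obtain ⟨j, rfl⟩ := hz
    rw [← zpow_add₀ X_ne_zero]
    exact zpow_mem_ZL _
  | zero => rw [zero_mul]; exact Submodule.zero_mem _
  | add u v _ _ hu hv => rw [add_mul]; exact Submodule.add_mem _ hu hv
  | smul c u _ hu => rw [smul_mul_assoc]; exact Submodule.smul_mem _ _ hu

lemma mul_mem_ZL {x y : Fq} (hx : x ∈ ZL) (hy : y ∈ ZL) : x * y ∈ ZL := by
  induction hy using Submodule.span_induction with
  | mem z hz => obtain ⟨j, rfl⟩ := hz; exact mul_zpow_mem_ZL _ hx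
  | zero => rw [mul_zero]; exact Submodule.zero_mem _
  | add u v _ _ hu hv => rw [mul_add]; exact Submodule.add_mem _ hu hv
  | smul c u _ hu => rw [mul_smul_comm]; exact Submodule.smul_mem _ _ hu

lemma mul_pow_mem_Pos (n : ℕ) {x : Fq} (hx : x ∈ Pos) :
    x * (RatFunc.X : Fq) ^ (n + 1) ∈ Pos := by
  induction hx using Submodule.span_induction with
  | mem z hz =>
    obtain ⟨m, rfl⟩ := hz
    dsimp only
    rw [← pow_add, show (m + 1) + (n + 1) = (m + n + 1) + 1 by omega]
    exact Submodule.subset_span ⟨m + n + 1, rfl⟩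
  | zero => rw [zero_mul]; exact Submodule.zero_mem _
  | add u v _ _ hu hv => rw [add_mul]; exact Submodule.add_mem _ hu hv
  | smul c u _ hu => rw [smul_mul_assoc]; exact Submodule.smul_mem _ _ hu

lemma mul_mem_Pos {x y : Fq} (hx : x ∈ Pos) (hy : y ∈ Pos) : x * y ∈ Pos := by
  induction hy using Submodule.span_induction with
  | mem z hz => obtain ⟨m, rfl⟩ := hz; exact mul_pow_mem_Pos _ hx
  | zero => rw [mul_zero]; exact Submodule.zero_mem _
  | add u v _ _ hu hv => rw [mul_add]; exact Submodule.add_mem _ hu hv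
  | smul c u _ hu => rw [mul_smul_comm]; exact Submodule.smul_mem _ _ hu

lemma mul_zpow_mem_Neg (n : ℕ) {x : Fq} (hx : x ∈ Neg) :
    x * (RatFunc.X : Fq) ^ (-(n : ℤ) - 1) ∈ Neg := by
  induction hx using Submodule.span_induction with
  | mem z hz =>
    obtain ⟨m, rfl⟩ := hz
    dsimp only
    rw [← zpow_add₀ X_ne_zero]
    exact zpow_mem_Neg (by omega)
  | zero => rw [zero_mul]; exact Submodule.zero_mem _
  | add u v _ _ hu hv => rw [add_mul]; exact Submodule.add_mem _ hu hv
  | smul c u _ hu => rw [smul_mul_assoc]; exact Submodule.smul_mem _ _ hu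

lemma mul_mem_Neg {x y : Fq} (hx : x ∈ Neg) (hy : y ∈ Neg) : x * y ∈ Neg := by
  induction hy using Submodule.span_induction with
  | mem z hz => obtain ⟨m, rfl⟩ := hz; exact mul_zpow_mem_Neg _ hx
  | zero => rw [mul_zero]; exact Submodule.zero_mem _
  | add u v _ _ hu hv => rw [mul_add]; exact Submodule.add_mem _ hu hv
  | smul c u _ hu => rw [mul_smul_comm]; exact Submodule.smul_mem _ _ hu

section Bar

variable {bar : Fq →+* Fq} (hX : bar RatFunc.X = (RatFunc.X : Fq)⁻¹)

include hX

lemma anti_coeff {a : ℤ →₀ ℤ} (h : bar (L a) = - L a) : ∀ k, a (-k) = - a k := by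
  have h2 : L (a.embDomain negEmb) = L (-a) := by rw [← bar_L bar hX, h, L_neg]
  have h3 := L_injective h2
  intro k
  have h4 := congrArg (fun f : ℤ →₀ ℤ => f (-k)) h3
  have h5 : (a.embDomain negEmb) (-k) = a k := Finsupp.embDomain_apply_self negEmb a k
  rw [h5, Finsupp.neg_apply] at h4
  omega

lemma solve_pos {f : Fq} (hf : f ∈ ZL) (h : bar f = -f) :
    ∃ p ∈ Pos, p - bar p = f := by
  obtain ⟨a, rfl⟩ := mem_ZL_iff.1 hf
  have hanti := anti_coeff hX h
  have h0 : a 0 = 0 := by have := hanti 0; rw [neg_zero] at this; omega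
  refine ⟨L (a.filter (fun k => 0 < k)), L_mem_Pos ?_, ?_⟩
  · intro k hk; rw [Finsupp.support_filter, Finset.mem_filter] at hk; exact hk.2
  · rw [bar_L bar hX]
    have key : (a.filter (fun k => 0 < k)).embDomain negEmb
        = -(a.filter (fun k => k < 0)) := by
      ext k
      have e1 : ((a.filter (fun k => 0 < k)).embDomain negEmb) k
          = (a.filter (fun k => 0 < k)) (-k) := by
        have e2 := Finsupp.embDomain_apply_self negEmb (a.filter (fun k => 0 < k)) (-k)
        have e3 : negEmb (-k) = k := neg_neg k
        rw [e3] at e2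
        exact e2
      rw [e1, Finsupp.neg_apply, Finsupp.filter_apply, Finsupp.filter_apply]
      rcases lt_trichotomy k 0 with hk | hk | hk
      · rw [if_pos (by omega : (0:ℤ) < -k), if_pos hk]; exact hanti k
      · subst hk; rw [if_neg (by omega), if_neg (by omega)]; omega
      · rw [if_neg (by omega : ¬ (0:ℤ) < -k), if_neg (by omega : ¬ k < 0)]; omega
    rw [key, L_neg, sub_neg_eq_add, ← L_add]
    congr 1
    ext k
    rw [Finsupp.add_apply, Finsupp.filter_apply, Finsupp.filter_apply]
    rcases lt_trichotomy k 0 with hk | hk | hk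
    · rw [if_neg (by omega), if_pos hk, zero_add]
    · subst hk; rw [if_neg (by omega : ¬ (0:ℤ) < 0)]; omega
    · rw [if_pos hk, if_neg (by omega), add_zero]

lemma solve_neg {f : Fq} (hf : f ∈ ZL) (h : bar f = -f) :
    ∃ p ∈ Neg, p - bar p = f := by
  obtain ⟨a, rfl⟩ := mem_ZL_iff.1 hf
  have hanti := anti_coeff hX h
  have h0 : a 0 = 0 := by have := hanti 0; rw [neg_zero] at this; omega
  refine ⟨L (a.filter (fun k => k < 0)), L_mem_Neg ?_, ?_⟩
  · intro k hk; rw [Finsupp.support_filter, Finset.mem_filter] at hk; exact hk.2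
  · rw [bar_L bar hX]
    have key : (a.filter (fun k => k < 0)).embDomain negEmb
        = -(a.filter (fun k => 0 < k)) := by
      ext k
      have e1 : ((a.filter (fun k => k < 0)).embDomain negEmb) k
          = (a.filter (fun k => k < 0)) (-k) := by
        have e2 := Finsupp.embDomain_apply_self negEmb (a.filter (fun k => k < 0)) (-k)
        have e3 : negEmb (-k) = k := neg_neg k
        rw [e3] at e2
        exact e2
      rw [e1, Finsupp.neg_apply, Finsupp.filter_apply, Finsupp.filter_apply]
      rcases lt_trichotomy k 0 with hk | hk | hk
      · rw [if_neg (by omega : ¬ -k < (0:ℤ)), if_neg (by omega : ¬ (0:ℤ) < k)]; omega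
      · subst hk; rw [if_neg (by omega), if_neg (by omega)]; omega
      · rw [if_pos (by omega : -k < (0:ℤ)), if_pos hk]; exact hanti k
    rw [key, L_neg, sub_neg_eq_add, ← L_add]
    congr 1
    ext k
    rw [Finsupp.add_apply, Finsupp.filter_apply, Finsupp.filter_apply]
    rcases lt_trichotomy k 0 with hk | hk | hk
    · rw [if_pos hk, if_neg (by omega), add_zero]
    · subst hk; rw [if_neg (by omega : ¬ (0:ℤ) < 0)]; omega
    · rw [if_neg (by omega), if_pos hk, zero_add]

lemma sym_pos {c : Fq} (hc : c ∈ Pos) (h : bar c = c) : c = 0 := by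
  obtain ⟨a, hpos, rfl⟩ := mem_Pos_iff.1 hc
  have h2 : L (a.embDomain negEmb) = L a := by rw [← bar_L bar hX, h]
  have h3 := L_injective h2
  suffices ha : a = 0 by rw [ha, L_zero]
  ext k
  rw [Finsupp.coe_zero, Pi.zero_apply]
  by_contra hne
  have hk : 0 < k := hpos k (Finsupp.mem_support_iff.2 hne)
  have h4 := congrArg (fun f : ℤ →₀ ℤ => f (-k)) h3
  have h5 : (a.embDomain negEmb) (-k) = a k := Finsupp.embDomain_apply_self negEmb a k
  rw [h5] at h4
  have h6 : 0 < -k := hpos (-k) (Finsupp.mem_support_iff.2 (by rw [← h4]; exact hne))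
  omega

lemma sym_neg {c : Fq} (hc : c ∈ Neg) (h : bar c = c) : c = 0 := by
  obtain ⟨a, hpos, rfl⟩ := mem_Neg_iff.1 hc
  have h2 : L (a.embDomain negEmb) = L a := by rw [← bar_L bar hX, h]
  have h3 := L_injective h2
  suffices ha : a = 0 by rw [ha, L_zero]
  ext k
  rw [Finsupp.coe_zero, Pi.zero_apply]
  by_contra hne
  have hk : k < 0 := hpos k (Finsupp.mem_support_iff.2 hne)
  have h4 := congrArg (fun f : ℤ →₀ ℤ => f (-k)) h3
  have h5 : (a.embDomain negEmb) (-k) = a k := Finsupp.embDomain_apply_self negEmb a k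
  rw [h5] at h4
  have h6 : -k < 0 := hpos (-k) (Finsupp.mem_support_iff.2 (by rw [← h4]; exact hne))
  omega

end Bar

section Mod

variable {I : Type*} [PartialOrder I] {M : Type*} [AddCommGroup M] [Module Fq M]

lemma wf_lt (hfin : ∀ i : I, {j | j ≤ i}.Finite) :
    WellFounded ((· < ·) : I → I → Prop) := by
  have key : ∀ j i : I, j < i → (hfin j).toFinset.card < (hfin i).toFinset.card := by
    intro j i hji
    apply Finset.card_lt_card
    have hsub : (hfin j).toFinset ⊆ (hfin i).toFinset := by
      intro k hk
      rw [Set.Finite.mem_toFinset] at *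
      exact le_trans hk hji.le
    refine (Finset.ssubset_iff_of_subset hsub).2 ⟨i, ?_, ?_⟩
    · rw [Set.Finite.mem_toFinset]; exact le_refl i
    · rw [Set.Finite.mem_toFinset]
      intro h
      exact absurd (lt_of_le_of_lt h hji) (lt_irrefl i)
  exact Subrelation.wf (fun {x y} h => key x y h)
    (InvImage.wf (fun i => (hfin i).toFinset.card) (Nat.lt_wfRel.wf))

lemma repr_sum_smul (b : Module.Basis I Fq M) (s : Finset I) (a : I → Fq) (x : I → M) (k : I) :
    b.repr (∑ j ∈ s, a j • x j) k = ∑ j ∈ s, a j * b.repr (x j) k := by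
  rw [map_sum, Finset.sum_apply']
  refine Finset.sum_congr rfl fun j _ => ?_
  rw [map_smul, Finsupp.smul_apply, smul_eq_mul]

lemma indep (b : Module.Basis I Fq M) (x : I → M) (a : I → Fq) :
    ∀ (n : ℕ) (s : Finset I), s.card ≤ n →
      (∀ j ∈ s, b.repr (x j) j = 1 ∧ ∀ k, b.repr (x j) k ≠ 0 → k ≤ j) →
      (∑ j ∈ s, a j • x j) = 0 → ∀ j ∈ s, a j = 0 := by
  classical
  intro n
  induction n with
  | zero =>
    intro s hcard _ _ j hj
    rw [Nat.le_zero, Finset.card_eq_zero] at hcard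
    subst hcard
    exact absurd hj (Finset.notMem_empty j)
  | succ n ih =>
    intro s hcard hx h j hj
    have hne : s.Nonempty := ⟨j, hj⟩
    obtain ⟨j₀, hj₀s, hmax⟩ : ∃ j₀ ∈ s, ∀ k ∈ s, ¬ j₀ < k := by
      obtain ⟨j, hj⟩ := s.exists_maximal hne
      exact ⟨j, hj.1, fun k hk hlt => hlt.not_ge (hj.2 hk hlt.le)⟩
    have ha0 : a j₀ = 0 := by
      have hc := congrArg (fun v => b.repr v j₀) h
      rw [repr_sum_smul, map_zero, Finsupp.coe_zero, Pi.zero_apply] at hc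
      rw [Finset.sum_eq_single j₀] at hc
      · rw [(hx j₀ hj₀s).1, mul_one] at hc
        exact hc
      · intro k hk hne'
        rcases eq_or_ne (b.repr (x k) j₀) 0 with h0 | h0
        · rw [h0, mul_zero]
        · have : j₀ ≤ k := (hx k hk).2 j₀ h0
          exact absurd (lt_of_le_of_ne this (Ne.symm hne')) (hmax k hk)
      · intro h'; exact absurd hj₀s h'
    by_cases hjj : j = j₀
    · rw [hjj]; exact ha0
    refine ih (s.erase j₀) ?_ (fun k hk => hx k (Finset.mem_of_mem_erase hk)) ?_ j
      (Finset.mem_erase.2 ⟨hjj, hj⟩)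
    · have := Finset.card_erase_of_mem hj₀s
      omega
    · have hsum := Finset.sum_erase_add s (fun j => a j • x j) hj₀s
      rw [ha0, zero_smul, add_zero] at hsum
      rw [hsum, h]

lemma decomp (b : Module.Basis I Fq M) (S : Submodule ℤ Fq) (hSZL : S ≤ ZL)
    (x : I → M) (i : I)
    (hx : ∀ j, j < i → b.repr (x j) j = 1 ∧ (∀ k, k ≠ j → (b.repr (x j) k : Fq) ∈ S)
      ∧ (∀ k, b.repr (x j) k ≠ 0 → k ≤ j)) :
    ∀ (n : ℕ) (s : Finset I), s.card ≤ n → (∀ j ∈ s, j < i) →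
      (∀ k ∈ s, ∀ l, l < k → l ∈ s) →
      ∀ v : M, (∀ j, (b.repr v j : Fq) ∈ ZL) → (∀ j, b.repr v j ≠ 0 → j ∈ s) →
      ∃ a : I → Fq, (∀ j, a j ∈ ZL) ∧ (∀ j, a j ≠ 0 → j ∈ s) ∧ v = ∑ j ∈ s, a j • x j := by
  classical
  intro n
  induction n with
  | zero =>
    intro s hcard _ _ v _ hsupp
    rw [Nat.le_zero, Finset.card_eq_zero] at hcard
    subst hcard
    have hv0 : v = 0 := by
      have h0 : b.repr v = 0 := by
        ext j
        by_contra hc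
        exact absurd (hsupp j hc) (Finset.notMem_empty j)
      exact (LinearEquiv.map_eq_zero_iff _).1 h0
    exact ⟨0, fun j => Submodule.zero_mem _, fun j hj => absurd rfl hj,
      by rw [hv0, Finset.sum_empty]⟩
  | succ n ih =>
    intro s hcard hsi hdc v hv hsupp
    rcases s.eq_empty_or_nonempty with rfl | hne
    · have hv0 : v = 0 := by
        have h0 : b.repr v = 0 := by
          ext j
          by_contra hc
          exact absurd (hsupp j hc) (Finset.notMem_empty j)
        exact (LinearEquiv.map_eq_zero_iff _).1 h0
      exact ⟨0, fun j => Submodule.zero_mem _, fun j hj => absurd rfl hj,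
        by rw [hv0, Finset.sum_empty]⟩
    obtain ⟨j₀, hj₀s, hmax⟩ : ∃ j₀ ∈ s, ∀ k ∈ s, ¬ j₀ < k := by
      obtain ⟨j, hj⟩ := s.exists_maximal hne
      exact ⟨j, hj.1, fun k hk hlt => hlt.not_ge (hj.2 hk hlt.le)⟩
    have hj₀i : j₀ < i := hsi j₀ hj₀s
    obtain ⟨hx1, hx2, hx3⟩ := hx j₀ hj₀i
    set c₀ : Fq := b.repr v j₀ with hc₀
    set v' : M := v - c₀ • x j₀ with hv'def
    have hrepr' : ∀ j, b.repr v' j = b.repr v j - c₀ * b.repr (x j₀) j := by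
      intro j
      rw [hv'def, map_sub, map_smul, Finsupp.sub_apply, Finsupp.smul_apply, smul_eq_mul]
    have hv'mem : ∀ j, (b.repr v' j : Fq) ∈ ZL := by
      intro j
      rw [hrepr' j]
      refine Submodule.sub_mem _ (hv j) ?_
      rcases eq_or_ne j j₀ with rfl | hne'
      · rw [hx1, mul_one]; exact hv j
      · exact mul_mem_ZL (hv j₀) (hSZL (hx2 j hne'))
    have hv'supp : ∀ j, b.repr v' j ≠ 0 → j ∈ s.erase j₀ := by
      intro j hj
      rw [hrepr' j] at hj
      have hjne : j ≠ j₀ := by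
        rintro rfl
        rw [hx1, mul_one, sub_self] at hj
        exact hj rfl
      refine Finset.mem_erase.2 ⟨hjne, ?_⟩
      rcases eq_or_ne (b.repr v j) 0 with h0 | h0
      · rcases eq_or_ne (b.repr (x j₀) j) 0 with h1 | h1
        · rw [h0, h1, mul_zero, sub_zero] at hj; exact absurd rfl hj
        · have hle : j ≤ j₀ := hx3 j h1
          exact hdc j₀ hj₀s j (lt_of_le_of_ne hle hjne)
      · exact hsupp j h0
    obtain ⟨a', ha'ZL, ha'supp, ha'eq⟩ := ih (s.erase j₀)
      (by have := Finset.card_erase_of_mem hj₀s; omega)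
      (fun j hj => hsi j (Finset.mem_of_mem_erase hj))
      (by
        intro k hk l hl
        have hks := Finset.mem_of_mem_erase hk
        refine Finset.mem_erase.2 ⟨?_, hdc k hks l hl⟩
        rintro rfl
        exact absurd (lt_of_lt_of_le hl (le_refl k)) (by
          intro h
          exact hmax k hks h)) v' hv'mem hv'supp
    refine ⟨fun j => if j = j₀ then c₀ else a' j, ?_, ?_, ?_⟩
    · intro j
      dsimp only
      split_ifs with h
      · exact hv j₀
      · exact ha'ZL j
    · intro j hj
      dsimp only at hj
      split_ifs at hj with h
      · rw [h]; exact hj₀s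
      · exact Finset.mem_of_mem_erase (ha'supp j hj)
    · rw [← Finset.sum_erase_add s _ hj₀s]
      dsimp only
      rw [if_pos rfl]
      have : ∑ j ∈ s.erase j₀, (if j = j₀ then c₀ else a' j) • x j
          = ∑ j ∈ s.erase j₀, a' j • x j := by
        refine Finset.sum_congr rfl fun j hj => ?_
        rw [if_neg (Finset.mem_erase.1 hj).1]
      rw [this, ← ha'eq, hv'def]
      abel

lemma exists_P (hfin : ∀ i : I, {j | j ≤ i}.Finite) (b : Module.Basis I Fq M)
    (bar : Fq →+* Fq) (hbarX : bar RatFunc.X = (RatFunc.X : Fq)⁻¹)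
    (B : M → M) (hBadd : ∀ u v, B (u + v) = B u + B v)
    (hBsmul : ∀ (c : Fq) (v : M), B (c • v) = bar c • B v)
    (hBinv : ∀ v, B (B v) = v)
    (htri : ∀ i j : I, (b.repr (B (b i) - b i)) j ∈ LaurentZ ∧
      ((b.repr (B (b i) - b i)) j ≠ 0 → j < i))
    (S : Submodule ℤ Fq)
    (hmulS : ∀ {x y : Fq}, x ∈ S → y ∈ S → x * y ∈ S)
    (hSZL : S ≤ ZL)
    (hsolve : ∀ {f : Fq}, f ∈ ZL → bar f = -f → ∃ p ∈ S, p - bar p = f) :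
    ∀ i : I, ∃ x : M, B x = x ∧ b.repr x i = 1 ∧ (∀ j, j ≠ i → (b.repr x j : Fq) ∈ S)
      ∧ (∀ j, b.repr x j ≠ 0 → j ≤ i) := by
  classical
  have 𝔅 : ∃ f : M →+ M, ⇑f = B := ⟨AddMonoidHom.mk' B hBadd, rfl⟩
  obtain ⟨𝔅, h𝔅⟩ := 𝔅
  intro i
  induction i using WellFounded.induction (wf_lt hfin) with
  | _ i IH =>
  choose xx hxB hx1 hx2 hx3 using IH
  set x : I → M := fun j => if h : j < i then xx j h else 0 with hxdef
  have hxprop : ∀ j, j < i → B (x j) = x j ∧ b.repr (x j) j = 1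
      ∧ (∀ k, k ≠ j → (b.repr (x j) k : Fq) ∈ S) ∧ (∀ k, b.repr (x j) k ≠ 0 → k ≤ j) := by
    intro j hj
    rw [hxdef]
    dsimp only
    rw [dif_pos hj]
    exact ⟨hxB j hj, hx1 j hj, hx2 j hj, hx3 j hj⟩
  set s₀ : Finset I := ((hfin i).toFinset).erase i with hs₀
  have hmem : ∀ j, j ∈ s₀ ↔ j < i := by
    intro j
    rw [hs₀, Finset.mem_erase, Set.Finite.mem_toFinset]
    constructor
    · rintro ⟨h1, h2⟩; exact lt_of_le_of_ne h2 h1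
    · intro h; exact ⟨ne_of_lt h, le_of_lt h⟩
  set v : M := B (b i) - b i with hvdef
  have hvZL : ∀ j, (b.repr v j : Fq) ∈ ZL := by
    intro j
    have := (htri i j).1
    rw [LaurentZ_eq] at this
    exact this
  have hvsupp : ∀ j, b.repr v j ≠ 0 → j ∈ s₀ := fun j hj => (hmem j).2 ((htri i j).2 hj)
  obtain ⟨a, haZL, hasupp, haeq⟩ := decomp b S hSZL x i
    (fun j hj => ⟨(hxprop j hj).2.1, (hxprop j hj).2.2.1, (hxprop j hj).2.2.2⟩)
    s₀.card s₀ (le_refl _) (fun j hj => (hmem j).1 hj)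
    (fun k hk l hl => (hmem l).2 (lt_trans hl ((hmem k).1 hk))) v hvZL hvsupp
  -- antisymmetry of the coefficients a j
  have hBv : B v = -v := by
    rw [hvdef, ← h𝔅, map_sub, h𝔅, hBinv]
    abel
  have hBsum : B (∑ j ∈ s₀, a j • x j) = ∑ j ∈ s₀, bar (a j) • x j := by
    rw [← h𝔅, map_sum]
    refine Finset.sum_congr rfl fun j hj => ?_
    rw [h𝔅, hBsmul, (hxprop j ((hmem j).1 hj)).1]
  have hzero : ∑ j ∈ s₀, (a j + bar (a j)) • x j = 0 := by
    have h1 : ∑ j ∈ s₀, (a j + bar (a j)) • x j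
        = ∑ j ∈ s₀, a j • x j + ∑ j ∈ s₀, bar (a j) • x j := by
      rw [← Finset.sum_add_distrib]
      refine Finset.sum_congr rfl fun j _ => ?_
      rw [add_smul]
    rw [h1, ← haeq, ← hBsum, ← haeq, hBv]
    abel
  have hanti : ∀ j ∈ s₀, bar (a j) = -(a j) := by
    intro j hj
    have := indep b x (fun j => a j + bar (a j)) s₀.card s₀ (le_refl _)
      (fun k hk => ⟨(hxprop k ((hmem k).1 hk)).2.1, (hxprop k ((hmem k).1 hk)).2.2.2⟩)
      hzero j hj
    have h2 : a j + bar (a j) = 0 := this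
    linear_combination h2
  have hsolve' : ∀ j, ∃ p : Fq, (j ∈ s₀ → p ∈ S ∧ p - bar p = a j) ∧ (j ∉ s₀ → p = 0) := by
    intro j
    by_cases hj : j ∈ s₀
    · obtain ⟨p, hp1, hp2⟩ := hsolve (haZL j) (hanti j hj)
      exact ⟨p, fun _ => ⟨hp1, hp2⟩, fun h => absurd hj h⟩
    · exact ⟨0, fun h => absurd h hj, fun _ => rfl⟩
  choose p hp1 hp2 using hsolve'
  refine ⟨b i + ∑ j ∈ s₀, p j • x j, ?_, ?_, ?_, ?_⟩
  · -- bar invariance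
    rw [← h𝔅, map_add, map_sum, h𝔅]
    have h1 : ∀ j ∈ s₀, B (p j • x j) = bar (p j) • x j := by
      intro j hj
      rw [hBsmul, (hxprop j ((hmem j).1 hj)).1]
    rw [Finset.sum_congr rfl h1]
    have h2 : B (b i) = b i + ∑ j ∈ s₀, a j • x j := by
      rw [← haeq, hvdef]; abel
    rw [h2, add_assoc, ← Finset.sum_add_distrib]
    congr 1
    refine Finset.sum_congr rfl fun j hj => ?_
    rw [← add_smul]
    congr 1
    have := (hp1 j hj).2
    linear_combination -this
  · -- coefficient at i is 1
    rw [map_add, Finsupp.add_apply, b.repr_self, Finsupp.single_apply, if_pos rfl,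
      repr_sum_smul]
    have : ∀ j ∈ s₀, p j * b.repr (x j) i = 0 := by
      intro j hj
      rcases eq_or_ne (b.repr (x j) i) 0 with h0 | h0
      · rw [h0, mul_zero]
      · have := (hxprop j ((hmem j).1 hj)).2.2.2 i h0
        exact absurd ((hmem j).1 hj) (not_lt_of_ge this)
    rw [Finset.sum_congr rfl this, Finset.sum_const_zero, add_zero]
  · -- coefficients in S
    intro k hk
    rw [map_add, Finsupp.add_apply, b.repr_self, Finsupp.single_apply,
      if_neg (fun h => hk h.symm), repr_sum_smul, zero_add]
    refine Submodule.sum_mem _ fun j hj => ?_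
    rcases eq_or_ne k j with rfl | hne'
    · rw [(hxprop k ((hmem k).1 hj)).2.1, mul_one]
      exact (hp1 k hj).1
    · exact hmulS (hp1 j hj).1 ((hxprop j ((hmem j).1 hj)).2.2.1 k hne')
  · -- support condition
    intro k hk
    rcases eq_or_ne k i with rfl | hne'
    · exact le_refl k
    rw [map_add, Finsupp.add_apply, b.repr_self, Finsupp.single_apply,
      if_neg (fun h => hne' h.symm), repr_sum_smul, zero_add] at hk
    obtain ⟨j, hj, hjne⟩ := Finset.exists_ne_zero_of_sum_ne_zero hk
    have h0 : b.repr (x j) k ≠ 0 := by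
      intro h
      rw [h, mul_zero] at hjne
      exact hjne rfl
    have hkj : k ≤ j := (hxprop j ((hmem j).1 hj)).2.2.2 k h0
    exact le_of_lt (lt_of_le_of_lt hkj ((hmem j).1 hj))

lemma unique_P (b : Module.Basis I Fq M) (bar : Fq →+* Fq)
    (B : M → M) (hBadd : ∀ u v, B (u + v) = B u + B v)
    (hBsmul : ∀ (c : Fq) (v : M), B (c • v) = bar c • B v)
    (htri : ∀ i j : I, (b.repr (B (b i) - b i)) j ∈ LaurentZ ∧
      ((b.repr (B (b i) - b i)) j ≠ 0 → j < i))
    (S : Submodule ℤ Fq)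
    (hsym : ∀ c ∈ S, bar c = c → (c : Fq) = 0) (i : I) {x x' : M}
    (hx : B x = x) (hx' : B x' = x')
    (hcx : ∀ j, (b.repr (x - b i) j : Fq) ∈ S)
    (hcx' : ∀ j, (b.repr (x' - b i) j : Fq) ∈ S) :
    x = x' := by
  classical
  obtain ⟨𝔅, h𝔅⟩ : ∃ f : M →+ M, ⇑f = B := ⟨AddMonoidHom.mk' B hBadd, rfl⟩
  by_contra hne
  set d := x - x' with hd
  have hd0 : d ≠ 0 := sub_ne_zero.2 hne
  have hBd : B d = d := by rw [hd, ← h𝔅, map_sub, h𝔅, hx, hx']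
  have hcd : ∀ j, (b.repr d j : Fq) ∈ S := by
    intro j
    have hm := Submodule.sub_mem S (hcx j) (hcx' j)
    rw [← Finsupp.sub_apply, ← map_sub] at hm
    have he : (x - b i) - (x' - b i) = d := by rw [hd]; abel
    rw [he] at hm
    exact hm
  set T := (b.repr d).support with hT
  have hTne : T.Nonempty := by
    rw [hT, Finsupp.support_nonempty_iff]
    intro h
    exact hd0 ((LinearEquiv.map_eq_zero_iff _).1 h)
  obtain ⟨j₀, hj₀, hmax⟩ : ∃ j₀ ∈ T, ∀ k ∈ T, ¬ j₀ < k := by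
    obtain ⟨j, hj⟩ := T.exists_maximal hTne
    exact ⟨j, hj.1, fun k hk hlt => hlt.not_ge (hj.2 hk hlt.le)⟩
  have hdsum : d = ∑ j ∈ T, b.repr d j • b j := by
    conv_lhs => rw [← b.linearCombination_repr d]
    rw [Finsupp.linearCombination_apply, Finsupp.sum]
  have hBdsum : B d = ∑ j ∈ T, bar (b.repr d j) • B (b j) := by
    conv_lhs => rw [hdsum]
    rw [← h𝔅, map_sum, h𝔅]
    exact Finset.sum_congr rfl fun j _ => hBsmul _ _
  have hreprB : ∀ j, b.repr (B (b j)) j₀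
      = b.repr (B (b j) - b j) j₀ + (if j = j₀ then 1 else 0) := by
    intro j
    have he : B (b j) = (B (b j) - b j) + b j := by abel
    conv_lhs => rw [he]
    rw [map_add, Finsupp.add_apply, b.repr_self, Finsupp.single_apply]
  have hc : b.repr (B d) j₀ = bar (b.repr d j₀) := by
    rw [hBdsum, repr_sum_smul]
    rw [Finset.sum_eq_single j₀]
    · rw [hreprB j₀, if_pos rfl]
      have h0 : b.repr (B (b j₀) - b j₀) j₀ = 0 := by
        by_contra hk
        exact absurd ((htri j₀ j₀).2 hk) (lt_irrefl j₀)
      rw [h0, zero_add, mul_one]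
    · intro j hj hne'
      rw [hreprB j, if_neg hne']
      have h0 : b.repr (B (b j) - b j) j₀ = 0 := by
        by_contra hk
        exact absurd ((htri j j₀).2 hk) (hmax j hj)
      rw [h0, add_zero, mul_zero]
    · intro h; exact absurd hj₀ h
  rw [hBd] at hc
  exact absurd (Finsupp.mem_support_iff.1 hj₀) (not_not.2 (hsym _ (hcd j₀) hc.symm))

end Mod

end Lus

open Lus in
/-- Lusztig's lemma on the existence and uniqueness of canonical bases. -/
theorem lusztig_lemma {I : Type*} [PartialOrder I] (hfin : ∀ i : I, {j | j ≤ i}.Finite)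
    {M : Type*} [AddCommGroup M] [Module Fq M] (b : Module.Basis I Fq M)
    (bar : Fq →+* Fq) (hbarX : bar RatFunc.X = (RatFunc.X : Fq)⁻¹)
    (B : M → M) (hBadd : ∀ u v, B (u + v) = B u + B v)
    (hBsmul : ∀ (c : Fq) (v : M), B (c • v) = bar c • B v)
    (hBinv : ∀ v, B (B v) = v)
    (htri : ∀ i j : I, (b.repr (B (b i) - b i)) j ∈ LaurentZ ∧
      ((b.repr (B (b i) - b i)) j ≠ 0 → j < i)) :
    (∃! xy : (I → M) × (I → M),
        (∀ i, B (xy.1 i) = xy.1 i) ∧ (∀ i, B (xy.2 i) = xy.2 i) ∧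
        (∀ i j, b.repr (xy.1 i - b i) j ∈ qPosZ) ∧
        (∀ i j, b.repr (xy.2 i - b i) j ∈ qNegZ)) ∧
    (∀ xy : (I → M) × (I → M),
        ((∀ i, B (xy.1 i) = xy.1 i) ∧ (∀ i, B (xy.2 i) = xy.2 i) ∧
         (∀ i j, b.repr (xy.1 i - b i) j ∈ qPosZ) ∧
         (∀ i j, b.repr (xy.2 i - b i) j ∈ qNegZ)) →
        (LinearIndependent Fq xy.1 ∧ Submodule.span Fq (Set.range xy.1) = ⊤ ∧
         LinearIndependent Fq xy.2 ∧ Submodule.span Fq (Set.range xy.2) = ⊤ ∧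
         (∀ i j, b.repr (xy.1 i) j ≠ 0 → j ≤ i) ∧
         (∀ i j, b.repr (xy.2 i) j ≠ 0 → j ≤ i))) := by
  classical
  -- canonical families
  choose X hXB hX1 hX2 hX4 using exists_P hfin b bar hbarX B hBadd hBsmul hBinv htri
    Pos (fun hx hy => mul_mem_Pos hx hy) Pos_le_ZL (fun hf h => solve_pos hbarX hf h)
  choose Y hYB hY1 hY2 hY4 using exists_P hfin b bar hbarX B hBadd hBsmul hBinv htri
    Neg (fun hx hy => mul_mem_Neg hx hy) Neg_le_ZL (fun hf h => solve_neg hbarX hf h)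
  have hreprsub : ∀ (x : M) (i j : I),
      b.repr (x - b i) j = b.repr x j - (if i = j then 1 else 0) := by
    intro x i j
    rw [map_sub, Finsupp.sub_apply, b.repr_self, Finsupp.single_apply]
  have hXc : ∀ i j, (b.repr (X i - b i) j : Fq) ∈ Pos := by
    intro i j
    rw [hreprsub]
    rcases eq_or_ne i j with rfl | hne
    · rw [if_pos rfl, hX1 i, sub_self]; exact Submodule.zero_mem _
    · rw [if_neg hne, sub_zero]; exact hX2 i j (Ne.symm hne)
  have hYc : ∀ i j, (b.repr (Y i - b i) j : Fq) ∈ Lus.Neg := by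
    intro i j
    rw [hreprsub]
    rcases eq_or_ne i j with rfl | hne
    · rw [if_pos rfl, hY1 i, sub_self]; exact Submodule.zero_mem _
    · rw [if_neg hne, sub_zero]; exact hY2 i j (Ne.symm hne)
  have hXY : (∀ i, B (X i) = X i) ∧ (∀ i, B (Y i) = Y i) ∧
      (∀ i j, b.repr (X i - b i) j ∈ qPosZ) ∧ (∀ i j, b.repr (Y i - b i) j ∈ qNegZ) := by
    refine ⟨hXB, hYB, ?_, ?_⟩
    · intro i j; rw [qPosZ_eq]; exact hXc i j
    · intro i j; rw [qNegZ_eq]; exact hYc i j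
  -- any pair satisfying the conditions equals (X, Y)
  have huniq : ∀ xy : (I → M) × (I → M),
      ((∀ i, B (xy.1 i) = xy.1 i) ∧ (∀ i, B (xy.2 i) = xy.2 i) ∧
       (∀ i j, b.repr (xy.1 i - b i) j ∈ qPosZ) ∧
       (∀ i j, b.repr (xy.2 i - b i) j ∈ qNegZ)) → xy = (X, Y) := by
    rintro ⟨x, y⟩ ⟨h1, h2, h3, h4⟩
    have hx : x = X := by
      funext i
      refine unique_P b bar B hBadd hBsmul htri Pos
        (fun c hc h => sym_pos hbarX hc h) i (h1 i) (hXB i) ?_ (hXc i)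
      intro j
      have := h3 i j
      rw [qPosZ_eq] at this
      exact this
    have hy : y = Y := by
      funext i
      refine unique_P b bar B hBadd hBsmul htri Lus.Neg
        (fun c hc h => sym_neg hbarX hc h) i (h2 i) (hYB i) ?_ (hYc i)
      intro j
      have := h4 i j
      rw [qNegZ_eq] at this
      exact this
    rw [hx, hy]
  constructor
  · exact ⟨(X, Y), hXY, huniq⟩
  · rintro ⟨x, y⟩ hcond
    have hxy := huniq ⟨x, y⟩ hcond
    rw [Prod.ext_iff] at hxy
    obtain ⟨hx, hy⟩ := hxy
    dsimp only at hx hy ⊢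
    rw [hx, hy]
    have hspan : ∀ (Z : I → M), (∀ i, b.repr (Z i) i = 1) →
        (∀ i j, b.repr (Z i) j ≠ 0 → j ≤ i) →
        Submodule.span Fq (Set.range Z) = ⊤ := by
      intro Z hZ1 hZ4
      have key : ∀ i : I, b i ∈ Submodule.span Fq (Set.range Z) := by
        intro i
        induction i using WellFounded.induction (wf_lt hfin) with
        | _ i IH =>
        set w : M := Z i - b i with hw
        have hwsupp : ∀ j, b.repr w j ≠ 0 → j < i := by
          intro j hj
          rw [hreprsub] at hj
          rcases eq_or_ne i j with rfl | hne
          · rw [if_pos rfl, hZ1 i, sub_self] at hj; exact absurd rfl hj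
          · rw [if_neg hne, sub_zero] at hj
            exact lt_of_le_of_ne (hZ4 i j hj) (Ne.symm hne)
        have hwmem : w ∈ Submodule.span Fq (Set.range Z) := by
          have hdsum : w = ∑ j ∈ (b.repr w).support, b.repr w j • b j := by
            conv_lhs => rw [← b.linearCombination_repr w]
            rw [Finsupp.linearCombination_apply, Finsupp.sum]
          rw [hdsum]
          refine Submodule.sum_mem _ fun j hj => ?_
          exact Submodule.smul_mem _ _ (IH j (hwsupp j (Finsupp.mem_support_iff.1 hj)))
        have hZmem : Z i ∈ Submodule.span Fq (Set.range Z) :=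
          Submodule.subset_span ⟨i, rfl⟩
        have : b i = Z i - w := by rw [hw]; abel
        rw [this]
        exact Submodule.sub_mem _ hZmem hwmem
      rw [eq_top_iff, ← b.span_eq, Submodule.span_le]
      rintro _ ⟨i, rfl⟩
      exact key i
    have hli : ∀ (Z : I → M), (∀ i, b.repr (Z i) i = 1) →
        (∀ i j, b.repr (Z i) j ≠ 0 → j ≤ i) → LinearIndependent Fq Z := by
      intro Z hZ1 hZ4
      rw [linearIndependent_iff']
      intro s g hsum j hj
      exact indep b Z g s.card s (le_refl _) (fun k _ => ⟨hZ1 k, hZ4 k⟩) hsum j hj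
    exact ⟨hli X hX1 hX4, hspan X hX1 hX4, hli Y hY1 hY4, hspan Y hY1 hY4,
      fun i j h => hX4 i j h, fun i j h => hY4 i j h⟩

end
end

section
/- Suppose f ∈ ℤ^{m|n}, a ∈ ℤ, r ≥ 1, and 1 ≤ i_1 < ... < i_r ≤ n are such that f(i_1) = ... = f(i_r) = a+1 and f(j) ∉ {a, a+1} for all j ∈ {i_1, i_1+1, ..., n} \ {i_1,...,i_r}. Let f' ∈ ℤ^{m|n} agree with f except that f'(i_1) = ... = f'(i_r) = a. Let g ∈ ℤ^{m|n} with g ⪯ f, let j_1 < ... < j_r be elements of I(m|n) such that g(j_s) = a whenever j_s < 0 and g(j_s) = a+1 whenever j_s > 0, and set g' = g − d_{j_1} − ... − d_{j_r}. Then g' ⪯ f'; moreover if g' = f' then g = f. -/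
open Finset

-- auxiliary lemmas
section Aux

noncomputable def pref (a : ℤ) : (ℤ →₀ ℤ) →+ ℤ :=
  Finsupp.liftAddHom fun b => if b ≤ a then AddMonoidHom.id ℤ else 0

lemma pref_single (a b : ℤ) (v : ℤ) :
    pref a (Finsupp.single b v) = if b ≤ a then v else 0 := by
  rw [pref, Finsupp.liftAddHom_apply_single]
  split_ifs <;> rfl

lemma pref_domsum (c : ℤ →₀ ℕ) (t : ℤ) :
    pref t (c.sum fun b k => (k:ℤ) • (Finsupp.single b (1:ℤ) - Finsupp.single (b+1) 1))
      = c t := by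
  rw [map_finsuppSum]
  have : ∀ b ∈ c.support,
      pref t ((c b : ℤ) • (Finsupp.single b (1:ℤ) - Finsupp.single (b+1) 1))
        = if b = t then (c b : ℤ) else 0 := by
    intro b _
    rw [map_zsmul, map_sub, pref_single, pref_single]
    split_ifs <;> simp <;> omega
  have h2 : (c.sum fun b k => pref t ((k:ℤ) • (Finsupp.single b (1:ℤ) - Finsupp.single (b+1) 1)))
      = c.sum fun b k => if b = t then (k:ℤ) else 0 := Finsupp.sum_congr this
  rw [h2, Finsupp.sum_ite_eq' c t fun _ k => (k:ℤ)]
  by_cases ht : t ∈ c.support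
  · simp [ht]
  · have h0 : c t = 0 := Finsupp.notMem_support_iff.mp ht
    simp [ht, h0]

lemma domLE_shift {μ ν μ' ν' : ℤ →₀ ℤ} {a k : ℤ}
    (hd : ν' - μ' = ν - μ + k • (Finsupp.single a (1:ℤ) - Finsupp.single (a+1) 1))
    (h : domLE μ ν) (hk : 0 ≤ pref a (ν - μ) + k) : domLE μ' ν' := by
  obtain ⟨c, hc⟩ := h
  have hca : pref a (ν - μ) = (c a : ℤ) := by rw [hc, pref_domsum]
  set φ : ℤ → ℕ → (ℤ →₀ ℤ) :=
    fun b k => (k:ℤ) • (Finsupp.single b (1:ℤ) - Finsupp.single (b+1) 1) with hφ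
  have hzero : ∀ b, φ b 0 = 0 := by intro b; simp [hφ]
  have hadd : ∀ b k₁ k₂, φ b (k₁ + k₂) = φ b k₁ + φ b k₂ := by
    intro b k₁ k₂; simp only [hφ]; push_cast; rw [add_smul]
  refine ⟨c.erase a + Finsupp.single a ((c a : ℤ) + k).toNat, ?_⟩
  have hsplit : c.sum φ = (c.erase a).sum φ + φ a (c a) := by
    conv_lhs => rw [← Finsupp.erase_add_single a c]
    rw [Finsupp.sum_add_index' hzero hadd, Finsupp.sum_single_index (hzero a)]
  rw [Finsupp.sum_add_index' hzero hadd, Finsupp.sum_single_index (hzero a)]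
  have htn : ((((c a : ℤ) + k).toNat : ℤ)) = (c a : ℤ) + k :=
    Int.toNat_of_nonneg (by omega)
  rw [hd, hc, hsplit]
  simp only [hφ, htn]
  rw [add_assoc, ← add_smul]

variable {m n : ℕ}

lemma idx_pos_or_neg (i : Idx m n) : 0 < (i:ℤ) ∨ (i:ℤ) < 0 := by
  have := i.2
  simp only [IdxSet, Finset.mem_union, Finset.mem_Icc] at this
  omega

lemma isgn_pos {i : Idx m n} (h : 0 < (i:ℤ)) : isgn i = 1 := by simp [isgn, h]

lemma isgn_neg {i : Idx m n} (h : (i:ℤ) < 0) : isgn i = -1 := by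
  simp [isgn, not_lt.mpr h.le, h.not_gt]

lemma wtFrom_shift {r : ℕ} (h h' : Zmn m n) (K : Fin r → Idx m n)
    (hKinj : Function.Injective K) (a : ℤ)
    (hoff : ∀ i, (∀ s, i ≠ K s) → h' i = h i)
    (hval : ∀ s, isgn (K s) • Finsupp.single (h' (K s)) (1:ℤ)
      = isgn (K s) • Finsupp.single (h (K s)) 1
        + (Finsupp.single a 1 - Finsupp.single (a+1) 1))
    (j : Idx m n) :
    wtFrom h' j = wtFrom h j
      + (((univ.filter fun s => (j:ℤ) ≤ ((K s : ℤ))).card : ℤ))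
          • (Finsupp.single a (1:ℤ) - Finsupp.single (a+1) 1) := by
  classical
  unfold wtFrom
  have key : ∀ i : Idx m n,
      (if (j:ℤ) ≤ (i:ℤ) then isgn i • Finsupp.single (h' i) (1:ℤ) else 0)
        = (if (j:ℤ) ≤ (i:ℤ) then isgn i • Finsupp.single (h i) (1:ℤ) else 0)
          + (if i ∈ univ.image K then
              (if (j:ℤ) ≤ (i:ℤ) then (Finsupp.single a (1:ℤ) - Finsupp.single (a+1) 1) else 0)
             else 0) := by
    intro i
    by_cases hi : i ∈ univ.image K
    · obtain ⟨s, -, rfl⟩ := Finset.mem_image.mp hi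
      rw [if_pos hi]
      by_cases hj : (j:ℤ) ≤ ((K s : ℤ))
      · rw [if_pos hj, if_pos hj, if_pos hj, hval s]
      · simp [hj]
    · have hoi : h' i = h i :=
        hoff i fun s hs => hi (Finset.mem_image.mpr ⟨s, Finset.mem_univ s, hs.symm⟩)
      rw [hoi, if_neg hi, add_zero]
  rw [Finset.sum_congr rfl fun i _ => key i, Finset.sum_add_distrib]
  congr 1
  rw [Finset.sum_ite_mem, Finset.univ_inter,
    Finset.sum_image fun x _ y _ hxy => hKinj hxy,
    Finset.sum_ite, Finset.sum_const, Finset.sum_const_zero, add_zero, natCast_zsmul]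

lemma wtF_shift {r : ℕ} (h h' : Zmn m n) (K : Fin r → Idx m n)
    (hKinj : Function.Injective K) (a : ℤ)
    (hoff : ∀ i, (∀ s, i ≠ K s) → h' i = h i)
    (hval : ∀ s, isgn (K s) • Finsupp.single (h' (K s)) (1:ℤ)
      = isgn (K s) • Finsupp.single (h (K s)) 1
        + (Finsupp.single a 1 - Finsupp.single (a+1) 1)) :
    wtF h' = wtF h + (r:ℤ) • (Finsupp.single a (1:ℤ) - Finsupp.single (a+1) 1) := by
  classical
  unfold wtF
  have key : ∀ i : Idx m n,
      isgn i • Finsupp.single (h' i) (1:ℤ)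
        = isgn i • Finsupp.single (h i) (1:ℤ)
          + (if i ∈ univ.image K then
              (Finsupp.single a (1:ℤ) - Finsupp.single (a+1) 1) else 0) := by
    intro i
    by_cases hi : i ∈ univ.image K
    · obtain ⟨s, -, rfl⟩ := Finset.mem_image.mp hi
      rw [if_pos hi, hval s]
    · have hoi : h' i = h i :=
        hoff i fun s hs => hi (Finset.mem_image.mpr ⟨s, Finset.mem_univ s, hs.symm⟩)
      rw [hoi, if_neg hi, add_zero]
  rw [Finset.sum_congr rfl fun i _ => key i, Finset.sum_add_distrib]
  congr 1
  rw [Finset.sum_ite_mem, Finset.univ_inter,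
    Finset.sum_image fun x _ y _ hxy => hKinj hxy,
    Finset.sum_const, Finset.card_univ, Fintype.card_fin, natCast_zsmul]

lemma pref_wtFrom (h : Zmn m n) (j : Idx m n) (b : ℤ) :
    pref b (wtFrom h j)
      = ∑ i : Idx m n,
          if (j:ℤ) ≤ (i:ℤ) then isgn i * (if h i ≤ b then 1 else 0) else 0 := by
  unfold wtFrom
  rw [map_sum]
  refine Finset.sum_congr rfl fun i _ => ?_
  rw [apply_ite (pref b), map_zero, map_zsmul, pref_single, smul_eq_mul]

lemma sum_dvec_apply_mem {r : ℕ} (K : Fin r → Idx m n) (hK : Function.Injective K)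
    (t : Fin r) : (∑ s, dvec (K s)) (K t) = isgn (K t) := by
  classical
  rw [Finset.sum_apply]
  have key : ∀ s : Fin r, dvec (K s) (K t) = if t = s then isgn (K t) else 0 := by
    intro s
    by_cases hst : t = s
    · subst hst; simp [dvec]
    · rw [dvec, if_neg fun h => hst (hK h), if_neg hst]
  rw [Finset.sum_congr rfl fun s _ => key s, Finset.sum_ite_eq, if_pos (Finset.mem_univ t)]

lemma sum_dvec_apply_off {r : ℕ} (K : Fin r → Idx m n) (i : Idx m n)
    (hi : ∀ s, i ≠ K s) : (∑ s, dvec (K s)) i = 0 := by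
  rw [Finset.sum_apply]
  exact Finset.sum_eq_zero fun s _ => by simp [dvec, hi s]


end Aux

/-- combinatorial heart of Lemma "enasty". -/
theorem enasty {m n : ℕ} (f f' g g' : Zmn m n) (a : ℤ) (r : ℕ) (hr : 0 < r)
    (I : Fin r → Idx m n) (hImono : StrictMono fun s => ((I s : ℤ)))
    (hIpos : ∀ s, 0 < (I s : ℤ))
    (hfI : ∀ s, f (I s) = a + 1)
    (hfrest : ∀ j : Idx m n, ((I ⟨0, hr⟩ : ℤ)) ≤ (j:ℤ) → (∀ s, j ≠ I s) →
      f j ≠ a ∧ f j ≠ a + 1)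
    (hf'I : ∀ s, f' (I s) = a)
    (hf'rest : ∀ j : Idx m n, (∀ s, j ≠ I s) → f' j = f j)
    (hgf : bruhatLE g f)
    (J : Fin r → Idx m n) (hJmono : StrictMono fun s => ((J s : ℤ)))
    (hgJ : ∀ s, ((J s : ℤ) < 0 → g (J s) = a) ∧ (0 < (J s : ℤ) → g (J s) = a + 1))
    (hg' : g' = g - ∑ s : Fin r, dvec (J s)) :
    bruhatLE g' f' ∧ (g' = f' → g = f) := by
  classical
  set X : ℤ →₀ ℤ := Finsupp.single a 1 - Finsupp.single (a+1) 1 with hX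
  have hIinj : Function.Injective I := fun s t hst => hImono.injective (congrArg _ hst)
  have hJinj : Function.Injective J := fun s t hst => hJmono.injective (congrArg _ hst)
  have hg'off : ∀ i, (∀ s, i ≠ J s) → g' i = g i := by
    intro i hi
    rw [hg', Pi.sub_apply, sum_dvec_apply_off J i hi, sub_zero]
  have hg'J : ∀ s, g' (J s) = g (J s) - isgn (J s) := by
    intro s
    rw [hg', Pi.sub_apply, sum_dvec_apply_mem J hJinj s]
  have hgval : ∀ s, isgn (J s) • Finsupp.single (g' (J s)) (1:ℤ)
      = isgn (J s) • Finsupp.single (g (J s)) 1 + X := by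
    intro s
    rcases idx_pos_or_neg (J s) with hp | hn
    · have h1 : g (J s) = a + 1 := (hgJ s).2 hp
      have h2 : g' (J s) = a := by rw [hg'J s, h1, isgn_pos hp]; ring
      rw [h2, h1, isgn_pos hp, one_smul, one_smul, hX]; abel
    · have h1 : g (J s) = a := (hgJ s).1 hn
      have h2 : g' (J s) = a + 1 := by rw [hg'J s, h1, isgn_neg hn]; ring
      rw [h2, h1, isgn_neg hn, neg_smul, neg_smul, one_smul, one_smul, hX]; abel
  have hfval : ∀ s, isgn (I s) • Finsupp.single (f' (I s)) (1:ℤ)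
      = isgn (I s) • Finsupp.single (f (I s)) 1 + X := by
    intro s
    rw [hf'I s, hfI s, isgn_pos (hIpos s), one_smul, one_smul, hX]; abel
  have hf'off : ∀ i, (∀ s, i ≠ I s) → f' i = f i := hf'rest
  have hXa : pref a X = 1 := by
    rw [hX, map_sub, pref_single, pref_single, if_pos le_rfl, if_neg (by omega)]; ring
  have hzerole : ∀ s : Fin r, (⟨0, hr⟩ : Fin r) ≤ s := fun s => Fin.mk_le_of_le_val (Nat.zero_le _)
  constructor
  · constructor
    · rw [wtF_shift g g' J hJinj a hg'off hgval, wtF_shift f f' I hIinj a hf'off hfval, hgf.1]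
    · intro j
      set Aj := (univ.filter fun s => (j:ℤ) ≤ ((I s : ℤ))).card with hAj
      set Bj := (univ.filter fun s => (j:ℤ) ≤ ((J s : ℤ))).card with hBj
      have h1 := wtFrom_shift f f' I hIinj a hf'off hfval j
      have h2 := wtFrom_shift g g' J hJinj a hg'off hgval j
      have hd : wtFrom f' j - wtFrom g' j
          = (wtFrom f j - wtFrom g j) + ((Aj:ℤ) - (Bj:ℤ)) • X := by
        rw [h1, h2, sub_smul]; abel
      refine domLE_shift hd (hgf.2 j) ?_
      obtain ⟨c, hc⟩ := hgf.2 j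
      by_cases hcase : ((I ⟨0, hr⟩ : ℤ)) ≤ (j:ℤ)
      · -- hard case : j ≥ i₁
        have hposj : 0 < (j:ℤ) := lt_of_lt_of_le (hIpos ⟨0, hr⟩) hcase
        have hEq1 : pref (a+1) (wtFrom f j) = pref a (wtFrom f j) + (Aj:ℤ) := by
          rw [pref_wtFrom, pref_wtFrom]
          have key : ∀ i : Idx m n,
              (if (j:ℤ) ≤ (i:ℤ) then isgn i * (if f i ≤ a+1 then 1 else 0) else 0)
                = (if (j:ℤ) ≤ (i:ℤ) then isgn i * (if f i ≤ a then 1 else 0) else 0)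
                  + (if i ∈ univ.image I then (if (j:ℤ) ≤ (i:ℤ) then (1:ℤ) else 0) else 0) := by
            intro i
            by_cases hj : (j:ℤ) ≤ (i:ℤ)
            · have hip : 0 < (i:ℤ) := hposj.trans_le hj
              rw [isgn_pos hip, one_mul, one_mul, if_pos hj, if_pos hj, if_pos hj]
              by_cases hi : i ∈ univ.image I
              · obtain ⟨s, -, rfl⟩ := Finset.mem_image.mp hi
                rw [if_pos hi, hfI s]
                norm_num
              · have hne : ∀ s, i ≠ I s := fun s hs =>
                  hi (Finset.mem_image.mpr ⟨s, Finset.mem_univ s, hs.symm⟩)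
                have h5 := hfrest i (le_trans hcase hj) hne
                obtain ⟨h5a, h5b⟩ := h5
                rw [if_neg hi, add_zero]
                split_ifs <;> omega
            · simp [hj]
          rw [Finset.sum_congr rfl fun i _ => key i, Finset.sum_add_distrib]
          congr 1
          rw [Finset.sum_ite_mem, Finset.univ_inter,
            Finset.sum_image fun x _ y _ hxy => hIinj hxy,
            Finset.sum_ite, Finset.sum_const, Finset.sum_const_zero, add_zero, hAj]
          simp
        have hIneq2 : pref a (wtFrom g j) + (Bj:ℤ) ≤ pref (a+1) (wtFrom g j) := by
          rw [pref_wtFrom, pref_wtFrom]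
          have hBsum : (Bj:ℤ)
              = ∑ i : Idx m n, (if i ∈ univ.image J then (if (j:ℤ) ≤ (i:ℤ) then (1:ℤ) else 0) else 0) := by
            rw [Finset.sum_ite_mem, Finset.univ_inter,
              Finset.sum_image fun x _ y _ hxy => hJinj hxy,
              Finset.sum_ite, Finset.sum_const, Finset.sum_const_zero, add_zero, hBj]
            simp
          rw [hBsum, ← Finset.sum_add_distrib]
          apply Finset.sum_le_sum
          intro i _
          by_cases hj : (j:ℤ) ≤ (i:ℤ)
          · have hip : 0 < (i:ℤ) := hposj.trans_le hj
            rw [isgn_pos hip, one_mul, one_mul, if_pos hj, if_pos hj, if_pos hj]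
            by_cases hi : i ∈ univ.image J
            · obtain ⟨s, -, rfl⟩ := Finset.mem_image.mp hi
              have hgs : g (J s) = a + 1 := (hgJ s).2 hip
              rw [if_pos hi, hgs]
              norm_num
            · rw [if_neg hi, add_zero]
              split_ifs <;> omega
          · simp [hj]
        have hMid : pref (a+1) (wtFrom g j) ≤ pref (a+1) (wtFrom f j) := by
          have hc1 : pref (a+1) (wtFrom f j - wtFrom g j) = (c (a+1) : ℤ) := by
            rw [hc, pref_domsum]
          rw [map_sub] at hc1
          have : (0:ℤ) ≤ (c (a+1) : ℤ) := Int.natCast_nonneg _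
          linarith
        have hfin : pref a (wtFrom f j - wtFrom g j)
            = pref a (wtFrom f j) - pref a (wtFrom g j) := map_sub _ _ _
        linarith
      · -- easy case : j < i₁
        push_neg at hcase
        have hA : Aj = r := by
          rw [hAj, Finset.filter_true_of_mem, Finset.card_univ, Fintype.card_fin]
          intro s _
          have h6 : ((I ⟨0, hr⟩ : ℤ)) ≤ ((I s : ℤ)) := hImono.monotone (hzerole s)
          omega
        have hB : Bj ≤ r := by
          have := Finset.card_filter_le (univ : Finset (Fin r)) fun s => (j:ℤ) ≤ ((J s : ℤ))
          rw [Finset.card_univ, Fintype.card_fin] at this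
          rw [hBj]; exact this
        have hposd : 0 ≤ pref a (wtFrom f j - wtFrom g j) := by
          rw [hc, pref_domsum]; positivity
        have : (Bj:ℤ) ≤ (Aj:ℤ) := by exact_mod_cast hA ▸ hB
        linarith
  · -- equality part
    intro hEq
    have key : ∀ j : Idx m n,
        (univ.filter fun s => (j:ℤ) ≤ ((I s : ℤ))).card
          ≤ (univ.filter fun s => (j:ℤ) ≤ ((J s : ℤ))).card := by
      intro j
      set Aj := (univ.filter fun s => (j:ℤ) ≤ ((I s : ℤ))).card with hAj
      set Bj := (univ.filter fun s => (j:ℤ) ≤ ((J s : ℤ))).card with hBj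
      obtain ⟨c, hc⟩ := hgf.2 j
      have h1 := wtFrom_shift f f' I hIinj a hf'off hfval j
      have h2 := wtFrom_shift g g' J hJinj a hg'off hgval j
      have h3 : wtFrom f j + (Aj:ℤ) • X = wtFrom g j + (Bj:ℤ) • X := by
        rw [← h1, ← h2, hEq]
      have hd : wtFrom f j - wtFrom g j = ((Bj:ℤ) - (Aj:ℤ)) • X := by
        rw [sub_smul, sub_eq_sub_iff_add_eq_add, h3, add_comm]
      have hpa : (c a : ℤ) = (Bj:ℤ) - (Aj:ℤ) := by
        calc (c a : ℤ) = pref a (wtFrom f j - wtFrom g j) := by rw [hc, pref_domsum]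
          _ = ((Bj:ℤ) - (Aj:ℤ)) * 1 := by rw [hd, map_zsmul, hXa, smul_eq_mul]
          _ = (Bj:ℤ) - (Aj:ℤ) := mul_one _
      have : (0:ℤ) ≤ (c a : ℤ) := Int.natCast_nonneg _
      omega
    have hJge : ∀ s, ((I s : ℤ)) ≤ ((J s : ℤ)) := by
      intro s
      by_contra hlt
      push_neg at hlt
      have hk := key (I s)
      have hsub1 : (univ.filter fun t : Fin r => s ≤ t)
          ⊆ (univ.filter fun t => ((I s : ℤ)) ≤ ((I t : ℤ))) := by
        intro t ht
        simp only [Finset.mem_filter, Finset.mem_univ, true_and] at ht ⊢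
        exact hImono.monotone ht
      have hsub2 : (univ.filter fun t => ((I s : ℤ)) ≤ ((J t : ℤ)))
          ⊆ (univ.filter fun t : Fin r => s < t) := by
        intro t ht
        simp only [Finset.mem_filter, Finset.mem_univ, true_and] at ht ⊢
        by_contra hts
        push_neg at hts
        have h7 : ((J t : ℤ)) ≤ ((J s : ℤ)) := hJmono.monotone hts
        omega
      have hcard : (univ.filter fun t : Fin r => s < t).card + 1
          ≤ (univ.filter fun t : Fin r => s ≤ t).card := by
        have hins : insert s (univ.filter fun t : Fin r => s < t)
            ⊆ univ.filter fun t : Fin r => s ≤ t := by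
          intro t ht
          rcases Finset.mem_insert.mp ht with rfl | ht'
          · simp
          · simp only [Finset.mem_filter, Finset.mem_univ, true_and] at ht' ⊢
            exact le_of_lt ht'
        calc (univ.filter fun t : Fin r => s < t).card + 1
            = (insert s (univ.filter fun t : Fin r => s < t)).card :=
              (Finset.card_insert_of_notMem (by simp)).symm
          _ ≤ _ := Finset.card_le_card hins
      have hc1 := Finset.card_le_card hsub1
      have hc2 := Finset.card_le_card hsub2
      omega
    have himg : univ.image J = univ.image I := by
      apply Finset.eq_of_subset_of_card_le
      · intro i hi
        obtain ⟨s, -, rfl⟩ := Finset.mem_image.mp hi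
        have hpos : 0 < ((J s : ℤ)) := lt_of_lt_of_le (hIpos s) (hJge s)
        have hg1 : g (J s) = a + 1 := (hgJ s).2 hpos
        have hf'v : f' (J s) = a := by
          have h8 : g' (J s) = g (J s) - isgn (J s) := hg'J s
          rw [hEq, isgn_pos hpos, hg1] at h8
          omega
        by_contra hni
        have hne : ∀ t, J s ≠ I t := fun t hts =>
          hni (Finset.mem_image.mpr ⟨t, Finset.mem_univ t, hts.symm⟩)
        have h5 := hfrest (J s) (le_trans (hImono.monotone (hzerole s)) (hJge s)) hne
        rw [hf'rest (J s) hne] at hf'v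
        exact h5.1 hf'v
      · rw [Finset.card_image_of_injective _ hIinj, Finset.card_image_of_injective _ hJinj]
    have hsum : (∑ s, dvec (J s) : Zmn m n) = ∑ s, dvec (I s) := by
      calc (∑ s, dvec (J s) : Zmn m n)
          = ∑ i ∈ univ.image J, dvec i :=
            (Finset.sum_image fun x _ y _ hxy => hJinj hxy).symm
        _ = ∑ i ∈ univ.image I, dvec i := by rw [himg]
        _ = ∑ s, dvec (I s) := Finset.sum_image fun x _ y _ hxy => hIinj hxy
    have hf_eq : f = f' + ∑ s, dvec (I s) := by
      funext i
      rw [Pi.add_apply]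
      by_cases hi : ∃ t, i = I t
      · obtain ⟨t, rfl⟩ := hi
        rw [sum_dvec_apply_mem I hIinj t, hfI t, hf'I t, isgn_pos (hIpos t)]
      · push_neg at hi
        rw [sum_dvec_apply_off I i hi, hf'rest i hi, add_zero]
    have hgrec : g = g' + ∑ s, dvec (J s) := by
      rw [hg']; abel
    rw [hgrec, hEq, hsum, ← hf_eq]
end

section
/- For every dominant f ∈ ℤ^{m|n}_+ and every a ∈ ℤ, ε_a(f) + φ_a(f) ≤ 2; that is, every a-string in the crystal structure (ℤ^{m|n}_+, Ẽ_a, F̃_a) has length at most 2. -/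
open Finset

/-! ### Auxiliary machinery -/

def absStep : ℕ × ℕ → ℤ → ℕ × ℕ := fun st s =>
  if s = 1 then (st.1, st.2 + 1)
  else if s = -1 then (match st.2 with
    | 0 => (st.1 + 1, 0)
    | Nat.succ t => (st.1, t))
  else st

lemma absStep_filter (L : List ℤ) (st : ℕ × ℕ) :
    L.foldl absStep st = (L.filter (· ≠ 0)).foldl absStep st := by
  induction L generalizing st with
  | nil => rfl
  | cons x L ih =>
    by_cases hx : x = 0
    · subst hx; simp [absStep, ih]
    · simp [List.filter_cons, hx, ih]

lemma redStep_len {m n : ℕ} (g : Zmn m n) (a : ℤ)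
    (st : List (Idx m n) × List (Idx m n)) (p : Idx m n) :
    ((redStep g a st p).1.length, (redStep g a st p).2.length)
      = absStep (st.1.length, st.2.length) (sigval g a p) := by
  unfold redStep absStep
  by_cases h1 : sigval g a p = 1
  · simp [h1]
  · by_cases h2 : sigval g a p = -1
    · simp only [h1, h2, if_false, if_true, reduceIte]
      cases hst : st.2 with
      | nil => simp [hst]
      | cons h t => simp [hst]
    · simp [h1, h2]

lemma foldl_len {m n : ℕ} (g : Zmn m n) (a : ℤ) :
    ∀ (L : List (Idx m n)) (st : List (Idx m n) × List (Idx m n)),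
    ((L.foldl (redStep g a) st).1.length, (L.foldl (redStep g a) st).2.length)
      = (L.map (sigval g a)).foldl absStep (st.1.length, st.2.length) := by
  intro L
  induction L with
  | nil => intro st; rfl
  | cons p L ih =>
    intro st
    simp only [List.foldl_cons, List.map_cons]
    rw [ih, redStep_len]

open List in
lemma sub_aux {α : Type*} (T : List ℤ) (v : α → ℤ) (p : α → ℕ) :
    ∀ (L : List α) (k : ℕ),
    (∀ i ∈ L, v i ≠ 0 → k ≤ p i ∧ T.getD (p i) 0 = v i) →
    L.Pairwise (fun i j => v i ≠ 0 → v j ≠ 0 → p i < p j) →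
    ((L.map v).filter (· ≠ 0)) <+ T.drop k := by
  intro L
  induction L with
  | nil => intro k _ _; simp
  | cons i L ih =>
    intro k hk hp
    rw [List.pairwise_cons] at hp
    by_cases hv : v i = 0
    · simp only [List.map_cons, List.filter_cons, hv]
      simpa using ih k (fun j hj => hk j (List.mem_cons_of_mem _ hj)) hp.2
    · have hki := hk i List.mem_cons_self hv
      have hlt : p i < T.length := by
        by_contra h
        rw [List.getD_eq_default _ _ (le_of_not_gt h)] at hki
        exact hv hki.2.symm
      have htail : ((L.map v).filter (· ≠ 0)) <+ T.drop (p i + 1) := by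
        apply ih
        · intro j hj hvj
          exact ⟨hp.1 j hj hv hvj, (hk j (List.mem_cons_of_mem _ hj) hvj).2⟩
        · exact hp.2
      have hdrop : T.drop (p i) = v i :: T.drop (p i + 1) := by
        rw [List.drop_eq_getElem_cons hlt, List.getD_eq_getElem _ _ hlt] at *
        rw [hki.2]
      simp only [List.map_cons, List.filter_cons, hv]
      have h1 : (v i :: (L.map v).filter (· ≠ 0)) <+ T.drop (p i) := by
        rw [hdrop]; exact htail.cons_cons _
      have h2 : T.drop (p i) <+ T.drop k := by
        have : T.drop (p i) = (T.drop k).drop (p i - k) := by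
          rw [List.drop_drop]; congr 1; omega
        rw [this]; exact List.drop_sublist _ _
      simpa [hv] using h1.trans h2

lemma idxList_pairwise (m n : ℕ) :
    (idxList m n).Pairwise (fun i j : Idx m n => (i : ℤ) < (j : ℤ)) := by
  have h : ((IdxSet m n).sort (· ≤ ·)).Pairwise (· < ·) :=
    (Finset.sortedLT_sort _).pairwise
  rw [← List.attach_map_subtype_val ((IdxSet m n).sort (· ≤ ·))] at h
  have h2 := List.pairwise_map.mp h
  exact h2.map _ (fun a b hab => hab)

lemma idx_sign {m n : ℕ} (i : Idx m n) : (i : ℤ) < 0 ∨ 0 < (i : ℤ) := by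
  have h := i.2
  simp only [IdxSet, Finset.mem_union, Finset.mem_Icc] at h
  omega

/-- all a-strings in the crystal on dominant weights have length at most 2. -/
theorem string_length_le_two {m n : ℕ} (f : Zmn m n) (hf : dominantZ f) (a : ℤ) :
    epsC f a + phiC f a ≤ 2 := by
  set g : Zmn m n := wconj f with hg
  -- monotonicity of g on blocks
  have gneg : ∀ i j : Idx m n, (i : ℤ) < (j : ℤ) → (j : ℤ) < 0 → g j < g i := by
    intro i j hij hj
    have hi : (i : ℤ) < 0 := lt_trans hij hj
    have hgi : g i = f (w0idx i) := rfl
    have hgj : g j = f (w0idx j) := rfl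
    have hwi : (w0idx i : ℤ) = -(m:ℤ) - 1 - (i:ℤ) := by simp [w0idx, hi]
    have hwj : (w0idx j : ℤ) = -(m:ℤ) - 1 - (j:ℤ) := by simp [w0idx, hj]
    have hji : (w0idx j : ℤ) < (w0idx i : ℤ) := by omega
    have hi0 : (w0idx i : ℤ) < 0 := by
      have h2 := i.2
      simp only [IdxSet, Finset.mem_union, Finset.mem_Icc] at h2
      omega
    exact (hf _ _ hji).1 hi0
  have gpos : ∀ i j : Idx m n, 0 < (i : ℤ) → (i : ℤ) < (j : ℤ) → g i < g j := by
    intro i j hi hij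
    have hj : 0 < (j : ℤ) := lt_trans hi hij
    have hwi : (w0idx i : ℤ) = (n:ℤ) + 1 - (i:ℤ) := by
      simp [w0idx, not_lt.mpr (le_of_lt hi)]
    have hwj : (w0idx j : ℤ) = (n:ℤ) + 1 - (j:ℤ) := by
      simp [w0idx, not_lt.mpr (le_of_lt hj)]
    have hji : (w0idx j : ℤ) < (w0idx i : ℤ) := by omega
    have hj0 : 0 < (w0idx j : ℤ) := by
      have h2 := j.2
      simp only [IdxSet, Finset.mem_union, Finset.mem_Icc] at h2
      omega
    exact (hf _ _ hji).2 hj0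
  -- position function
  set v : Idx m n → ℤ := sigval g a with hv
  set p : Idx m n → ℕ := fun i =>
    if (i : ℤ) < 0 then (if g i = a + 1 then 0 else 1)
    else (if g i = a then 2 else 3) with hpdef
  have hval : ∀ i : Idx m n, v i ≠ 0 → ([1,-1,1,-1] : List ℤ).getD (p i) 0 = v i := by
    intro i hvi
    rcases idx_sign i with hi | hi
    · by_cases h1 : g i = a + 1
      · simp only [hpdef, hv, sigval, hi, h1, if_pos]
        simp [hi, h1, not_lt.mpr (le_of_lt hi)]
      · by_cases h2 : g i = a
        · simp only [hpdef, hv, sigval]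
          simp [hi, h1, h2, not_lt.mpr (le_of_lt hi), asymm hi]
        · exfalso; apply hvi
          simp [hv, sigval, hi, h1, h2, asymm hi]
    · by_cases h1 : g i = a
      · simp only [hpdef, hv, sigval]
        simp [hi, h1, asymm hi]
      · by_cases h2 : g i = a + 1
        · simp only [hpdef, hv, sigval]
          simp [hi, h1, h2, asymm hi]
        · exfalso; apply hvi
          simp [hv, sigval, hi, h1, h2, asymm hi]
  have hpair : (idxList m n).Pairwise (fun i j => v i ≠ 0 → v j ≠ 0 → p i < p j) := by
    refine (idxList_pairwise m n).imp_of_mem ?_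
    intro i j _ _ hij hvi hvj
    rcases idx_sign j with hj | hj
    · -- both negative
      have hi : (i : ℤ) < 0 := lt_trans hij hj
      by_cases h1 : g i = a + 1
      · have : g j < g i := gneg i j hij hj
        have h2 : g j ≠ a + 1 := by omega
        simp [hpdef, hi, hj, h1, h2]
      · exfalso
        have h2 : g i = a := by
          by_contra h2
          exact hvi (by simp [hv, sigval, h1, h2, hi, asymm hi])
        have : g j < g i := gneg i j hij hj
        apply hvj
        have : g j ≠ a ∧ g j ≠ a + 1 := by omega
        simp [hv, sigval, this.1, this.2, hj, asymm hj]
    · rcases idx_sign i with hi | hi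
      · -- i negative, j positive
        have hpi : p i ≤ 1 := by
          simp only [hpdef, hi, if_pos]
          split <;> omega
        have hpj : 2 ≤ p j := by
          simp only [hpdef, hj, asymm hj, if_neg (asymm hj)]
          split <;> omega
        omega
      · -- both positive
        by_cases h1 : g i = a
        · have : g i < g j := gpos i j hi hij
          have h2 : g j ≠ a := by omega
          simp [hpdef, asymm hi, asymm hj, h1, h2]
        · exfalso
          have h2 : g i = a + 1 := by
            by_contra h2
            exact hvi (by simp [hv, sigval, h1, h2, hi, asymm hi])
          have : g i < g j := gpos i j hi hij
          apply hvj
          have : g j ≠ a ∧ g j ≠ a + 1 := by omega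
          simp [hv, sigval, this.1, this.2, hj, asymm hj]
  have hsub : List.Sublist (((idxList m n).map v).filter (· ≠ 0)) ([1,-1,1,-1] : List ℤ) := by
    have := sub_aux ([1,-1,1,-1] : List ℤ) v p (idxList m n) 0
      (fun i _ hvi => ⟨Nat.zero_le _, hval i hvi⟩) hpair
    simpa using this
  -- reduce the goal to the abstract fold
  have hlen : (epsC f a, phiC f a)
      = (((idxList m n).map v).filter (· ≠ 0)).foldl absStep (0, 0) := by
    show ((redState g a).1.length, (redState g a).2.length) = _
    unfold redState
    rw [foldl_len g a (idxList m n) ([], [])]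
    simpa using absStep_filter ((idxList m n).map v) (0, 0)
  have hdec : ∀ F ∈ ([1,-1,1,-1] : List ℤ).sublists,
      (F.foldl absStep (0,0)).1 + (F.foldl absStep (0,0)).2 ≤ 2 := by decide
  have := hdec _ (List.mem_sublists.mpr hsub)
  have h1 := congrArg Prod.fst hlen
  have h2 := congrArg Prod.snd hlen
  simp only at h1 h2
  omega
end
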